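/- arXiv:2503.18508 — 4 statements merged into one kernel-verified Lean document; each statement's English description precedes it below -/
import Mathlib

section
/- Let 1 ≤ q < p < ∞ and K > 1. Then the sequence space ℓ_p admits a K-localized weakly bi-Lipschitz embedding into ℓ_q with distortion D = (p/q)·(2K)^{p/q − 1}. Concretely: for every Δ > 0 and every subset C ⊆ ℓ_p with at least two points and diam(C) ≤ K·Δ, there is a non-constant Lipschitz map f : C → ℓ_q such that whenever x,y ∈ C satisfy ‖x−y‖_p > Δ, one has ‖f(x)−f(y)‖_q > (‖f‖_Lip/D)·Δ. -/
noncomputable section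

open scoped NNReal ENNReal

/-- `M` admits a `K`-localized weakly bi-Lipschitz embedding into `N` with distortion `D`:
for every `Δ > 0` and every subset `C ⊆ M` with at least two points and diameter at most
`K * Δ`, there is a non-constant Lipschitz `f : C → N`, with least Lipschitz constant `L`,
such that `dist (f x) (f y) > (L / D) * Δ` whenever `dist x y > Δ`. -/
def LocWeaklyBiLip (M N : Type*) [PseudoMetricSpace M] [PseudoMetricSpace N]
    (K D : ℝ) : Prop :=
  ∀ Δ : ℝ, 0 < Δ → ∀ C : Set M, C.Nontrivial → EMetric.diam C ≤ ENNReal.ofReal (K * Δ) →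
    ∃ (f : C → N) (L : ℝ≥0),
      (∃ x y : C, f x ≠ f y) ∧
      LipschitzWith L f ∧
      (∀ L' : ℝ≥0, LipschitzWith L' f → L ≤ L') ∧
      ∀ x y : C, Δ < dist (x : M) (y : M) → (L : ℝ) / D * Δ < dist (f x) (f y)

namespace LpLocAux

open Real

/-- Odd power map `t ↦ sign(t) |t|^γ`. -/
def psi (γ t : ℝ) : ℝ := if 0 ≤ t then t ^ γ else -((-t) ^ γ)

lemma psi_of_nonneg {t : ℝ} (γ : ℝ) (ht : 0 ≤ t) : psi γ t = t ^ γ := if_pos ht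

lemma psi_of_neg {t : ℝ} (γ : ℝ) (ht : t < 0) : psi γ t = -((-t) ^ γ) := if_neg (not_le.2 ht)

lemma psi_neg (γ t : ℝ) (hγ : γ ≠ 0) : psi γ (-t) = - psi γ t := by
  rcases lt_trichotomy t 0 with h | rfl | h
  · rw [psi_of_neg γ h, psi_of_nonneg γ (by linarith : (0:ℝ) ≤ -t), neg_neg]
  · simp [psi, Real.zero_rpow hγ]
  · rw [psi_of_nonneg γ h.le, psi_of_neg γ (by linarith : -t < 0), neg_neg]

lemma abs_psi (γ t : ℝ) : |psi γ t| = |t| ^ γ := by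
  rcases le_or_gt 0 t with h | h
  · rw [psi_of_nonneg γ h, abs_of_nonneg h, abs_of_nonneg (rpow_nonneg h γ)]
  · rw [psi_of_neg γ h, abs_neg, abs_of_neg h, abs_of_nonneg (rpow_nonneg (by linarith) γ)]

/-- `2 ^ (1 - 1/γ) ≤ γ` for `γ ≥ 1`. -/
lemma two_rpow_le (γ : ℝ) (hγ : 1 ≤ γ) : (2:ℝ) ^ (1 - 1/γ) ≤ γ := by
  have hγ0 : 0 < γ := by linarith
  have h1 : 0 ≤ 1 - 1/γ := by
    have : 1/γ ≤ 1 := by rw [div_le_one hγ0]; exact hγ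
    linarith
  have h2 : 1 - 1/γ ≤ 1 := by
    have : 0 < 1/γ := by positivity
    linarith
  have hB := rpow_one_add_le_one_add_mul_self (s := 1) (by norm_num) h1 h2
  norm_num at hB
  -- hB : (2:ℝ) ^ (1 - 1/γ) ≤ 1 + (1 - 1/γ)  (roughly)
  have h3 : 1 + (1 - 1/γ) ≤ γ := by
    rw [← sub_nonneg]
    have : γ + 1/γ ≥ 2 := by
      have := sq_nonneg (γ - 1)
      have h4 : γ * (γ + 1/γ - 2) = (γ-1)^2 := by field_simp; ring
      nlinarith
    linarith
  rw [one_div] at *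
  linarith [hB]

/-- Midpoint convexity of `x ↦ x^γ` on nonnegatives, for `γ ≥ 1`. -/
lemma midpoint_rpow {γ a b : ℝ} (hγ : 1 ≤ γ) (ha : 0 ≤ a) (hb : 0 ≤ b) :
    ((a+b)/2) ^ γ ≤ (a ^ γ + b ^ γ)/2 := by
  set m := (a+b)/2 with hm
  rcases eq_or_lt_of_le (by positivity : (0:ℝ) ≤ m) with h0 | h0
  · have ha0 : a = 0 := by rw [hm] at h0; linarith [ (by linarith : a + b = 0) ]
    have hb0 : b = 0 := by rw [hm] at h0; linarith
    simp [ha0, hb0, hm, Real.zero_rpow (by linarith : γ ≠ 0)]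
  · have hBa := one_add_mul_self_le_rpow_one_add (s := a/m - 1) (by
      have : 0 ≤ a/m := by positivity
      linarith) hγ
    have hBb := one_add_mul_self_le_rpow_one_add (s := b/m - 1) (by
      have : 0 ≤ b/m := by positivity
      linarith) hγ
    rw [add_sub_cancel] at hBa hBb
    have hma : (m:ℝ) ^ γ * (a/m) ^ γ = a ^ γ := by
      rw [← Real.mul_rpow h0.le (by positivity), mul_div_cancel₀ _ h0.ne']
    have hmb : (m:ℝ) ^ γ * (b/m) ^ γ = b ^ γ := by
      rw [← Real.mul_rpow h0.le (by positivity), mul_div_cancel₀ _ h0.ne']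
    have hab : 0 < a + b := by rw [hm] at h0; linarith
    have hsum : a/m + b/m = 2 := by
      rw [← add_div, hm]
      field_simp
    have hmpos : 0 < (m:ℝ) ^ γ := rpow_pos_of_pos h0 γ
    have : 2 * m ^ γ ≤ a ^ γ + b ^ γ := by
      calc 2 * m ^ γ = m ^ γ * ((1 + γ * (a/m - 1)) + (1 + γ * (b/m - 1))) := by
            have : (1 + γ * (a/m - 1)) + (1 + γ * (b/m - 1)) = 2 + γ * ((a/m + b/m) - 2) := by ring
            rw [this, hsum]; ring
      _ ≤ m ^ γ * ((a/m) ^ γ + (b/m) ^ γ) := by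
            apply mul_le_mul_of_nonneg_left _ hmpos.le
            exact add_le_add hBa hBb
      _ = a ^ γ + b ^ γ := by rw [mul_add, hma, hmb]
    linarith

/-- Superadditivity of `x ↦ x^γ` for `γ ≥ 1`. -/
lemma rpow_superadd {γ a b : ℝ} (hγ : 1 ≤ γ) (ha : 0 ≤ a) (hb : 0 ≤ b) :
    a ^ γ + b ^ γ ≤ (a+b) ^ γ := by
  have hγ0 : γ ≠ 0 := by linarith
  rcases eq_or_lt_of_le ha with h0 | h0
  · simp [← h0, Real.zero_rpow hγ0]
  rcases eq_or_lt_of_le hb with h1 | h1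
  · simp [← h1, Real.zero_rpow hγ0]
  have ht : 0 < a + b := by linarith
  have key : ∀ c : ℝ, 0 < c → c ≤ a + b → c ^ γ ≤ (a+b) ^ γ * (c/(a+b)) := by
    intro c hc hcab
    have h2 : c/(a+b) ≤ 1 := by rw [div_le_one ht]; exact hcab
    have h3 : 0 < c/(a+b) := by positivity
    have h4 : (c/(a+b)) ^ γ ≤ (c/(a+b)) ^ (1:ℝ) :=
      rpow_le_rpow_of_exponent_ge h3 h2 hγ
    have h5 : c ^ γ = (a+b) ^ γ * (c/(a+b)) ^ γ := by
      rw [← Real.mul_rpow ht.le h3.le, mul_div_cancel₀ _ ht.ne']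
    rw [h5, rpow_one] at *
    exact mul_le_mul_of_nonneg_left h4 (rpow_pos_of_pos ht γ).le
  have k1 := key a h0 (by linarith)
  have k2 := key b h1 (by linarith)
  have : a ^ γ + b ^ γ ≤ (a+b) ^ γ * (a/(a+b) + b/(a+b)) := by
    rw [mul_add]; exact add_le_add k1 k2
  rwa [← add_div, div_self ht.ne', mul_one] at this


/-- `δ·2^(1-δ) ≤ 1` for `0 < δ ≤ 1`. -/
lemma delta_two_rpow_le {δ : ℝ} (hδ0 : 0 < δ) (hδ1 : δ ≤ 1) : δ * (2:ℝ) ^ (1 - δ) ≤ 1 := by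
  have h1 : 0 ≤ 1 - δ := by linarith
  have hB := rpow_one_add_le_one_add_mul_self (s := 1) (by norm_num) h1 (by linarith)
  norm_num at hB
  -- hB : 2 ^ (1 - δ) ≤ 1 + (1 - δ) = 2 - δ
  have h2 : δ * (2:ℝ) ^ (1 - δ) ≤ δ * (2 - δ) :=
    mul_le_mul_of_nonneg_left (by linarith) hδ0.le
  nlinarith [sq_nonneg (1 - δ)]

/-- Key concavity estimate: for `0 < δ ≤ 1` and `0 ≤ y ≤ x`,
`δ * ((x+y)/2)^(δ-1) * (x - y) ≤ x^δ - y^δ`. -/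
lemma key_concave {δ x y : ℝ} (hδ0 : 0 < δ) (hδ1 : δ ≤ 1) (hy : 0 ≤ y) (hxy : y ≤ x) :
    δ * ((x+y)/2) ^ (δ-1) * (x - y) ≤ x ^ δ - y ^ δ := by
  rcases eq_or_lt_of_le hδ1 with rfl | hδlt
  · simp only [sub_self, rpow_zero, mul_one, one_mul, rpow_one]
    linarith
  rcases eq_or_lt_of_le hy with rfl | hy0
  · -- y = 0
    simp only [add_zero, sub_zero]
    rw [Real.zero_rpow (by linarith : δ ≠ 0), sub_zero]
    rcases eq_or_lt_of_le (le_trans hy hxy) with rfl | hx0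
    · simp only [sub_zero, mul_zero]
      exact rpow_nonneg le_rfl δ
    · have hhalf : (x/2 : ℝ) ^ (δ-1) = x ^ (δ-1) * 2 ^ (1-δ) := by
        rw [Real.div_rpow hx0.le (by norm_num : (0:ℝ) ≤ 2), div_eq_mul_inv,
          ← Real.rpow_neg (by norm_num : (0:ℝ) ≤ 2), neg_sub]
      rw [hhalf]
      have hxx : x ^ (δ-1) * x = x ^ δ := by
        nth_rewrite 2 [← Real.rpow_one x]
        rw [← Real.rpow_add hx0]; ring_nf
      calc δ * (x ^ (δ-1) * 2 ^ (1-δ)) * x = (δ * 2 ^ (1-δ)) * (x ^ (δ-1) * x) := by ring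
      _ = (δ * 2 ^ (1-δ)) * x ^ δ := by rw [hxx]
      _ ≤ 1 * x ^ δ := mul_le_mul_of_nonneg_right (delta_two_rpow_le hδ0 hδ1)
            (rpow_nonneg hx0.le δ)
      _ = x ^ δ := one_mul _
  · -- 0 < y ≤ x
    set m := (x+y)/2 with hm
    set h := (x-y)/2 with hh
    have hmh1 : m + h = x := by rw [hm, hh]; ring
    have hmh2 : m - h = y := by rw [hm, hh]; ring
    have hhnn : 0 ≤ h := by rw [hh]; linarith
    have hmpos : 0 < m := by rw [hm]; linarith
    set c := δ - 1 with hc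
    have hc0 : c < 0 := by rw [hc]; linarith
    have hc1 : -1 < c := by rw [hc]; linarith
    -- continuity/integrability
    have cont1 : ContinuousOn (fun s : ℝ => (m + s) ^ c) (Set.uIcc 0 h) := by
      apply ContinuousOn.rpow_const
      · exact (continuous_const.add continuous_id).continuousOn
      · intro s hs
        rw [Set.uIcc_of_le hhnn] at hs
        exact Or.inl (by nlinarith [hs.1] : m + s ≠ 0)
    have cont2 : ContinuousOn (fun s : ℝ => (m - s) ^ c) (Set.uIcc 0 h) := by
      apply ContinuousOn.rpow_const
      · exact (continuous_const.sub continuous_id).continuousOn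
      · intro s hs
        rw [Set.uIcc_of_le hhnn] at hs
        have : 0 < m - s := by
          have := hs.2
          calc (0:ℝ) < y := hy0
          _ = m - h := hmh2.symm
          _ ≤ m - s := by linarith [hs.2]
        exact Or.inl this.ne'
    have int1 : IntervalIntegrable (fun s : ℝ => (m + s) ^ c) MeasureTheory.volume 0 h :=
      cont1.intervalIntegrable
    have int2 : IntervalIntegrable (fun s : ℝ => (m - s) ^ c) MeasureTheory.volume 0 h :=
      cont2.intervalIntegrable
    -- pointwise bound
    have ptwise : ∀ s ∈ Set.Icc (0:ℝ) h, 2 * m ^ c ≤ (m + s) ^ c + (m - s) ^ c := by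
      intro s hs
      have hs0 : 0 ≤ s := hs.1
      have hsh : s ≤ h := hs.2
      have hps : 0 < m + s := by linarith
      have hms : 0 < m - s := by nlinarith [hmh2]
      set X := (m + s) ^ c with hX
      set Y := (m - s) ^ c with hY
      have hXpos : 0 < X := rpow_pos_of_pos hps c
      have hYpos : 0 < Y := rpow_pos_of_pos hms c
      have hXY : (m ^ c) * (m ^ c) ≤ X * Y := by
        rw [hX, hY, ← Real.mul_rpow hps.le hms.le, ← Real.mul_rpow hmpos.le hmpos.le]
        apply rpow_le_rpow_of_nonpos (by nlinarith) (by nlinarith) hc0.le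
      have hsqrt : m ^ c ≤ Real.sqrt (X * Y) := by
        have : Real.sqrt ((m ^ c) * (m ^ c)) ≤ Real.sqrt (X * Y) := Real.sqrt_le_sqrt hXY
        rwa [Real.sqrt_mul_self (rpow_nonneg hmpos.le c)] at this
      have hamgm : 2 * Real.sqrt (X * Y) ≤ X + Y := by
        have h1 := sq_nonneg (Real.sqrt X - Real.sqrt Y)
        have h2 : Real.sqrt X ^ 2 = X := Real.sq_sqrt hXpos.le
        have h3 : Real.sqrt Y ^ 2 = Y := Real.sq_sqrt hYpos.le
        have h4 : Real.sqrt (X * Y) = Real.sqrt X * Real.sqrt Y := Real.sqrt_mul hXpos.le Y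
        nlinarith
      linarith
    -- integral inequality
    have mono := intervalIntegral.integral_mono_on hhnn
      (intervalIntegrable_const (c := 2 * m ^ c)) (int1.add int2) ptwise
    have Iconst : (∫ _ in (0:ℝ)..h, (2 * m ^ c)) = h * (2 * m ^ c) := by
      rw [intervalIntegral.integral_const, smul_eq_mul, sub_zero]
    have Isum : (∫ s in (0:ℝ)..h, ((m + s) ^ c + (m - s) ^ c))
        = (∫ s in (0:ℝ)..h, (m + s) ^ c) + (∫ s in (0:ℝ)..h, (m - s) ^ c) :=
      intervalIntegral.integral_add int1 int2
    have I1 : (∫ s in (0:ℝ)..h, (m + s) ^ c) = (x ^ δ - m ^ δ)/δ := by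
      have := intervalIntegral.integral_comp_add_left (a := (0:ℝ)) (b := h)
        (fun t : ℝ => t ^ c) m
      rw [this, add_zero, hmh1, integral_rpow (Or.inl hc1)]
      rw [hc]; ring_nf
    have I2 : (∫ s in (0:ℝ)..h, (m - s) ^ c) = (m ^ δ - y ^ δ)/δ := by
      have := intervalIntegral.integral_comp_sub_left (a := (0:ℝ)) (b := h)
        (fun t : ℝ => t ^ c) m
      rw [this, sub_zero, hmh2, integral_rpow (Or.inl hc1)]
      rw [hc]; ring_nf
    rw [Iconst, Isum, I1, I2] at mono
    have : h * (2 * m ^ c) ≤ (x ^ δ - y ^ δ)/δ := by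
      calc h * (2 * m ^ c) ≤ (x ^ δ - m ^ δ)/δ + (m ^ δ - y ^ δ)/δ := mono
      _ = (x ^ δ - y ^ δ)/δ := by ring
    have := mul_le_mul_of_nonneg_left this hδ0.le
    rw [mul_div_cancel₀ _ hδ0.ne'] at this
    calc δ * m ^ (δ-1) * (x - y) = δ * (h * (2 * m ^ c)) := by rw [hc, hh]; ring
    _ ≤ x ^ δ - y ^ δ := this


/-- Power mean monotonicity step. -/
lemma pow_mean_step {γ p a b : ℝ} (hγ : 1 ≤ γ) (hγp : γ ≤ p) (ha : 0 ≤ a) (hb : 0 ≤ b) :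
    ((a^γ + b^γ)/2) ^ ((γ-1)/γ) ≤ ((a^p + b^p)/2) ^ ((γ-1)/p) := by
  have hγ0 : 0 < γ := by linarith
  have hp0 : 0 < p := by linarith
  have hs : 1 ≤ p/γ := (one_le_div hγ0).2 hγp
  have hM : ((a^γ + b^γ)/2) ^ (p/γ) ≤ (a^p + b^p)/2 := by
    have := midpoint_rpow (γ := p/γ) hs (rpow_nonneg ha γ) (rpow_nonneg hb γ)
    have e1 : (a^γ) ^ (p/γ) = a^p := by
      rw [← Real.rpow_mul ha]; congr 1; field_simp
    have e2 : (b^γ) ^ (p/γ) = b^p := by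
      rw [← Real.rpow_mul hb]; congr 1; field_simp
    rwa [e1, e2] at this
  have hz : (0:ℝ) ≤ (γ-1)/p := div_nonneg (by linarith) hp0.le
  have hmono := Real.rpow_le_rpow
    (rpow_nonneg (by positivity : (0:ℝ) ≤ (a^γ + b^γ)/2) (p/γ)) hM hz
  have he : (p/γ) * ((γ-1)/p) = (γ-1)/γ := by field_simp
  rwa [← Real.rpow_mul (by positivity), he] at hmono

/-- Same-sign upper bound. -/
lemma upper_same {γ p a b : ℝ} (hγ : 1 ≤ γ) (hγp : γ ≤ p) (hb : 0 ≤ b) (hba : b ≤ a) :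
    a^γ - b^γ ≤ γ * (a - b) * ((a^p + b^p)/2) ^ ((γ-1)/p) := by
  have ha : 0 ≤ a := le_trans hb hba
  have hγ0 : 0 < γ := by linarith
  set M := (a^γ + b^γ)/2 with hM
  rcases eq_or_lt_of_le (by positivity : (0:ℝ) ≤ M) with h0 | h0
  · -- M = 0 → a = b = 0
    have haγ : a^γ = 0 := by
      have h1 : 0 ≤ a^γ := rpow_nonneg ha γ
      have h2 : 0 ≤ b^γ := rpow_nonneg hb γ
      have : a^γ + b^γ = 0 := by rw [hM] at h0; linarith
      linarith
    have hbγ : b^γ = 0 := by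
      have h1 : 0 ≤ a^γ := rpow_nonneg ha γ
      have h2 : 0 ≤ b^γ := rpow_nonneg hb γ
      have : a^γ + b^γ = 0 := by rw [hM] at h0; linarith
      linarith
    rw [haγ, hbγ, sub_self]
    have : 0 ≤ a - b := by linarith
    positivity
  · have hkey := key_concave (δ := 1/γ) (x := a^γ) (y := b^γ) (by positivity)
      ((div_le_one hγ0).2 hγ) (rpow_nonneg hb γ)
      (Real.rpow_le_rpow hb hba hγ0.le)
    rw [← hM] at hkey
    have e1 : (a^γ) ^ (1/γ) = a := by
      rw [← Real.rpow_mul ha]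
      rw [mul_one_div, div_self hγ0.ne', rpow_one]
    have e2 : (b^γ) ^ (1/γ) = b := by
      rw [← Real.rpow_mul hb]
      rw [mul_one_div, div_self hγ0.ne', rpow_one]
    rw [e1, e2] at hkey
    -- hkey : 1/γ * M ^ (1/γ - 1) * (a^γ - b^γ) ≤ a - b
    have hMe : M ^ (1/γ - 1) * M ^ ((γ-1)/γ) = 1 := by
      rw [← Real.rpow_add h0]
      have : 1/γ - 1 + (γ-1)/γ = 0 := by field_simp; ring
      rw [this, rpow_zero]
    have step : a^γ - b^γ ≤ γ * (a - b) * M ^ ((γ-1)/γ) := by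
      have h2 := mul_le_mul_of_nonneg_left hkey
        (by positivity : (0:ℝ) ≤ γ * M ^ ((γ-1)/γ))
      calc a^γ - b^γ = γ * M ^ ((γ-1)/γ) * (1/γ * M ^ (1/γ - 1) * (a^γ - b^γ)) := by
            have hr : γ * M ^ ((γ-1)/γ) * (1/γ * M ^ (1/γ - 1) * (a^γ - b^γ))
                = (γ * (1/γ)) * ((M ^ (1/γ - 1) * M ^ ((γ-1)/γ)) * (a^γ - b^γ)) := by ring
            rw [hr, hMe, mul_one_div, div_self hγ0.ne', one_mul, one_mul]
      _ ≤ γ * M ^ ((γ-1)/γ) * (a - b) := h2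
      _ = γ * (a - b) * M ^ ((γ-1)/γ) := by ring
    calc a^γ - b^γ ≤ γ * (a - b) * M ^ ((γ-1)/γ) := step
    _ ≤ γ * (a - b) * ((a^p + b^p)/2) ^ ((γ-1)/p) := by
          apply mul_le_mul_of_nonneg_left (pow_mean_step hγ hγp ha hb)
          have : 0 ≤ a - b := by linarith
          positivity

/-- Opposite-sign upper bound. -/
lemma upper_opp {γ p a b : ℝ} (hγ : 1 ≤ γ) (hγp : γ ≤ p) (ha : 0 ≤ a) (hb : 0 ≤ b) :
    a^γ + b^γ ≤ γ * (a + b) * ((a^p + b^p)/2) ^ ((γ-1)/p) := by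
  have hγ0 : 0 < γ := by linarith
  set S := a^γ + b^γ with hS
  rcases eq_or_lt_of_le (by positivity : (0:ℝ) ≤ S) with h0 | h0
  · rw [← h0]; positivity
  · have step1 : S ^ (1/γ) ≤ a + b := by
      have h1 : S ≤ (a+b)^γ := rpow_superadd hγ ha hb
      have h2 := Real.rpow_le_rpow (by positivity) h1 (by positivity : (0:ℝ) ≤ 1/γ)
      rwa [← Real.rpow_mul (by positivity), mul_one_div, div_self hγ0.ne', rpow_one] at h2
    have step2 : (S/2) ^ ((γ-1)/γ) ≤ ((a^p + b^p)/2) ^ ((γ-1)/p) :=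
      pow_mean_step hγ hγp ha hb
    have hSsplit : S ^ (1/γ) * (S/2) ^ ((γ-1)/γ) = S * (2:ℝ)^(-((γ-1)/γ)) := by
      have he : 1/γ + (γ-1)/γ = 1 := by field_simp; ring
      rw [Real.div_rpow h0.le (by norm_num : (0:ℝ) ≤ 2),
        Real.rpow_neg (by norm_num : (0:ℝ) ≤ 2)]
      have hr : S ^ (1/γ) * (S ^ ((γ-1)/γ) / 2 ^ ((γ-1)/γ))
          = (S ^ (1/γ) * S ^ ((γ-1)/γ)) * ((2:ℝ) ^ ((γ-1)/γ))⁻¹ := by ring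
      rw [hr, ← Real.rpow_add h0, he, rpow_one]
    have hgam : 1 ≤ γ * (2:ℝ)^(-((γ-1)/γ)) := by
      have h1 : (2:ℝ) ^ (1 - 1/γ) ≤ γ := two_rpow_le γ hγ
      have h2 : (2:ℝ)^(-((γ-1)/γ)) = ((2:ℝ) ^ (1 - 1/γ))⁻¹ := by
        rw [← Real.rpow_neg (by norm_num : (0:ℝ) ≤ 2)]
        congr 1
        field_simp
      rw [h2, ← div_eq_mul_inv, le_div_iff₀ (rpow_pos_of_pos (by norm_num) _), one_mul]
      exact h1
    calc S = 1 * S := (one_mul S).symm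
    _ ≤ (γ * (2:ℝ)^(-((γ-1)/γ))) * S := mul_le_mul_of_nonneg_right hgam h0.le
    _ = γ * (S * (2:ℝ)^(-((γ-1)/γ))) := by ring
    _ = γ * (S ^ (1/γ) * (S/2) ^ ((γ-1)/γ)) := by rw [hSsplit]
    _ ≤ γ * ((a+b) * ((a^p + b^p)/2) ^ ((γ-1)/p)) := by
          apply mul_le_mul_of_nonneg_left _ hγ0.le
          exact mul_le_mul step1 step2 (by positivity) (by positivity)
    _ = γ * (a + b) * ((a^p + b^p)/2) ^ ((γ-1)/p) := by ring


section PsiBounds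
variable {γ p : ℝ}

/-- Helper: the upper bound for `b ≤ a`, `0 ≤ a`. -/
lemma psi_upper_aux (hγ : 1 ≤ γ) (hγp : γ ≤ p) {a b : ℝ} (hba : b ≤ a) (ha : 0 ≤ a) :
    |psi γ a - psi γ b| ≤ γ * |a - b| * ((|a|^p + |b|^p)/2) ^ ((γ-1)/p) := by
  rcases le_or_gt 0 b with hb | hb
  · rw [psi_of_nonneg γ ha, psi_of_nonneg γ hb, abs_of_nonneg hb, abs_of_nonneg ha,
      abs_of_nonneg (by linarith : (0:ℝ) ≤ a - b),
      abs_of_nonneg (sub_nonneg.2 (Real.rpow_le_rpow hb hba (by linarith)))]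
    exact upper_same hγ hγp hb hba
  · rw [psi_of_nonneg γ ha, psi_of_neg γ hb, abs_of_nonneg ha, abs_of_neg hb,
      abs_of_nonneg (by linarith : (0:ℝ) ≤ a - b), sub_neg_eq_add]
    have hnb : (0:ℝ) ≤ -b := by linarith
    rw [abs_of_nonneg (add_nonneg (rpow_nonneg ha γ) (rpow_nonneg hnb γ))]
    have h1 : a - b = a + (-b) := by ring
    rw [h1]
    exact upper_opp hγ hγp ha hnb

/-- Helper: the upper bound for `b ≤ a` (any signs). -/
lemma psi_upper_aux2 (hγ : 1 ≤ γ) (hγp : γ ≤ p) {a b : ℝ} (hba : b ≤ a) :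
    |psi γ a - psi γ b| ≤ γ * |a - b| * ((|a|^p + |b|^p)/2) ^ ((γ-1)/p) := by
  have hγ0 : γ ≠ 0 := by linarith
  rcases le_or_gt 0 a with ha | ha
  · exact psi_upper_aux hγ hγp hba ha
  · have h := psi_upper_aux hγ hγp (by linarith : -a ≤ -b) (by linarith : (0:ℝ) ≤ -b)
    rw [psi_neg γ a hγ0, psi_neg γ b hγ0, abs_neg, abs_neg] at h
    have e1 : |-psi γ b - -psi γ a| = |psi γ a - psi γ b| := by
      rw [show -psi γ b - -psi γ a = -(psi γ b - psi γ a) by ring, abs_neg, abs_sub_comm]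
    have e2 : |-b - -a| = |a - b| := by
      rw [show -b - -a = -(b - a) by ring, abs_neg, abs_sub_comm]
    rw [e1, e2] at h
    rw [show |b|^p + |a|^p = |a|^p + |b|^p by ring] at h
    exact h

/-- Scalar upper bound for the Mazur map. -/
lemma psi_upper (hγ : 1 ≤ γ) (hγp : γ ≤ p) (a b : ℝ) :
    |psi γ a - psi γ b| ≤ γ * |a - b| * ((|a|^p + |b|^p)/2) ^ ((γ-1)/p) := by
  rcases le_total b a with hba | hab
  · exact psi_upper_aux2 hγ hγp hba
  · have h := psi_upper_aux2 hγ hγp hab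
    rw [abs_sub_comm (psi γ b), abs_sub_comm b a,
      show |b|^p + |a|^p = |a|^p + |b|^p by ring] at h
    exact h

/-- Helper: lower bound for `b ≤ a`, `0 ≤ a`. -/
lemma psi_lower_aux (hγ : 1 ≤ γ) {a b : ℝ} (hba : b ≤ a) (ha : 0 ≤ a) :
    2^(1-γ) * |a - b|^γ ≤ |psi γ a - psi γ b| := by
  have h2γ : (0:ℝ) < 2^(1-γ) := rpow_pos_of_pos (by norm_num) _
  have h2le : (2:ℝ)^(1-γ) ≤ 1 := rpow_le_one_of_one_le_of_nonpos (by norm_num) (by linarith)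
  rcases le_or_gt 0 b with hb | hb
  · rw [psi_of_nonneg γ ha, psi_of_nonneg γ hb,
      abs_of_nonneg (by linarith : (0:ℝ) ≤ a - b),
      abs_of_nonneg (sub_nonneg.2 (Real.rpow_le_rpow hb hba (by linarith)))]
    have h1 : (a-b)^γ + b^γ ≤ a^γ := by
      have := rpow_superadd (a := a - b) (b := b) hγ (by linarith) hb
      rwa [sub_add_cancel] at this
    have h2 : (a-b)^γ ≤ a^γ - b^γ := by linarith
    calc 2^(1-γ) * (a-b)^γ ≤ 1 * (a-b)^γ :=
          mul_le_mul_of_nonneg_right h2le (rpow_nonneg (by linarith) γ)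
    _ = (a-b)^γ := one_mul _
    _ ≤ a^γ - b^γ := h2
  · rw [psi_of_nonneg γ ha, psi_of_neg γ hb,
      abs_of_nonneg (by linarith : (0:ℝ) ≤ a - b), sub_neg_eq_add]
    have hnb : (0:ℝ) ≤ -b := by linarith
    have habs : |a + -b| = a + -b := abs_of_nonneg (by linarith)
    have hmid := midpoint_rpow (a := a) (b := -b) hγ ha hnb
    -- ((a + -b)/2)^γ ≤ (a^γ + (-b)^γ)/2
    have hdiv : ((a + -b)/2)^γ = (a + -b)^γ / 2^γ :=
      Real.div_rpow (by linarith : (0:ℝ) ≤ a + -b) (by norm_num : (0:ℝ) ≤ 2) γ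
    have h2e : (2:ℝ)^(1-γ) = 2 / 2^γ := by
      rw [Real.rpow_sub (by norm_num : (0:ℝ) < 2), rpow_one]
    have habs2 : 0 ≤ psi γ a - psi γ b := by
      rw [psi_of_nonneg γ ha, psi_of_neg γ hb]
      have := rpow_nonneg ha γ
      have := rpow_nonneg hnb γ
      linarith
    rw [abs_of_nonneg (by
      have := rpow_nonneg ha γ
      have := rpow_nonneg hnb γ
      linarith : (0:ℝ) ≤ a^γ + (-b)^γ)] at *
    have h2γpos : (0:ℝ) < 2^γ := rpow_pos_of_pos (by norm_num) γ
    calc 2^(1-γ) * (a - b)^γ = 2 * ((a + -b)^γ / 2^γ) := by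
          rw [h2e, show a - b = a + -b by ring]; ring
    _ = 2 * ((a + -b)/2)^γ := by rw [hdiv]
    _ ≤ 2 * ((a^γ + (-b)^γ)/2) := by linarith [hmid]
    _ = a^γ + (-b)^γ := by ring

/-- Scalar lower bound for the Mazur map. -/
lemma psi_lower (hγ : 1 ≤ γ) (a b : ℝ) :
    2^(1-γ) * |a - b|^γ ≤ |psi γ a - psi γ b| := by
  have hγ0 : γ ≠ 0 := by linarith
  have main : ∀ x y : ℝ, y ≤ x → 2^(1-γ) * |x - y|^γ ≤ |psi γ x - psi γ y| := by
    intro x y hyx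
    rcases le_or_gt 0 x with hx | hx
    · exact psi_lower_aux hγ hyx hx
    · have h := psi_lower_aux hγ (by linarith : -x ≤ -y) (by linarith : (0:ℝ) ≤ -y)
      rw [psi_neg γ x hγ0, psi_neg γ y hγ0] at h
      have e1 : |-psi γ y - -psi γ x| = |psi γ x - psi γ y| := by
        rw [show -psi γ y - -psi γ x = -(psi γ y - psi γ x) by ring, abs_neg, abs_sub_comm]
      have e2 : |-y - -x| = |x - y| := by
        rw [show -y - -x = -(y - x) by ring, abs_neg, abs_sub_comm]
      rw [e1, e2] at h
      exact h
  rcases le_total b a with hba | hab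
  · exact main a b hba
  · have h := main b a hab
    rwa [abs_sub_comm (psi γ b), abs_sub_comm b a] at h

end PsiBounds

/-- Minimal Lipschitz constant exists. -/
lemma exists_minimal_lip {α β : Type*} [PseudoMetricSpace α] [PseudoMetricSpace β]
    (f : α → β) (A : ℝ≥0) (hA : LipschitzWith A f) :
    ∃ L : ℝ≥0, L ≤ A ∧ LipschitzWith L f ∧ ∀ L' : ℝ≥0, LipschitzWith L' f → L ≤ L' := by
  set S : Set ℝ≥0 := {L' | LipschitzWith L' f} with hS
  have hne : S.Nonempty := ⟨A, hA⟩
  have hbdd : BddBelow S := OrderBot.bddBelow S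
  set L0 : ℝ≥0 := sInf S with hL0
  refine ⟨L0, csInf_le hbdd hA, ?_, fun L' hL' => csInf_le hbdd hL'⟩
  rw [lipschitzWith_iff_dist_le_mul]
  intro x y
  by_contra hcon
  push_neg at hcon
  set d := dist x y with hd
  have hd0 : (0:ℝ) ≤ d := dist_nonneg
  set N := dist (f x) (f y) - ((L0 : ℝ≥0) : ℝ) * d with hN
  have hN0 : 0 < N := by rw [hN]; linarith
  set ε : ℝ≥0 := Real.toNNReal (N / (d + 1)) with hε
  have hεpos : 0 < ε := Real.toNNReal_pos.2 (by positivity)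
  obtain ⟨L', hL'S, hlt⟩ := exists_lt_of_csInf_lt hne (lt_add_of_pos_right L0 hεpos)
  have hb : dist (f x) (f y) ≤ (L' : ℝ) * d := hL'S.dist_le_mul x y
  have hcast : (L' : ℝ) ≤ ((L0 : ℝ≥0) : ℝ) + (ε : ℝ) := by exact_mod_cast hlt.le
  have hεr : (ε : ℝ) = N / (d + 1) := Real.coe_toNNReal _ (by positivity)
  have h1 : dist (f x) (f y) ≤ (((L0 : ℝ≥0) : ℝ) + N / (d+1)) * d := by
    calc dist (f x) (f y) ≤ (L' : ℝ) * d := hb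
    _ ≤ (((L0 : ℝ≥0) : ℝ) + (ε : ℝ)) * d := mul_le_mul_of_nonneg_right hcast hd0
    _ = (((L0 : ℝ≥0) : ℝ) + N / (d+1)) * d := by rw [hεr]
  have hdd : (0:ℝ) < d + 1 := by linarith
  have h2 : N ≤ N / (d+1) * d := by
    have : ((L0 : ℝ≥0) : ℝ) * d + N / (d+1) * d = (((L0 : ℝ≥0) : ℝ) + N / (d+1)) * d := by ring
    rw [hN]
    linarith [h1, this]
  have h3 : N / (d+1) * d < N := by
    rw [div_mul_eq_mul_div, div_lt_iff₀ hdd]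
    nlinarith
  linarith

/-- Membership of the Mazur image. -/
lemma memℓp_psi {p q : ℝ} (hq : 1 ≤ q) (hqp : q < p)
    (u : lp (fun _ : ℕ => ℝ) (ENNReal.ofReal p)) :
    Memℓp (fun i => psi (p/q) (u i)) (ENNReal.ofReal q) := by
  have hq0 : (0:ℝ) < q := by linarith
  have hp0 : (0:ℝ) < p := by linarith
  apply memℓp_gen
  have hsum : Summable fun i => ‖u i‖ ^ p := by
    have h := (lp.memℓp u).summable (p := ENNReal.ofReal p)
      (by rw [ENNReal.toReal_ofReal hp0.le]; exact hp0)
    rwa [ENNReal.toReal_ofReal hp0.le] at h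
  simp only [ENNReal.toReal_ofReal hq0.le]
  refine hsum.congr fun i => ?_
  rw [Real.norm_eq_abs, Real.norm_eq_abs, abs_psi, ← Real.rpow_mul (abs_nonneg _)]
  congr 1
  field_simp


end LpLocAux

open LpLocAux Real

/-- For `1 ≤ q < p < ∞` and `K > 1`, the sequence space `ℓ_p` admits a `K`-localized
weakly bi-Lipschitz embedding into `ℓ_q` with distortion `(p/q) * (2K)^(p/q - 1)`. -/
theorem lp_locWeaklyBiLip_lq (p q K : ℝ) (hq : 1 ≤ q) (hqp : q < p) (hK : 1 < K)
    [Fact (1 ≤ ENNReal.ofReal p)] [Fact (1 ≤ ENNReal.ofReal q)] :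
    LocWeaklyBiLip (lp (fun _ : ℕ => ℝ) (ENNReal.ofReal p))
      (lp (fun _ : ℕ => ℝ) (ENNReal.ofReal q)) K (p / q * (2 * K) ^ (p / q - 1)) := by
  intro Δ hΔ C hC hdiam
  classical
  have hq0 : (0:ℝ) < q := by linarith
  have hp0 : (0:ℝ) < p := by linarith
  set γ := p / q with hγdef
  have hγ1 : 1 < γ := by rw [hγdef, lt_div_iff₀ hq0]; linarith
  have hγle : 1 ≤ γ := hγ1.le
  have hγ0 : (0:ℝ) < γ := by linarith
  have hγp : γ ≤ p := by rw [hγdef]; exact div_le_self hp0.le hq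
  have hγq : γ * q = p := by rw [hγdef]; field_simp
  have hK0 : (0:ℝ) < K := by linarith
  have hpt : (ENNReal.ofReal p).toReal = p := ENNReal.toReal_ofReal hp0.le
  have hqt : (ENNReal.ofReal q).toReal = q := ENNReal.toReal_ofReal hq0.le
  set R := K * Δ with hR
  have hR0 : (0:ℝ) < R := by positivity
  obtain ⟨a0, ha0C, b0, hb0C, hab0⟩ := hC
  -- diameter bound
  have hdistC : ∀ x ∈ C, ∀ y ∈ C, dist x y ≤ R := by
    intro x hx y hy
    have h1 : edist x y ≤ ENNReal.ofReal R := le_trans (EMetric.edist_le_diam_of_mem hx hy) hdiam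
    rw [edist_dist] at h1
    exact (ENNReal.ofReal_le_ofReal_iff hR0.le).1 h1
  -- norm and summability helpers
  have normX : ∀ w : lp (fun _ : ℕ => ℝ) (ENNReal.ofReal p), ‖w‖ ^ p = ∑' i, |w i| ^ p := by
    intro w
    have h := lp.norm_rpow_eq_tsum (p := ENNReal.ofReal p) (by rw [hpt]; exact hp0) w
    rw [hpt] at h
    simpa [Real.norm_eq_abs] using h
  have normY : ∀ z : lp (fun _ : ℕ => ℝ) (ENNReal.ofReal q), ‖z‖ ^ q = ∑' i, |z i| ^ q := by
    intro z
    have h := lp.norm_rpow_eq_tsum (p := ENNReal.ofReal q) (by rw [hqt]; exact hq0) z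
    rw [hqt] at h
    simpa [Real.norm_eq_abs] using h
  have sumX : ∀ w : lp (fun _ : ℕ => ℝ) (ENNReal.ofReal p), Summable fun i => |w i| ^ p := by
    intro w
    have h := (lp.memℓp w).summable (p := ENNReal.ofReal p) (by rw [hpt]; exact hp0)
    rw [hpt] at h
    simpa [Real.norm_eq_abs] using h
  have sumY : ∀ z : lp (fun _ : ℕ => ℝ) (ENNReal.ofReal q), Summable fun i => |z i| ^ q := by
    intro z
    have h := (lp.memℓp z).summable (p := ENNReal.ofReal q) (by rw [hqt]; exact hq0)
    rw [hqt] at h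
    simpa [Real.norm_eq_abs] using h
  -- the Mazur-type map
  set F : C → lp (fun _ : ℕ => ℝ) (ENNReal.ofReal q) :=
    fun x => ⟨fun i => psi γ (((x : lp (fun _ : ℕ => ℝ) (ENNReal.ofReal p)) - a0) i),
      memℓp_psi hq hqp _⟩ with hF
  have coordF : ∀ (x y : C) (i : ℕ),
      (((F x - F y) : lp (fun _ : ℕ => ℝ) (ENNReal.ofReal q)) i)
        = psi γ (((x : lp (fun _ : ℕ => ℝ) (ENNReal.ofReal p)) - a0) i)
          - psi γ (((y : lp (fun _ : ℕ => ℝ) (ENNReal.ofReal p)) - a0) i) := by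
    intro x y i
    rw [lp.coeFn_sub, Pi.sub_apply]
  -- upper estimate
  have E_up : ∀ x y : C,
      dist (F x) (F y) ≤ γ * R ^ (γ-1) *
        dist (x : lp (fun _ : ℕ => ℝ) (ENNReal.ofReal p)) (y : lp (fun _ : ℕ => ℝ) (ENNReal.ofReal p)) := by
    intro x y
    set u := (x : lp (fun _ : ℕ => ℝ) (ENNReal.ofReal p)) - a0 with hu
    set v := (y : lp (fun _ : ℕ => ℝ) (ENNReal.ofReal p)) - a0 with hv
    set w := (x : lp (fun _ : ℕ => ℝ) (ENNReal.ofReal p)) -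
      (y : lp (fun _ : ℕ => ℝ) (ENNReal.ofReal p)) with hw
    have hwc : ∀ i, u i - v i = w i := by
      intro i
      rw [hu, hv, hw, lp.coeFn_sub, lp.coeFn_sub, lp.coeFn_sub]
      simp only [Pi.sub_apply]
      ring
    have hnu : ‖u‖ ≤ R := by
      rw [hu, ← dist_eq_norm]
      exact hdistC _ x.2 _ ha0C
    have hnv : ‖v‖ ≤ R := by
      rw [hv, ← dist_eq_norm]
      exact hdistC _ y.2 _ ha0C
    -- coordinatewise bound
    set B : ℕ → ℝ := fun i => (|u i| ^ p + |v i| ^ p)/2 with hB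
    set e := (γ-1) * q / p with he
    have hpq0 : (0:ℝ) < p - q := by linarith
    have hepq : e * (p/(p-q)) = 1 := by
      rw [he, sub_mul, hγq, one_mul, div_mul_div_comm, mul_comm]
      exact div_self (by positivity)
    have hBnn : ∀ i, 0 ≤ B i := by
      intro i
      rw [hB]
      positivity
    have coordBound : ∀ i, |psi γ (u i) - psi γ (v i)| ^ q
        ≤ γ ^ q * (|w i| ^ q * (B i) ^ e) := by
      intro i
      have h1 := psi_upper (p := p) hγle hγp (u i) (v i)
      have h2 := Real.rpow_le_rpow (abs_nonneg _) h1 hq0.le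
      calc |psi γ (u i) - psi γ (v i)| ^ q
          ≤ (γ * |u i - v i| * (B i) ^ ((γ-1)/p)) ^ q := h2
      _ = γ ^ q * (|w i| ^ q * (B i) ^ e) := by
          rw [Real.mul_rpow (by positivity) (rpow_nonneg (hBnn i) _),
            Real.mul_rpow hγ0.le (abs_nonneg _),
            ← Real.rpow_mul (hBnn i), hwc i]
          rw [he, div_mul_eq_mul_div]
          ring
    -- Hölder
    have hconj : (p/q).HolderConjugate (p/(p-q)) := by
      rw [Real.holderConjugate_iff]; constructor
      · rw [lt_div_iff₀ hq0]; linarith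
      · field_simp; ring
    have hf_sum : Summable fun i => (|w i| ^ q) ^ (p/q) := by
      refine (sumX w).congr fun i => ?_
      rw [← Real.rpow_mul (abs_nonneg _)]
      congr 1
      field_simp
    have hg_sum : Summable fun i => ((B i) ^ e) ^ (p/(p-q)) := by
      have hBsum : Summable B := by
        refine Summable.div_const ?_ 2
        exact (sumX u).add (sumX v)
      refine hBsum.congr fun i => ?_
      rw [← Real.rpow_mul (hBnn i), hepq, rpow_one]
    obtain ⟨hmul_sum, hHold⟩ := summable_and_inner_le_Lp_mul_Lq_tsum_of_nonneg hconj
      (fun i => rpow_nonneg (abs_nonneg _) q) (fun i => rpow_nonneg (hBnn i) e)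
      hf_sum hg_sum
    -- assemble
    have hchain : ‖F x - F y‖ ^ q ≤ γ ^ q * ((‖w‖ ^ q) * (R ^ (γ-1)) ^ q) := by
      have t1 : ‖F x - F y‖ ^ q = ∑' i, |psi γ (u i) - psi γ (v i)| ^ q := by
        rw [normY (F x - F y)]
        exact tsum_congr fun i => by rw [coordF x y i]
      have t2 : (∑' i, |psi γ (u i) - psi γ (v i)| ^ q)
          ≤ ∑' i, γ ^ q * (|w i| ^ q * (B i) ^ e) := by
        refine Summable.tsum_le_tsum coordBound ?_ ?_
        · refine (sumY (F x - F y)).congr fun i => ?_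
          rw [coordF x y i]
        · exact (hmul_sum.mul_left _)
      have t3 : (∑' i, γ ^ q * (|w i| ^ q * (B i) ^ e))
          = γ ^ q * ∑' i, |w i| ^ q * (B i) ^ e := tsum_mul_left
      have t4 : (∑' i, (|w i| ^ q) ^ (p/q)) = ‖w‖ ^ p := by
        rw [normX w]
        congr 1
        funext i
        rw [← Real.rpow_mul (abs_nonneg _)]
        congr 1
        field_simp
      have t5 : (∑' i, ((B i) ^ e) ^ (p/(p-q))) ≤ R ^ p := by
        have hsum_eq : (∑' i, ((B i) ^ e) ^ (p/(p-q))) = ∑' i, B i := by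
          congr 1
          funext i
          rw [← Real.rpow_mul (hBnn i), hepq, rpow_one]
        rw [hsum_eq]
        have hBsum2 : (∑' i, B i) = ((∑' i, |u i| ^ p) + ∑' i, |v i| ^ p)/2 := by
          rw [hB, tsum_div_const, Summable.tsum_add (sumX u) (sumX v)]
        rw [hBsum2]
        have h6 : (∑' i, |u i| ^ p) ≤ R ^ p := by
          rw [← normX u]
          exact Real.rpow_le_rpow (norm_nonneg u) hnu hp0.le
        have h7 : (∑' i, |v i| ^ p) ≤ R ^ p := by
          rw [← normX v]
          exact Real.rpow_le_rpow (norm_nonneg v) hnv hp0.le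
        linarith
      -- combine Hölder side
      have t6 : (∑' i, |w i| ^ q * (B i) ^ e)
          ≤ (‖w‖ ^ p) ^ (q/p) * (R ^ p) ^ ((p-q)/p) := by
        have hh := hHold
        rw [t4] at hh
        have hmono : (∑' i, ((B i) ^ e) ^ (p/(p-q))) ^ (1/(p/(p-q)))
            ≤ (R ^ p) ^ (1/(p/(p-q))) := by
          apply Real.rpow_le_rpow _ t5 _
          · apply tsum_nonneg
            intro i
            positivity
          · positivity
        calc (∑' i, |w i| ^ q * (B i) ^ e)
            ≤ (‖w‖ ^ p) ^ (1/(p/q)) * (∑' i, ((B i) ^ e) ^ (p/(p-q))) ^ (1/(p/(p-q))) := hh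
        _ ≤ (‖w‖ ^ p) ^ (1/(p/q)) * (R ^ p) ^ (1/(p/(p-q))) := by
            apply mul_le_mul_of_nonneg_left hmono
            positivity
        _ = (‖w‖ ^ p) ^ (q/p) * (R ^ p) ^ ((p-q)/p) := by
            rw [one_div_div, one_div_div]
      have t7 : (‖w‖ ^ p) ^ (q/p) = ‖w‖ ^ q := by
        rw [← Real.rpow_mul (norm_nonneg w)]
        congr 1
        field_simp
      have t8 : (R ^ p) ^ ((p-q)/p) = (R ^ (γ-1)) ^ q := by
        rw [← Real.rpow_mul hR0.le, ← Real.rpow_mul hR0.le]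
        congr 1
        rw [sub_mul, hγq, one_mul]
        field_simp
      calc ‖F x - F y‖ ^ q = ∑' i, |psi γ (u i) - psi γ (v i)| ^ q := t1
      _ ≤ ∑' i, γ ^ q * (|w i| ^ q * (B i) ^ e) := t2
      _ = γ ^ q * ∑' i, |w i| ^ q * (B i) ^ e := t3
      _ ≤ γ ^ q * ((‖w‖ ^ p) ^ (q/p) * (R ^ p) ^ ((p-q)/p)) := by
          apply mul_le_mul_of_nonneg_left t6
          positivity
      _ = γ ^ q * ((‖w‖ ^ q) * (R ^ (γ-1)) ^ q) := by rw [t7, t8]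
    -- take q-th roots
    have hfinal : ‖F x - F y‖ ≤ γ * R ^ (γ-1) * ‖w‖ := by
      have hq' : (0:ℝ) < 1/q := by positivity
      have hrepack : γ ^ q * ((‖w‖ ^ q) * (R ^ (γ-1)) ^ q)
          = (γ * R ^ (γ-1) * ‖w‖) ^ q := by
        rw [Real.mul_rpow (by positivity) (norm_nonneg w),
          Real.mul_rpow hγ0.le (rpow_nonneg hR0.le _)]
        ring
      rw [hrepack] at hchain
      have := Real.rpow_le_rpow (by positivity) hchain hq'.le
      rwa [← Real.rpow_mul (norm_nonneg _), ← Real.rpow_mul (by positivity),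
        mul_one_div, div_self hq0.ne', rpow_one, rpow_one] at this
    rw [dist_eq_norm, dist_eq_norm]
    exact hfinal
  -- lower estimate
  have E_low : ∀ x y : C,
      2 ^ (1-γ) * dist (x : lp (fun _ : ℕ => ℝ) (ENNReal.ofReal p))
        (y : lp (fun _ : ℕ => ℝ) (ENNReal.ofReal p)) ^ γ ≤ dist (F x) (F y) := by
    intro x y
    set u := (x : lp (fun _ : ℕ => ℝ) (ENNReal.ofReal p)) - a0 with hu
    set v := (y : lp (fun _ : ℕ => ℝ) (ENNReal.ofReal p)) - a0 with hv
    set w := (x : lp (fun _ : ℕ => ℝ) (ENNReal.ofReal p)) -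
      (y : lp (fun _ : ℕ => ℝ) (ENNReal.ofReal p)) with hw
    have hwc : ∀ i, u i - v i = w i := by
      intro i
      rw [hu, hv, hw, lp.coeFn_sub, lp.coeFn_sub, lp.coeFn_sub]
      simp only [Pi.sub_apply]
      ring
    have coordLow : ∀ i, 2 ^ ((1-γ)*q) * |w i| ^ p ≤ |psi γ (u i) - psi γ (v i)| ^ q := by
      intro i
      have h1 := psi_lower hγle (u i) (v i)
      have h2 := Real.rpow_le_rpow (by positivity) h1 hq0.le
      rw [hwc i] at h2
      calc 2 ^ ((1-γ)*q) * |w i| ^ p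
          = (2 ^ (1-γ) * |w i| ^ γ) ^ q := by
            rw [Real.mul_rpow (rpow_nonneg (by norm_num) _) (rpow_nonneg (abs_nonneg _) _),
              ← Real.rpow_mul (by norm_num : (0:ℝ) ≤ 2),
              ← Real.rpow_mul (abs_nonneg _), hγq]
      _ ≤ |psi γ (u i) - psi γ (v i)| ^ q := h2
    have hlow : 2 ^ ((1-γ)*q) * ‖w‖ ^ p ≤ ‖F x - F y‖ ^ q := by
      rw [normX w, normY (F x - F y)]
      rw [← tsum_mul_left]
      refine Summable.tsum_le_tsum ?_ ?_ ?_
      · intro i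
        rw [coordF x y i]
        exact coordLow i
      · exact (sumX w).mul_left _
      · refine (sumY (F x - F y)).congr fun i => ?_
        rw [coordF x y i]
    -- take q-th roots
    have h2 := Real.rpow_le_rpow (by positivity) hlow (by positivity : (0:ℝ) ≤ 1/q)
    rw [Real.mul_rpow (rpow_nonneg (by norm_num) _) (rpow_nonneg (norm_nonneg w) _),
      ← Real.rpow_mul (by norm_num : (0:ℝ) ≤ 2), ← Real.rpow_mul (norm_nonneg w),
      ← Real.rpow_mul (norm_nonneg _), mul_one_div, mul_one_div, mul_one_div,
      div_self hq0.ne', rpow_one] at h2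
    rw [dist_eq_norm, dist_eq_norm]
    have e1 : (1-γ) * q / q = 1 - γ := by field_simp
    have e2 : p / q = γ := hγdef.symm
    rw [e1, e2] at h2
    exact h2
  -- Lipschitz constant
  set A : ℝ≥0 := Real.toNNReal (γ * R ^ (γ-1)) with hA
  have hAc : ((A : ℝ≥0) : ℝ) = γ * R ^ (γ-1) := Real.coe_toNNReal _ (by positivity)
  have hLipA : LipschitzWith A F := by
    apply LipschitzWith.of_dist_le_mul
    intro x y
    rw [hAc, Subtype.dist_eq]
    exact E_up x y
  obtain ⟨L, hLA, hLipL, hLmin⟩ := exists_minimal_lip F A hLipA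
  refine ⟨F, L, ?_, hLipL, hLmin, ?_⟩
  · -- non-constant
    refine ⟨⟨a0, ha0C⟩, ⟨b0, hb0C⟩, ?_⟩
    have hd : (0:ℝ) < dist a0 b0 := dist_pos.2 hab0
    have h1 := E_low ⟨a0, ha0C⟩ ⟨b0, hb0C⟩
    have h2 : (0:ℝ) < 2 ^ (1-γ) * dist a0 b0 ^ γ := by positivity
    intro hFF
    rw [hFF] at h1
    simp only [dist_self] at h1
    linarith
  · -- the main bound
    intro x y hxy
    set d := dist (x : lp (fun _ : ℕ => ℝ) (ENNReal.ofReal p))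
      (y : lp (fun _ : ℕ => ℝ) (ENNReal.ofReal p)) with hd
    have hD0 : (0:ℝ) < γ * (2*K) ^ (γ-1) := by positivity
    have hstep1 : (L : ℝ) / (γ * (2*K) ^ (γ-1)) * Δ ≤ (A : ℝ) / (γ * (2*K) ^ (γ-1)) * Δ := by
      have hLA' : (L : ℝ) ≤ (A : ℝ) := by exact_mod_cast hLA
      gcongr
    have hstep2 : (A : ℝ) / (γ * (2*K) ^ (γ-1)) * Δ = 2 ^ (1-γ) * Δ ^ γ := by
      rw [hAc]
      have e3 : γ * R ^ (γ-1) / (γ * (2*K) ^ (γ-1)) = (Δ/2) ^ (γ-1) := by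
        rw [mul_div_mul_left _ _ hγ0.ne']
        rw [← Real.div_rpow hR0.le (by positivity : (0:ℝ) ≤ 2*K)]
        congr 1
        rw [hR]
        field_simp
      have hΔγ : Δ ^ (γ-1) * Δ = Δ ^ γ := by
        rw [← Real.rpow_add_one hΔ.ne']
        norm_num
      rw [e3, Real.div_rpow hΔ.le (by norm_num : (0:ℝ) ≤ 2),
        show (1:ℝ)-γ = -(γ-1) by ring, Real.rpow_neg (by norm_num : (0:ℝ) ≤ 2), ← hΔγ]
      field_simp
    have hstep3 : 2 ^ (1-γ) * Δ ^ γ < 2 ^ (1-γ) * d ^ γ := by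
      apply mul_lt_mul_of_pos_left _ (rpow_pos_of_pos (by norm_num) _)
      exact Real.rpow_lt_rpow hΔ.le hxy hγ0
    calc (L : ℝ) / (γ * (2*K) ^ (γ-1)) * Δ
        ≤ (A : ℝ) / (γ * (2*K) ^ (γ-1)) * Δ := hstep1
    _ = 2 ^ (1-γ) * Δ ^ γ := hstep2
    _ < 2 ^ (1-γ) * d ^ γ := hstep3
    _ ≤ dist (F x) (F y) := E_low x y
end
end

section
/- Let 1 ≤ q < p < ∞, C_0 > 0 and m ≥ 1, and define M : ℝ^m → ℝ^m by M(x)_i = (q/(p·C_0^{p/q−1}))·sign(x_i)·|x_i|^{p/q} (the Mazur map M_{p,q} scaled down by the factor (p/q)·C_0^{p/q−1}). Then for all x, y ∈ ℝ^m with ‖x‖_p ≤ C_0 and ‖y‖_p ≤ C_0: (q/p)·(2C_0)^{1 − p/q}·‖x − y‖_p^{p/q} ≤ ‖M(x) − M(y)‖_q ≤ ‖x − y‖_p. -/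
noncomputable section

/-- The `r`-norm on `ℝ^m`: `‖x‖_r = (∑ i, |x i| ^ r) ^ (1/r)`. -/
noncomputable def pnorm {m : ℕ} (r : ℝ) (x : Fin m → ℝ) : ℝ :=
  (∑ i, |x i| ^ r) ^ (1 / r)

/-- The Mazur map `M_{p,q}` scaled down by the factor `(p/q) * C₀^(p/q - 1)`:
`M(x)_i = (q / (p * C₀^(p/q−1))) * sign(x_i) * |x_i|^(p/q)`. -/
noncomputable def scaledMazur {m : ℕ} (p q C₀ : ℝ) (x : Fin m → ℝ) : Fin m → ℝ :=
  fun i => q / (p * C₀ ^ (p / q - 1)) * Real.sign (x i) * |x i| ^ (p / q)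

open Finset Real Filter Topology


-- Real version: a^γ + b^γ ≤ (a+b)^γ for γ ≥ 1
lemma myAdd_rpow_le_rpow_add {a b γ : ℝ} (ha : 0 ≤ a) (hb : 0 ≤ b) (hγ : 1 ≤ γ) :
    a ^ γ + b ^ γ ≤ (a + b) ^ γ := by
  have := NNReal.coe_le_coe.2 (NNReal.add_rpow_le_rpow_add ⟨a, ha⟩ ⟨b, hb⟩ hγ)
  push_cast at this
  exact this

lemma myRpow_add_le {a b γ : ℝ} (ha : 0 ≤ a) (hb : 0 ≤ b) (hγ : 1 ≤ γ) :
    (a + b) ^ γ ≤ 2 ^ (γ - 1) * (a ^ γ + b ^ γ) := by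
  have := NNReal.coe_le_coe.2 (NNReal.rpow_add_le_mul_rpow_add_rpow ⟨a, ha⟩ ⟨b, hb⟩ hγ)
  push_cast at this
  exact this

-- tangent line inequality
lemma myRpow_sub_rpow_le {a b γ : ℝ} (hγ : 1 ≤ γ) (hb : 0 ≤ b) (hba : b ≤ a) :
    a ^ γ - b ^ γ ≤ γ * a ^ (γ - 1) * (a - b) := by
  have ha : 0 ≤ a := hb.trans hba
  rcases ha.eq_or_lt with h | h
  · have hb0 : b = 0 := le_antisymm (h ▸ hba) hb
    simp [← h, hb0, Real.zero_rpow (by positivity : γ ≠ 0)]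
  · have hkey : 1 + γ * (b / a - 1) ≤ (b / a) ^ γ := by
      have h1 : -1 ≤ b / a - 1 := by
        have : 0 ≤ b / a := div_nonneg hb ha
        linarith
      have := one_add_mul_self_le_rpow_one_add h1 hγ
      simpa using this
    have h2 : a ^ γ * (1 + γ * (b / a - 1)) ≤ a ^ γ * (b / a) ^ γ :=
      mul_le_mul_of_nonneg_left hkey (Real.rpow_nonneg ha γ)
    have h3 : a ^ γ * (b / a) ^ γ = b ^ γ := by
      rw [← Real.mul_rpow ha (div_nonneg hb ha), mul_div_cancel₀ _ h.ne']
    have h4 : a ^ (γ - 1) = a ^ γ / a := by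
      rw [Real.rpow_sub h, Real.rpow_one]
    rw [h3] at h2
    rw [h4]
    have h5 : a ^ γ * (b / a) = a ^ γ / a * b := by ring
    have h6 : a ^ γ / a * a = a ^ γ := div_mul_cancel₀ _ h.ne'
    nlinarith [h2, h6, Real.rpow_nonneg ha γ]

lemma sp_of_nonneg {γ : ℝ} (hγ : 0 < γ) {t : ℝ} (ht : 0 ≤ t) :
    Real.sign t * |t| ^ γ = t ^ γ := by
  rcases ht.eq_or_lt with h | h
  · simp [← h, Real.sign_zero, Real.zero_rpow hγ.ne']
  · rw [Real.sign_of_pos h, abs_of_pos h, one_mul]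

lemma sp_of_nonpos {γ : ℝ} (hγ : 0 < γ) {t : ℝ} (ht : t ≤ 0) :
    Real.sign t * |t| ^ γ = -((-t) ^ γ) := by
  have h := sp_of_nonneg hγ (neg_nonneg.2 ht)
  rw [← h, ← neg_neg t, Real.sign_neg, abs_neg, neg_neg]
  ring

lemma rpow_self_mul {c γ : ℝ} (hc : 0 ≤ c) (hγ : 0 < γ) :
    c ^ γ = c ^ (γ - 1) * c := by
  rcases hc.eq_or_lt with h | h
  · rw [← h, Real.zero_rpow hγ.ne']
    ring
  · rw [← Real.rpow_add_one h.ne' (γ - 1), sub_add_cancel]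

-- upper, both nonneg, ordered
lemma upper_nn_ord {γ : ℝ} (hγ : 1 ≤ γ) {a b : ℝ} (hb : 0 ≤ b) (hba : b ≤ a) :
    |a ^ γ - b ^ γ| ≤ γ * max a b ^ (γ - 1) * |a - b| := by
  have h1 : b ^ γ ≤ a ^ γ := Real.rpow_le_rpow hb hba (by linarith)
  rw [max_eq_left hba, abs_of_nonneg (sub_nonneg.2 hba), abs_of_nonneg (sub_nonneg.2 h1)]
  exact myRpow_sub_rpow_le hγ hb hba

lemma upper_nn {γ : ℝ} (hγ : 1 ≤ γ) {a b : ℝ} (ha : 0 ≤ a) (hb : 0 ≤ b) :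
    |a ^ γ - b ^ γ| ≤ γ * max a b ^ (γ - 1) * |a - b| := by
  rcases le_total b a with h | h
  · exact upper_nn_ord hγ hb h
  · have := upper_nn_ord hγ ha h
    rwa [max_comm, abs_sub_comm, abs_sub_comm b a] at this

-- upper, mixed signs
lemma upper_mixed_ord {γ : ℝ} (hγ : 1 ≤ γ) {a c : ℝ} (hc : 0 ≤ c) (hca : c ≤ a) :
    a ^ γ + c ^ γ ≤ γ * max a c ^ (γ - 1) * (a + c) := by
  have ha : 0 ≤ a := hc.trans hca
  rw [max_eq_left hca]
  have h1 : c ^ γ ≤ a ^ (γ - 1) * c := by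
    rw [rpow_self_mul hc (by linarith)]
    exact mul_le_mul_of_nonneg_right
      (Real.rpow_le_rpow hc hca (by linarith)) hc
  have h2 : a ^ γ = a ^ (γ - 1) * a := rpow_self_mul ha (by linarith)
  have h3 : a ^ γ + c ^ γ ≤ a ^ (γ - 1) * (a + c) := by
    rw [h2]; nlinarith [h1]
  have h4 : a ^ (γ - 1) * (a + c) ≤ γ * a ^ (γ - 1) * (a + c) := by
    have h5 : (0:ℝ) ≤ a ^ (γ - 1) := Real.rpow_nonneg ha (γ - 1)
    have h6 : a ^ (γ - 1) ≤ γ * a ^ (γ - 1) := le_mul_of_one_le_left h5 hγ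
    exact mul_le_mul_of_nonneg_right h6 (by linarith)
  linarith

lemma upper_mixed {γ : ℝ} (hγ : 1 ≤ γ) {a c : ℝ} (ha : 0 ≤ a) (hc : 0 ≤ c) :
    a ^ γ + c ^ γ ≤ γ * max a c ^ (γ - 1) * (a + c) := by
  rcases le_total c a with h | h
  · exact upper_mixed_ord hγ hc h
  · have := upper_mixed_ord hγ ha h
    rw [max_comm]; linarith

-- lower, both nonneg ordered: (a-b)^γ ≤ a^γ - b^γ
lemma lower_nn_ord {γ : ℝ} (hγ : 1 ≤ γ) {a b : ℝ} (hb : 0 ≤ b) (hba : b ≤ a) :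
    (a - b) ^ γ ≤ a ^ γ - b ^ γ := by
  have := myAdd_rpow_le_rpow_add (sub_nonneg.2 hba) hb hγ
  rw [sub_add_cancel] at this
  linarith

-- lower mixed: 2^(1-γ)(a+c)^γ ≤ a^γ + c^γ
lemma lower_mixed {γ : ℝ} (hγ : 1 ≤ γ) {a c : ℝ} (ha : 0 ≤ a) (hc : 0 ≤ c) :
    2 ^ (1 - γ) * (a + c) ^ γ ≤ a ^ γ + c ^ γ := by
  have h := myRpow_add_le ha hc hγ
  have h2 : (0:ℝ) < 2 ^ (1 - γ) := Real.rpow_pos_of_pos two_pos _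
  have h3 : (2:ℝ) ^ (1 - γ) * 2 ^ (γ - 1) = 1 := by
    rw [← Real.rpow_add two_pos]; norm_num
  calc 2 ^ (1 - γ) * (a + c) ^ γ ≤ 2 ^ (1 - γ) * (2 ^ (γ - 1) * (a ^ γ + c ^ γ)) :=
        mul_le_mul_of_nonneg_left h h2.le
    _ = a ^ γ + c ^ γ := by rw [← mul_assoc, h3, one_mul]

lemma sp_upper {γ : ℝ} (hγ : 1 < γ) (a b : ℝ) :
    |Real.sign a * |a| ^ γ - Real.sign b * |b| ^ γ| ≤
      γ * max |a| |b| ^ (γ - 1) * |a - b| := by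
  have hγ0 : (0:ℝ) < γ := by linarith
  rcases le_total 0 a with ha | ha <;> rcases le_total 0 b with hb | hb
  · rw [sp_of_nonneg hγ0 ha, sp_of_nonneg hγ0 hb, abs_of_nonneg ha, abs_of_nonneg hb]
    exact upper_nn hγ.le ha hb
  · rw [sp_of_nonneg hγ0 ha, sp_of_nonpos hγ0 hb, abs_of_nonneg ha, abs_of_nonpos hb,
      sub_neg_eq_add]
    have hc : 0 ≤ -b := neg_nonneg.2 hb
    have h1 : |a ^ γ + (-b) ^ γ| = a ^ γ + (-b) ^ γ :=
      abs_of_nonneg (by positivity)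
    have h2 : |a - b| = a + -b := by
      rw [abs_of_nonneg (by linarith)]; ring
    rw [h1, h2]
    exact upper_mixed hγ.le ha hc
  · rw [sp_of_nonpos hγ0 ha, sp_of_nonneg hγ0 hb, abs_of_nonpos ha, abs_of_nonneg hb]
    have hc : 0 ≤ -a := neg_nonneg.2 ha
    have h1 : |-(-a) ^ γ - b ^ γ| = (-a) ^ γ + b ^ γ := by
      rw [show -(-a) ^ γ - b ^ γ = -((-a) ^ γ + b ^ γ) by ring, abs_neg]
      exact abs_of_nonneg (by positivity)
    have h2 : |a - b| = -a + b := by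
      rw [abs_of_nonpos (by linarith)]; ring
    rw [h1, h2]
    have := upper_mixed hγ.le hc hb
    linarith [this]
  · rw [sp_of_nonpos hγ0 ha, sp_of_nonpos hγ0 hb, abs_of_nonpos ha, abs_of_nonpos hb]
    have h1 : |-(-a) ^ γ - -(-b) ^ γ| = |(-a) ^ γ - (-b) ^ γ| := by
      rw [show -(-a) ^ γ - -(-b) ^ γ = -((-a) ^ γ - (-b) ^ γ) by ring, abs_neg]
    have h2 : |a - b| = |(-a) - (-b)| := by rw [show (-a) - (-b) = -(a - b) by ring, abs_neg]
    rw [h1, h2]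
    exact upper_nn hγ.le (neg_nonneg.2 ha) (neg_nonneg.2 hb)

lemma sp_lower {γ : ℝ} (hγ : 1 < γ) (a b : ℝ) :
    2 ^ (1 - γ) * |a - b| ^ γ ≤ |Real.sign a * |a| ^ γ - Real.sign b * |b| ^ γ| := by
  have hγ0 : (0:ℝ) < γ := by linarith
  have h2le : (2:ℝ) ^ (1 - γ) ≤ 1 :=
    Real.rpow_le_one_of_one_le_of_nonpos one_le_two (by linarith)
  have nn_case : ∀ a b : ℝ, 0 ≤ b → b ≤ a →
      2 ^ (1 - γ) * |a - b| ^ γ ≤ |a ^ γ - b ^ γ| := by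
    intro a b hb hba
    have h1 : b ^ γ ≤ a ^ γ := Real.rpow_le_rpow hb hba hγ0.le
    rw [abs_of_nonneg (sub_nonneg.2 hba), abs_of_nonneg (sub_nonneg.2 h1)]
    have h3 : (a - b) ^ γ ≤ a ^ γ - b ^ γ := lower_nn_ord hγ.le hb hba
    have h4 : (0:ℝ) ≤ (a - b) ^ γ := Real.rpow_nonneg (by linarith) γ
    nlinarith [h2le, h4]
  have nn : ∀ a b : ℝ, 0 ≤ a → 0 ≤ b →
      2 ^ (1 - γ) * |a - b| ^ γ ≤ |a ^ γ - b ^ γ| := by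
    intro a b ha hb
    rcases le_total b a with h | h
    · exact nn_case a b hb h
    · have := nn_case b a ha h
      rwa [abs_sub_comm b a, abs_sub_comm (b ^ γ) (a ^ γ)] at this
  rcases le_total 0 a with ha | ha <;> rcases le_total 0 b with hb | hb
  · rw [sp_of_nonneg hγ0 ha, sp_of_nonneg hγ0 hb]
    exact nn a b ha hb
  · rw [sp_of_nonneg hγ0 ha, sp_of_nonpos hγ0 hb, sub_neg_eq_add]
    have hc : 0 ≤ -b := neg_nonneg.2 hb
    have h1 : |a ^ γ + (-b) ^ γ| = a ^ γ + (-b) ^ γ := abs_of_nonneg (by positivity)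
    have h2 : |a - b| = a + -b := by rw [abs_of_nonneg (by linarith)]; ring
    rw [h1, h2]
    exact lower_mixed hγ.le ha hc
  · rw [sp_of_nonpos hγ0 ha, sp_of_nonneg hγ0 hb]
    have hc : 0 ≤ -a := neg_nonneg.2 ha
    have h1 : |-(-a) ^ γ - b ^ γ| = (-a) ^ γ + b ^ γ := by
      rw [show -(-a) ^ γ - b ^ γ = -((-a) ^ γ + b ^ γ) by ring, abs_neg]
      exact abs_of_nonneg (by positivity)
    have h2 : |a - b| = -a + b := by rw [abs_of_nonpos (by linarith)]; ring
    rw [h1, h2]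
    exact lower_mixed hγ.le hc hb
  · rw [sp_of_nonpos hγ0 ha, sp_of_nonpos hγ0 hb]
    have h1 : |-(-a) ^ γ - -(-b) ^ γ| = |(-a) ^ γ - (-b) ^ γ| := by
      rw [show -(-a) ^ γ - -(-b) ^ γ = -((-a) ^ γ - (-b) ^ γ) by ring, abs_neg]
    have h2 : |a - b| = |(-a) - (-b)| := by rw [show (-a) - (-b) = -(a - b) by ring, abs_neg]
    rw [h1, h2]
    exact nn (-a) (-b) (neg_nonneg.2 ha) (neg_nonneg.2 hb)

lemma holder_step {m : ℕ} {p q : ℝ} (hq : 1 ≤ q) (hqp : q < p)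
    (W e : Fin m → ℝ) (hW : ∀ i, 0 ≤ W i) (he : ∀ i, 0 ≤ e i) :
    (∑ i, (W i ^ (p / q - 1) * e i) ^ q) ^ (1 / q) ≤
      ((∑ i, W i ^ p) ^ (1 / p)) ^ (p / q - 1) * (∑ i, e i ^ p) ^ (1 / p) := by
  have hq0 : (0:ℝ) < q := by linarith
  have hp0 : (0:ℝ) < p := by linarith
  have hpq0 : (0:ℝ) < p - q := by linarith
  have hexp : (p / q - 1) * q = p - q := by field_simp
  have hterm : ∀ i : Fin m, (W i ^ (p / q - 1) * e i) ^ q = W i ^ (p - q) * e i ^ q := by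
    intro i
    rw [Real.mul_rpow (Real.rpow_nonneg (hW i) _) (he i), ← Real.rpow_mul (hW i), hexp]
  simp only [hterm]
  -- Hölder with conjugate exponents P = p/(p-q), Q = p/q
  have hconj : Real.HolderConjugate (p / (p - q)) (p / q) := by
    rw [Real.holderConjugate_iff]
    constructor
    · rw [lt_div_iff₀ hpq0]; linarith
    · rw [inv_div, inv_div]; field_simp; ring
  have hold := Real.inner_le_Lp_mul_Lq_of_nonneg Finset.univ hconj
    (f := fun i => W i ^ (p - q)) (g := fun i => e i ^ q)
    (fun i _ => Real.rpow_nonneg (hW i) _) (fun i _ => Real.rpow_nonneg (he i) _)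
  have hWp : ∀ i : Fin m, (W i ^ (p - q)) ^ (p / (p - q)) = W i ^ p := by
    intro i
    rw [← Real.rpow_mul (hW i)]
    rw [mul_div_cancel₀ _ hpq0.ne']
  have hep : ∀ i : Fin m, (e i ^ q) ^ (p / q) = e i ^ p := by
    intro i
    rw [← Real.rpow_mul (he i), mul_div_cancel₀ _ hq0.ne']
  simp only [hWp, hep] at hold
  -- raise to power 1/q
  set A := ∑ i : Fin m, W i ^ p with hA
  set B := ∑ i : Fin m, e i ^ p with hB
  have hA0 : 0 ≤ A := Finset.sum_nonneg fun i _ => Real.rpow_nonneg (hW i) _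
  have hB0 : 0 ≤ B := Finset.sum_nonneg fun i _ => Real.rpow_nonneg (he i) _
  have hS0 : 0 ≤ ∑ i : Fin m, W i ^ (p - q) * e i ^ q :=
    Finset.sum_nonneg fun i _ =>
      mul_nonneg (Real.rpow_nonneg (hW i) _) (Real.rpow_nonneg (he i) _)
  have step1 : (∑ i : Fin m, W i ^ (p - q) * e i ^ q) ^ (1 / q) ≤
      (A ^ (1 / (p / (p - q))) * B ^ (1 / (p / q))) ^ (1 / q) :=
    Real.rpow_le_rpow hS0 hold (by positivity)
  refine step1.trans (le_of_eq ?_)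
  rw [Real.mul_rpow (Real.rpow_nonneg hA0 _) (Real.rpow_nonneg hB0 _),
    ← Real.rpow_mul hA0, ← Real.rpow_mul hB0, ← Real.rpow_mul hA0]
  congr 1
  · congr 1
    rw [one_div_div]
    field_simp
  · congr 1
    rw [one_div_div]
    field_simp
lemma pnorm_nonneg {m : ℕ} (r : ℝ) (x : Fin m → ℝ) : 0 ≤ pnorm r x :=
  Real.rpow_nonneg (Finset.sum_nonneg fun i _ => Real.rpow_nonneg (abs_nonneg _) r) _

lemma pnorm_zero {m : ℕ} {r : ℝ} (hr : 0 < r) : pnorm r (0 : Fin m → ℝ) = 0 := by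
  unfold pnorm
  simp only [Pi.zero_apply, abs_zero, Real.zero_rpow hr.ne', Finset.sum_const, smul_zero]
  exact Real.zero_rpow (by positivity)

lemma pnorm_const_mul {m : ℕ} {r : ℝ} (hr : 0 < r) {c : ℝ} (hc : 0 ≤ c) (x : Fin m → ℝ) :
    pnorm r (fun i => c * x i) = c * pnorm r x := by
  unfold pnorm
  have h1 : ∀ i : Fin m, |c * x i| ^ r = c ^ r * |x i| ^ r := fun i => by
    rw [abs_mul, abs_of_nonneg hc, Real.mul_rpow hc (abs_nonneg _)]
  simp only [h1]
  rw [← Finset.mul_sum, Real.mul_rpow (Real.rpow_nonneg hc r)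
    (Finset.sum_nonneg fun i _ => Real.rpow_nonneg (abs_nonneg _) r),
    ← Real.rpow_mul hc, mul_one_div, div_self hr.ne', Real.rpow_one]

lemma pnorm_abs {m : ℕ} (r : ℝ) (x : Fin m → ℝ) :
    pnorm r (fun i => |x i|) = pnorm r x := by
  unfold pnorm
  simp [abs_abs]

lemma pnorm_add_le {m : ℕ} {r : ℝ} (hr : 1 ≤ r) (x y : Fin m → ℝ) :
    pnorm r (fun i => x i + y i) ≤ pnorm r x + pnorm r y := by
  unfold pnorm
  exact Real.Lp_add_le Finset.univ x y hr

lemma pnorm_sum_le {m : ℕ} {r : ℝ} (hr : 1 ≤ r) (n : ℕ) (f : ℕ → Fin m → ℝ) :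
    pnorm r (fun i => ∑ k ∈ Finset.range n, f k i) ≤
      ∑ k ∈ Finset.range n, pnorm r (f k) := by
  induction n with
  | zero =>
      simp only [Finset.range_zero, Finset.sum_empty]
      exact le_of_eq (pnorm_zero (by linarith))
  | succ n ih =>
      simp only [Finset.sum_range_succ]
      calc pnorm r (fun i => (∑ k ∈ Finset.range n, f k i) + f n i)
          ≤ pnorm r (fun i => ∑ k ∈ Finset.range n, f k i) + pnorm r (f n) :=
            pnorm_add_le hr _ _
        _ ≤ (∑ k ∈ Finset.range n, pnorm r (f k)) + pnorm r (f n) := by linarith [ih]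

-- monotonicity: if |x i| ≤ y i pointwise then pnorm x ≤ pnorm y
lemma pnorm_mono {m : ℕ} {r : ℝ} (hr : 0 < r) {x y : Fin m → ℝ}
    (h : ∀ i, |x i| ≤ y i) : pnorm r x ≤ pnorm r y := by
  unfold pnorm
  apply Real.rpow_le_rpow (Finset.sum_nonneg fun i _ => Real.rpow_nonneg (abs_nonneg _) r)
    _ (by positivity)
  apply Finset.sum_le_sum
  intro i _
  have hy : |y i| = y i := abs_of_nonneg ((abs_nonneg _).trans (h i))
  rw [hy]
  exact Real.rpow_le_rpow (abs_nonneg _) (h i) hr.le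

lemma pnorm_segment_le {m : ℕ} {p : ℝ} (hp : 1 ≤ p) {C : ℝ} (x y : Fin m → ℝ)
    (hx : pnorm p x ≤ C) (hy : pnorm p y ≤ C) {t : ℝ} (ht0 : 0 ≤ t) (ht1 : t ≤ 1) :
    pnorm p (fun i => y i + t * (x i - y i)) ≤ C := by
  have hre : (fun i => y i + t * (x i - y i)) =
      fun i => (1 - t) * y i + t * x i := funext fun i => by ring
  rw [hre]
  have h1 := pnorm_add_le hp (fun i => (1 - t) * y i) (fun i => t * x i)
  rw [pnorm_const_mul (by linarith : (0:ℝ) < p) (by linarith : (0:ℝ) ≤ 1 - t),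
    pnorm_const_mul (by linarith : (0:ℝ) < p) ht0] at h1
  have h2 : (1 - t) * pnorm p y ≤ (1 - t) * C :=
    mul_le_mul_of_nonneg_left hy (by linarith)
  have h3 : t * pnorm p x ≤ t * C := mul_le_mul_of_nonneg_left hx ht0
  calc pnorm p (fun i => (1 - t) * y i + t * x i)
      ≤ (1 - t) * pnorm p y + t * pnorm p x := h1
    _ ≤ (1 - t) * C + t * C := by linarith
    _ = C := by ring

lemma mazur_upper_n {m : ℕ} {p q C₀ : ℝ} (hq : 1 ≤ q) (hqp : q < p) (hC₀ : 0 < C₀)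
    (x y : Fin m → ℝ) (hx : pnorm p x ≤ C₀) (hy : pnorm p y ≤ C₀) (n : ℕ) (hn : 0 < n) :
    pnorm q (fun i => Real.sign (x i) * |x i| ^ (p / q) - Real.sign (y i) * |y i| ^ (p / q))
      ≤ p / q * (C₀ + pnorm p (x - y) / n) ^ (p / q - 1) * pnorm p (x - y) := by
  have hq0 : (0:ℝ) < q := by linarith
  have hp0 : (0:ℝ) < p := by linarith
  have hp1 : (1:ℝ) ≤ p := by linarith
  have hγ : 1 < p / q := (one_lt_div hq0).2 hqp
  set γ := p / q with hγdef
  have hγ1 : (0:ℝ) ≤ γ - 1 := by linarith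
  have hn0 : (0:ℝ) < (n : ℝ) := by exact_mod_cast hn
  set d : Fin m → ℝ := fun i => x i - y i with hd
  have hdsub : pnorm p (x - y) = pnorm p d := rfl
  set D := pnorm p (x - y) with hD
  have hD0 : 0 ≤ D := pnorm_nonneg _ _
  set Z : ℕ → Fin m → ℝ := fun k i => y i + (k : ℝ) / n * (x i - y i) with hZ
  set g : ℕ → Fin m → ℝ := fun k i => Real.sign (Z k i) * |Z k i| ^ γ with hg
  have hg0 : ∀ i, g 0 i = Real.sign (y i) * |y i| ^ γ := by
    intro i; simp [hg, hZ]
  have hgn : ∀ i, g n i = Real.sign (x i) * |x i| ^ γ := by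
    intro i
    have : Z n i = x i := by
      simp only [hZ, div_self hn0.ne']
      ring
    simp [hg, this]
  -- telescoping
  have htel : (fun i => Real.sign (x i) * |x i| ^ γ - Real.sign (y i) * |y i| ^ γ) =
      fun i => ∑ k ∈ Finset.range n, (g (k + 1) i - g k i) := by
    funext i
    rw [Finset.sum_range_sub (fun k => g k i) n, hgn i, hg0 i]
  rw [htel]
  have hmain : ∀ k ∈ Finset.range n,
      pnorm q (fun i => g (k + 1) i - g k i) ≤ γ * (C₀ + D / n) ^ (γ - 1) * (D / n) := by
    intro k hk
    have hkn : (k : ℝ) / n ≤ 1 := by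
      rw [div_le_one hn0]
      exact_mod_cast Nat.le_of_lt_succ (Nat.lt_succ_of_lt (Finset.mem_range.1 hk))
    have hkn0 : (0:ℝ) ≤ (k : ℝ) / n := by positivity
    set W : Fin m → ℝ := fun i => |Z k i| + |d i| / n with hW
    set e : Fin m → ℝ := fun i => |d i| / n with he
    have hWnn : ∀ i, 0 ≤ W i := fun i => by
      have : (0:ℝ) ≤ |d i| / n := by positivity
      have := abs_nonneg (Z k i)
      simp only [hW]; linarith
    have henn : ∀ i, 0 ≤ e i := fun i => by positivity
    -- coordinatewise bound
    have hcoord : ∀ i, |g (k + 1) i - g k i| ≤ γ * (W i ^ (γ - 1) * e i) := by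
      intro i
      have hstep := sp_upper hγ (Z (k + 1) i) (Z k i)
      have hdiff : Z (k + 1) i - Z k i = d i / n := by
        simp only [hZ, hd]
        push_cast
        ring
      have habs : |Z (k + 1) i - Z k i| = e i := by
        rw [hdiff, he, abs_div, abs_of_pos hn0]
      have hmax : max |Z (k + 1) i| |Z k i| ≤ W i := by
        apply max_le
        · have : Z (k + 1) i = Z k i + d i / n := by rw [← hdiff]; ring
          rw [this]
          calc |Z k i + d i / n| ≤ |Z k i| + |d i / n| := abs_add_le _ _
            _ = W i := by rw [hW, abs_div, abs_of_pos hn0]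
        · simp only [hW]
          have : (0:ℝ) ≤ |d i| / n := by positivity
          linarith
      calc |g (k + 1) i - g k i| ≤ γ * max |Z (k + 1) i| |Z k i| ^ (γ - 1) *
              |Z (k + 1) i - Z k i| := hstep
        _ ≤ γ * W i ^ (γ - 1) * e i := by
            rw [habs]
            apply mul_le_mul_of_nonneg_right _ (henn i)
            apply mul_le_mul_of_nonneg_left _ (by linarith : (0:ℝ) ≤ γ)
            exact Real.rpow_le_rpow (le_max_iff.2 (Or.inl (abs_nonneg _))) hmax hγ1
        _ = γ * (W i ^ (γ - 1) * e i) := by ring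
    -- pnorm bound via monotonicity
    have h1 : pnorm q (fun i => g (k + 1) i - g k i) ≤
        pnorm q (fun i => γ * (W i ^ (γ - 1) * e i)) :=
      pnorm_mono hq0 fun i => by
        have h := hcoord i
        have hnn : 0 ≤ γ * (W i ^ (γ - 1) * e i) := by
          have := Real.rpow_nonneg (hWnn i) (γ - 1)
          have := henn i
          positivity
        exact h
    have h2 : pnorm q (fun i => γ * (W i ^ (γ - 1) * e i)) =
        γ * pnorm q (fun i => W i ^ (γ - 1) * e i) :=
      pnorm_const_mul hq0 (by linarith : (0:ℝ) ≤ γ) _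
    -- rewrite pnorm as plain sum (entries nonneg)
    have h3 : pnorm q (fun i => W i ^ (γ - 1) * e i) =
        (∑ i, (W i ^ (γ - 1) * e i) ^ q) ^ (1 / q) := by
      unfold pnorm
      congr 1
      apply Finset.sum_congr rfl
      intro i _
      congr 1
      exact abs_of_nonneg (mul_nonneg (Real.rpow_nonneg (hWnn i) _) (henn i))
    have h4 := holder_step hq hqp W e hWnn henn
    -- identify the two factors
    have hWsum : (∑ i, W i ^ p) ^ (1 / p) = pnorm p W := by
      unfold pnorm
      congr 1
      apply Finset.sum_congr rfl
      intro i _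
      congr 1
      exact (abs_of_nonneg (hWnn i)).symm
    have hesum : (∑ i, e i ^ p) ^ (1 / p) = D / n := by
      have : (∑ i, e i ^ p) ^ (1 / p) = pnorm p e := by
        unfold pnorm
        congr 1
        apply Finset.sum_congr rfl
        intro i _
        congr 1
        exact (abs_of_nonneg (henn i)).symm
      rw [this]
      have he2 : e = fun i => 1 / (n : ℝ) * |d i| := by
        funext i; rw [he]; ring
      rw [he2, pnorm_const_mul hp0 (by positivity) _, pnorm_abs, ← hdsub]
      ring
    have hWle : pnorm p W ≤ C₀ + D / n := by
      have hWsplit : W = fun i => |Z k i| + (1 / (n:ℝ)) * |d i| := by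
        funext i; rw [hW]; ring
      rw [hWsplit]
      have := pnorm_add_le hp1 (fun i => |Z k i|) (fun i => (1 / (n:ℝ)) * |d i|)
      have hZle : pnorm p (fun i => |Z k i|) ≤ C₀ := by
        rw [pnorm_abs]
        exact pnorm_segment_le hp1 x y hx hy hkn0 hkn
      have hdle : pnorm p (fun i => (1 / (n:ℝ)) * |d i|) = D / n := by
        rw [pnorm_const_mul hp0 (by positivity) _, pnorm_abs, ← hdsub]
        ring
      calc pnorm p (fun i => |Z k i| + 1 / (n:ℝ) * |d i|)
          ≤ pnorm p (fun i => |Z k i|) + pnorm p (fun i => (1 / (n:ℝ)) * |d i|) := this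
        _ ≤ C₀ + D / n := by rw [hdle]; linarith
    have hfac : (pnorm p W) ^ (γ - 1) ≤ (C₀ + D / n) ^ (γ - 1) :=
      Real.rpow_le_rpow (pnorm_nonneg _ _) hWle hγ1
    calc pnorm q (fun i => g (k + 1) i - g k i)
        ≤ γ * pnorm q (fun i => W i ^ (γ - 1) * e i) := by rw [← h2]; exact h1
      _ = γ * ((∑ i, (W i ^ (γ - 1) * e i) ^ q) ^ (1 / q)) := by rw [h3]
      _ ≤ γ * (((∑ i, W i ^ p) ^ (1 / p)) ^ (γ - 1) * (∑ i, e i ^ p) ^ (1 / p)) := by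
          apply mul_le_mul_of_nonneg_left _ (by linarith : (0:ℝ) ≤ γ)
          exact h4
      _ = γ * ((pnorm p W) ^ (γ - 1) * (D / n)) := by rw [hWsum, hesum]
      _ ≤ γ * ((C₀ + D / n) ^ (γ - 1) * (D / n)) := by
          apply mul_le_mul_of_nonneg_left _ (by linarith : (0:ℝ) ≤ γ)
          apply mul_le_mul_of_nonneg_right hfac (by positivity)
      _ = γ * (C₀ + D / n) ^ (γ - 1) * (D / n) := by ring
  calc pnorm q (fun i => ∑ k ∈ Finset.range n, (g (k + 1) i - g k i))
      ≤ ∑ k ∈ Finset.range n, pnorm q (fun i => g (k + 1) i - g k i) :=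
        pnorm_sum_le hq n _
    _ ≤ ∑ k ∈ Finset.range n, γ * (C₀ + D / n) ^ (γ - 1) * (D / n) :=
        Finset.sum_le_sum hmain
    _ = n * (γ * (C₀ + D / n) ^ (γ - 1) * (D / n)) := by
        rw [Finset.sum_const, Finset.card_range]; ring
    _ = γ * (C₀ + D / n) ^ (γ - 1) * D := by
        field_simp
lemma mazur_lower {m : ℕ} {p q : ℝ} (hq : 1 ≤ q) (hqp : q < p) (x y : Fin m → ℝ) :
    2 ^ (1 - p / q) * pnorm p (x - y) ^ (p / q) ≤
      pnorm q (fun i => Real.sign (x i) * |x i| ^ (p / q) -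
        Real.sign (y i) * |y i| ^ (p / q)) := by
  have hq0 : (0:ℝ) < q := by linarith
  have hp0 : (0:ℝ) < p := by linarith
  have hγ : 1 < p / q := (one_lt_div hq0).2 hqp
  set γ := p / q with hγdef
  have hc0 : (0:ℝ) < 2 ^ (1 - γ) := Real.rpow_pos_of_pos two_pos _
  set F : Fin m → ℝ := fun i =>
    Real.sign (x i) * |x i| ^ γ - Real.sign (y i) * |y i| ^ γ with hF
  have hptwise : ∀ i : Fin m, (2 ^ (1 - γ) * |x i - y i| ^ γ) ^ q ≤ |F i| ^ q := by
    intro i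
    apply Real.rpow_le_rpow _ (sp_lower hγ (x i) (y i)) hq0.le
    positivity
  have hterm : ∀ i : Fin m, (2 ^ (1 - γ) * |x i - y i| ^ γ) ^ q =
      (2 ^ (1 - γ)) ^ q * |x i - y i| ^ p := by
    intro i
    rw [Real.mul_rpow hc0.le (Real.rpow_nonneg (abs_nonneg _) _),
      ← Real.rpow_mul (abs_nonneg _)]
    congr 2
    rw [hγdef]
    field_simp
  have hsum : (2 ^ (1 - γ)) ^ q * ∑ i, |x i - y i| ^ p ≤ ∑ i, |F i| ^ q := by
    rw [Finset.mul_sum]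
    apply Finset.sum_le_sum
    intro i _
    rw [← hterm i]
    exact hptwise i
  set S := ∑ i, |x i - y i| ^ p with hS
  have hS0 : 0 ≤ S := Finset.sum_nonneg fun i _ => Real.rpow_nonneg (abs_nonneg _) _
  have hstep : ((2 ^ (1 - γ)) ^ q * S) ^ (1 / q) ≤ pnorm q F := by
    unfold pnorm
    exact Real.rpow_le_rpow (by positivity) hsum (by positivity)
  have hleft : ((2 ^ (1 - γ)) ^ q * S) ^ (1 / q) = 2 ^ (1 - γ) * pnorm p (x - y) ^ γ := by
    have h2q : ((2:ℝ) ^ (1 - γ)) ^ q = 2 ^ ((1 - γ) * q) := by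
      rw [← Real.rpow_mul (by norm_num : (0:ℝ) ≤ 2)]
    have hxy : pnorm p (x - y) = S ^ (1 / p) := by
      unfold pnorm
      simp only [Pi.sub_apply]
      rfl
    rw [h2q, Real.mul_rpow (by positivity) hS0, ← Real.rpow_mul (by norm_num : (0:ℝ) ≤ 2), hxy,
      ← Real.rpow_mul hS0]
    congr 1
    · congr 1
      field_simp
    · congr 1
      rw [hγdef]
      field_simp
  rw [← hleft]
  exact hstep

/-- Distortion bounds for the scaled Mazur map on the ball of `p`-radius `C₀`:
`(q/p) * (2C₀)^(1 − p/q) * ‖x − y‖_p^(p/q) ≤ ‖M(x) − M(y)‖_q ≤ ‖x − y‖_p`. -/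
theorem scaledMazur_bounds (p q C₀ : ℝ) (hq : 1 ≤ q) (hqp : q < p) (hC₀ : 0 < C₀)
    (m : ℕ) (hm : 1 ≤ m) (x y : Fin m → ℝ)
    (hx : pnorm p x ≤ C₀) (hy : pnorm p y ≤ C₀) :
    q / p * (2 * C₀) ^ (1 - p / q) * pnorm p (x - y) ^ (p / q)
        ≤ pnorm q (scaledMazur p q C₀ x - scaledMazur p q C₀ y) ∧
      pnorm q (scaledMazur p q C₀ x - scaledMazur p q C₀ y) ≤ pnorm p (x - y) := by
  have hq0 : (0:ℝ) < q := by linarith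
  have hp0 : (0:ℝ) < p := by linarith
  have hγ : 1 < p / q := (one_lt_div hq0).2 hqp
  set γ := p / q with hγdef
  have hCp : (0:ℝ) < C₀ ^ (γ - 1) := Real.rpow_pos_of_pos hC₀ _
  set c := q / (p * C₀ ^ (γ - 1)) with hc
  have hc0 : 0 ≤ c := by positivity
  set F : Fin m → ℝ := fun i =>
    Real.sign (x i) * |x i| ^ γ - Real.sign (y i) * |y i| ^ γ with hF
  have hdiff : scaledMazur p q C₀ x - scaledMazur p q C₀ y = fun i => c * F i := by
    funext i
    simp only [Pi.sub_apply, scaledMazur, hF, hc]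
    ring
  rw [hdiff, pnorm_const_mul hq0 hc0]
  set D := pnorm p (x - y) with hD
  have hD0 : 0 ≤ D := pnorm_nonneg _ _
  constructor
  · -- lower bound
    have hL : 2 ^ (1 - γ) * D ^ γ ≤ pnorm q F := mazur_lower hq hqp x y
    have h1 : c * (2 ^ (1 - γ) * D ^ γ) ≤ c * pnorm q F :=
      mul_le_mul_of_nonneg_left hL hc0
    have h2 : q / p * (2 * C₀) ^ (1 - γ) * D ^ γ = c * (2 ^ (1 - γ) * D ^ γ) := by
      rw [Real.mul_rpow (by norm_num : (0:ℝ) ≤ 2) hC₀.le,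
        show (1 - γ) = -(γ - 1) by ring, Real.rpow_neg hC₀.le, hc]
      ring
    rw [h2]
    exact h1
  · -- upper bound
    have hbound : ∀ n : ℕ, 1 ≤ n → pnorm q F ≤ γ * (C₀ + D / n) ^ (γ - 1) * D :=
      fun n hn => mazur_upper_n hq hqp hC₀ x y hx hy n hn
    have h0 : Tendsto (fun n : ℕ => D / (n : ℝ)) atTop (𝓝 0) :=
      Tendsto.div_atTop tendsto_const_nhds tendsto_natCast_atTop_atTop
    have h1 : Tendsto (fun n : ℕ => C₀ + D / (n : ℝ)) atTop (𝓝 C₀) := by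
      simpa using h0.const_add C₀
    have h2 : Tendsto (fun n : ℕ => (C₀ + D / (n : ℝ)) ^ (γ - 1)) atTop
        (𝓝 (C₀ ^ (γ - 1))) :=
      ((Real.continuousAt_rpow_const C₀ (γ - 1) (Or.inl hC₀.ne')).tendsto).comp h1
    have htend : Tendsto (fun n : ℕ => γ * (C₀ + D / (n : ℝ)) ^ (γ - 1) * D) atTop
        (𝓝 (γ * C₀ ^ (γ - 1) * D)) :=
      (tendsto_const_nhds.mul h2).mul tendsto_const_nhds
    have hlim : pnorm q F ≤ γ * C₀ ^ (γ - 1) * D :=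
      ge_of_tendsto htend (eventually_atTop.2 ⟨1, fun n hn => hbound n hn⟩)
    have h3 : c * pnorm q F ≤ c * (γ * C₀ ^ (γ - 1) * D) :=
      mul_le_mul_of_nonneg_left hlim hc0
    have h4 : c * (γ * C₀ ^ (γ - 1) * D) = D := by
      rw [hc, hγdef]
      field_simp
    rw [← h4]
    exact h3
end
end

section
/- Let 2 ≤ q < p ≤ 2q and n ≥ 1, and let M be an n-point subset of ℓ_p. Suppose β_0 ≥ 1 is such that M admits a (β_0, Δ')-Lipschitz decomposition for every Δ' > 0, and β_q ≥ 1 is such that every n-point subset of ℓ_q admits a (β_q, Δ')-Lipschitz decomposition for every Δ' > 0. Then for every integer k ≥ 0 and every Δ > 0, M admits a (16·β_q·β_0^{2^{−k}}, Δ)-Lipschitz decomposition. -/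
set_option linter.unusedSectionVars false
set_option maxHeartbeats 1000000

noncomputable section

open scoped NNReal ENNReal

/-- A `(β, Δ)`-Lipschitz decomposition of a (pseudo)metric space `α`: a probability
distribution over partitions of `α` (encoded as equivalence relations / setoids) such that
every cluster of every partition in the support has diameter at most `Δ` (i.e. any two
equivalent points are at distance at most `Δ`), and any two points `x, y` are separated
(put in different clusters) with probability at most `β * dist x y / Δ`. -/
def LipschitzDecomp (α : Type*) [PseudoMetricSpace α] (β Δ : ℝ) : Prop :=
  ∃ D : PMF (Setoid α),
    (∀ R ∈ D.support, ∀ x y : α, R.r x y → dist x y ≤ Δ) ∧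
    (∀ x y : α, D.toOuterMeasure {R | ¬ R.r x y} ≤ ENNReal.ofReal (β * dist x y / Δ))

namespace IterAux

/-- signed power function -/
def sgm (a s : ℝ) : ℝ := Real.sign s * |s| ^ a

lemma sgm_of_nonneg {a s : ℝ} (ha : 0 < a) (hs : 0 ≤ s) : sgm a s = s ^ a := by
  rcases eq_or_lt_of_le hs with h | h
  · simp [sgm, ← h, Real.zero_rpow ha.ne']
  · rw [sgm, Real.sign_of_pos h, abs_of_pos h, one_mul]

lemma sgm_neg' (a s : ℝ) : sgm a (-s) = - sgm a s := by
  simp [sgm, Real.sign_neg, abs_neg]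

lemma abs_sgm {a : ℝ} (ha : 0 < a) (s : ℝ) : |sgm a s| = |s| ^ a := by
  rcases le_total 0 s with hs | hs
  · rw [sgm_of_nonneg ha hs, abs_of_nonneg (Real.rpow_nonneg hs a), abs_of_nonneg hs]
  · have h : s = -(-s) := by ring
    rw [h, sgm_neg', abs_neg, sgm_of_nonneg ha (by linarith), abs_neg,
      abs_of_nonneg (Real.rpow_nonneg (by linarith) a), abs_of_nonneg (by linarith : (0:ℝ) ≤ -s)]

lemma real_superadd {x y c : ℝ} (hx : 0 ≤ x) (hy : 0 ≤ y) (hc : 1 ≤ c) :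
    x ^ c + y ^ c ≤ (x + y) ^ c := by
  have h := NNReal.add_rpow_le_rpow_add x.toNNReal y.toNNReal hc
  have h2 := NNReal.coe_le_coe.2 h
  rw [NNReal.coe_add, NNReal.coe_rpow, NNReal.coe_rpow, ← Real.toNNReal_add hx hy,
    NNReal.coe_rpow, Real.coe_toNNReal _ hx, Real.coe_toNNReal _ hy,
    Real.coe_toNNReal _ (by linarith)] at h2
  exact h2

lemma real_convex2 {x y c : ℝ} (hx : 0 ≤ x) (hy : 0 ≤ y) (hc : 1 ≤ c) :
    (x + y) ^ c ≤ 2 ^ (c - 1) * (x ^ c + y ^ c) := by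
  have h := NNReal.rpow_add_le_mul_rpow_add_rpow x.toNNReal y.toNNReal hc
  have h2 := NNReal.coe_le_coe.2 h
  rw [NNReal.coe_mul, NNReal.coe_add, NNReal.coe_rpow, NNReal.coe_rpow, NNReal.coe_rpow,
    ← Real.toNNReal_add hx hy, NNReal.coe_rpow, Real.coe_toNNReal _ hx, Real.coe_toNNReal _ hy,
    Real.coe_toNNReal _ (by linarith)] at h2
  simpa using h2

lemma upper_aux {a s t : ℝ} (h1 : 1 ≤ a) (h2 : a ≤ 2) (ht : 0 ≤ t) (hts : t ≤ s) :
    s ^ a - t ^ a ≤ (s - t) * (s ^ (a - 1) + t ^ (a - 1)) := by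
  have hs : 0 ≤ s := ht.trans hts
  have hcross : t * s ^ (a - 1) ≤ s * t ^ (a - 1) := by
    rcases eq_or_lt_of_le ht with h | h
    · rw [← h, zero_mul]
      exact mul_nonneg hs (Real.rpow_nonneg le_rfl _)
    · have hst : 1 ≤ s / t := (one_le_div h).2 hts
      have hmono := Real.rpow_le_rpow_of_exponent_le hst (by linarith : a - 1 ≤ 1)
      rw [Real.rpow_one, Real.div_rpow hs ht] at hmono
      have htp : (0:ℝ) < t ^ (a - 1) := Real.rpow_pos_of_pos h _
      rw [div_le_div_iff₀ htp h] at hmono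
      linarith
  have e : ∀ u : ℝ, 0 ≤ u → u ^ a = u * u ^ (a - 1) := by
    intro u hu
    rcases eq_or_lt_of_le hu with h | h
    · rw [← h, Real.zero_rpow (by linarith), zero_mul]
    · rw [show a = 1 + (a - 1) by ring, Real.rpow_add h, Real.rpow_one]
      ring_nf
  rw [e s hs, e t ht]
  nlinarith [hcross]

lemma sgm_upper {a : ℝ} (h1 : 1 ≤ a) (h2 : a ≤ 2) (s t : ℝ) :
    |sgm a s - sgm a t| ≤ |s - t| * (|s| ^ (a - 1) + |t| ^ (a - 1)) := by
  have ha0 : 0 < a := by linarith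
  have nn : ∀ u v : ℝ, 0 ≤ v → v ≤ u →
      |sgm a u - sgm a v| ≤ |u - v| * (|u| ^ (a - 1) + |v| ^ (a - 1)) := by
    intro u v hv hvu
    have hu : 0 ≤ u := hv.trans hvu
    rw [sgm_of_nonneg ha0 hu, sgm_of_nonneg ha0 hv,
      abs_of_nonneg (sub_nonneg.2 (Real.rpow_le_rpow hv hvu ha0.le)),
      abs_of_nonneg (sub_nonneg.2 hvu), abs_of_nonneg hu, abs_of_nonneg hv]
    exact upper_aux h1 h2 hv hvu
  have nonneg_case : ∀ u v : ℝ, 0 ≤ u → 0 ≤ v →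
      |sgm a u - sgm a v| ≤ |u - v| * (|u| ^ (a - 1) + |v| ^ (a - 1)) := by
    intro u v hu hv
    rcases le_total v u with h | h
    · exact nn u v hv h
    · rw [abs_sub_comm (sgm a u), abs_sub_comm u, add_comm (|u| ^ (a-1))]
      exact nn v u hu h
  have mixed : ∀ u v : ℝ, 0 ≤ u → v ≤ 0 →
      |sgm a u - sgm a v| ≤ |u - v| * (|u| ^ (a - 1) + |v| ^ (a - 1)) := by
    intro u v hu hv
    have hw0 : 0 ≤ -v := by linarith
    have hsv : sgm a v = -((-v) ^ a) := by
      rw [show v = -(-v) by ring, sgm_neg', sgm_of_nonneg ha0 hw0]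
      ring_nf
    rw [hsv, sgm_of_nonneg ha0 hu, sub_neg_eq_add,
      abs_of_nonneg (add_nonneg (Real.rpow_nonneg hu a) (Real.rpow_nonneg hw0 a)),
      abs_of_nonneg (by linarith : (0:ℝ) ≤ u - v), abs_of_nonneg hu, abs_of_nonpos hv]
    have eu : u ^ a = u * u ^ (a - 1) := by
      rcases eq_or_lt_of_le hu with h | h
      · rw [← h, Real.zero_rpow (by linarith), zero_mul]
      · rw [show a = 1 + (a - 1) by ring, Real.rpow_add h, Real.rpow_one]; ring_nf
    have ev : (-v) ^ a = (-v) * (-v) ^ (a - 1) := by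
      rcases eq_or_lt_of_le hw0 with h | h
      · rw [← h, Real.zero_rpow (by linarith), zero_mul]
      · rw [show a = 1 + (a - 1) by ring, Real.rpow_add h, Real.rpow_one]; ring_nf
    rw [eu, ev]
    have c1 : 0 ≤ u * (-v) ^ (a - 1) := mul_nonneg hu (Real.rpow_nonneg hw0 _)
    have c2 : 0 ≤ (-v) * u ^ (a - 1) := mul_nonneg hw0 (Real.rpow_nonneg hu _)
    nlinarith
  rcases le_total 0 s with hs | hs <;> rcases le_total 0 t with ht | ht
  · exact nonneg_case s t hs ht
  · exact mixed s t hs ht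
  · rw [abs_sub_comm (sgm a s), abs_sub_comm s, add_comm (|s| ^ (a-1))]
    exact mixed t s ht hs
  · have h := nonneg_case (-s) (-t) (by linarith) (by linarith)
    rw [sgm_neg', sgm_neg', abs_neg, abs_neg] at h
    calc |sgm a s - sgm a t| = |-sgm a s - -sgm a t| := by rw [abs_sub_comm]; congr 1; ring
    _ ≤ |(-s) - (-t)| * (|s| ^ (a - 1) + |t| ^ (a - 1)) := h
    _ = |s - t| * (|s| ^ (a - 1) + |t| ^ (a - 1)) := by rw [abs_sub_comm]; congr 1; congr 1; ring

lemma sgm_lower {a : ℝ} (h1 : 1 ≤ a) (s t : ℝ) :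
    |s - t| ^ a ≤ 2 ^ (a - 1) * |sgm a s - sgm a t| := by
  have ha0 : 0 < a := by linarith
  have h2a : (1:ℝ) ≤ 2 ^ (a - 1) := Real.one_le_rpow one_le_two (by linarith)
  have nn : ∀ u v : ℝ, 0 ≤ v → v ≤ u →
      |u - v| ^ a ≤ 2 ^ (a - 1) * |sgm a u - sgm a v| := by
    intro u v hv hvu
    have hu : 0 ≤ u := hv.trans hvu
    rw [sgm_of_nonneg ha0 hu, sgm_of_nonneg ha0 hv,
      abs_of_nonneg (sub_nonneg.2 (Real.rpow_le_rpow hv hvu ha0.le)),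
      abs_of_nonneg (sub_nonneg.2 hvu)]
    have hsup := real_superadd (x := u - v) (y := v) (by linarith) hv h1
    rw [sub_add_cancel] at hsup
    nlinarith [Real.rpow_nonneg (show (0:ℝ) ≤ u - v by linarith) a]
  have nonneg_case : ∀ u v : ℝ, 0 ≤ u → 0 ≤ v →
      |u - v| ^ a ≤ 2 ^ (a - 1) * |sgm a u - sgm a v| := by
    intro u v hu hv
    rcases le_total v u with h | h
    · exact nn u v hv h
    · rw [abs_sub_comm u, abs_sub_comm (sgm a u)]; exact nn v u hu h
  have mixed : ∀ u v : ℝ, 0 ≤ u → v ≤ 0 →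
      |u - v| ^ a ≤ 2 ^ (a - 1) * |sgm a u - sgm a v| := by
    intro u v hu hv
    have hw0 : 0 ≤ -v := by linarith
    have hsv : sgm a v = -((-v) ^ a) := by
      rw [show v = -(-v) by ring, sgm_neg', sgm_of_nonneg ha0 hw0]; ring_nf
    rw [hsv, sgm_of_nonneg ha0 hu, sub_neg_eq_add,
      abs_of_nonneg (add_nonneg (Real.rpow_nonneg hu a) (Real.rpow_nonneg hw0 a)),
      abs_of_nonneg (by linarith : (0:ℝ) ≤ u - v), show u - v = u + -v by ring]
    exact real_convex2 hu hw0 h1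
  rcases le_total 0 s with hs | hs <;> rcases le_total 0 t with ht | ht
  · exact nonneg_case s t hs ht
  · exact mixed s t hs ht
  · rw [abs_sub_comm s, abs_sub_comm (sgm a s)]; exact mixed t s ht hs
  · have h := nonneg_case (-s) (-t) (by linarith) (by linarith)
    rw [sgm_neg', sgm_neg'] at h
    calc |s - t| ^ a = |(-s) - (-t)| ^ a := by rw [abs_sub_comm]; congr 2; ring
    _ ≤ 2 ^ (a - 1) * |(-sgm a s) - (-sgm a t)| := h
    _ = 2 ^ (a - 1) * |sgm a s - sgm a t| := by rw [abs_sub_comm (sgm a s)]; congr 1; congr 1; ring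



lemma sgm_inj {a : ℝ} (h1 : 1 ≤ a) {s t : ℝ} (h : sgm a s = sgm a t) : s = t := by
  have hl := sgm_lower h1 s t
  rw [h, sub_self, abs_zero, mul_zero] at hl
  have h0 : |s - t| ^ a = 0 :=
    le_antisymm hl (Real.rpow_nonneg (abs_nonneg _) _)
  by_contra hne
  have : (0:ℝ) < |s - t| := abs_pos.2 (sub_ne_zero.2 hne)
  exact absurd h0 (Real.rpow_pos_of_pos this a).ne'

section MazurSec

variable {p q : ℝ}

/-- cancellation of a fixed positive rpow exponent -/
lemma rpow_cancel_le {u v c : ℝ} (hu : 0 ≤ u) (hv : 0 ≤ v) (hc : 0 < c)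
    (h : u ^ c ≤ v ^ c) : u ≤ v :=
  (Real.rpow_le_rpow_iff hu hv hc).1 h

variable [Fact (1 ≤ ENNReal.ofReal p)] [Fact (1 ≤ ENNReal.ofReal q)]

lemma hp0' (hq0 : 0 < q) (hqp : q < p) : 0 < p := hq0.trans hqp
lemma hP' (hq0 : 0 < q) (hqp : q < p) : (ENNReal.ofReal p).toReal = p :=
  ENNReal.toReal_ofReal (hp0' hq0 hqp).le
lemma hQ' (hq0 : 0 < q) : (ENNReal.ofReal q).toReal = q := ENNReal.toReal_ofReal hq0.le
lemma ha1' (hq0 : 0 < q) (hqp : q < p) : 1 < p / q := (one_lt_div hq0).2 hqp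
lemma haq' (hq0 : 0 < q) : p / q * q = p := div_mul_cancel₀ p hq0.ne'

lemma mazur_memℓp (hq0 : 0 < q) (hqp : q < p) (z : lp (fun _ : ℕ => ℝ) (ENNReal.ofReal p)) :
    Memℓp (fun i => sgm (p / q) (z i)) (ENNReal.ofReal q) := by
  have ha0 : 0 < p / q := div_pos (hq0.trans hqp) hq0
  apply memℓp_gen
  have : (fun i => ‖sgm (p/q) (z i)‖ ^ (ENNReal.ofReal q).toReal)
      = fun i => ‖z i‖ ^ (ENNReal.ofReal p).toReal := by
    funext i
    rw [hQ' hq0, hP' hq0 hqp, Real.norm_eq_abs, Real.norm_eq_abs, abs_sgm ha0,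
      ← Real.rpow_mul (abs_nonneg _), haq' hq0]
  rw [this, ← memℓp_gen_iff (by rw [hP' hq0 hqp]; exact hp0' hq0 hqp)]
  exact lp.memℓp z

/-- The Mazur map from `ℓ_p` to `ℓ_q`. -/
def mazur (hq0 : 0 < q) (hqp : q < p) (z : lp (fun _ : ℕ => ℝ) (ENNReal.ofReal p)) : lp (fun _ : ℕ => ℝ) (ENNReal.ofReal q) :=
  ⟨fun i => sgm (p / q) (z i), mazur_memℓp hq0 hqp z⟩

lemma mazur_apply (hq0 : 0 < q) (hqp : q < p) (z : lp (fun _ : ℕ => ℝ) (ENNReal.ofReal p)) (i : ℕ) :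
    mazur hq0 hqp z i = sgm (p / q) (z i) := rfl

/-- The norm identity for the Mazur map. -/
lemma mazur_norm (hq0 : 0 < q) (hqp : q < p) (z : lp (fun _ : ℕ => ℝ) (ENNReal.ofReal p)) :
    ‖mazur hq0 hqp z‖ = ‖z‖ ^ (p / q) := by
  have hp0 := hp0' hq0 hqp
  have ha0 : 0 < p / q := by positivity
  have hnorm : ‖mazur hq0 hqp z‖ ^ q = ‖z‖ ^ p := by
    have A := lp.norm_rpow_eq_tsum (by rw [hQ' hq0]; exact hq0) (mazur hq0 hqp z)
    rw [hQ' hq0] at A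
    have B := lp.norm_rpow_eq_tsum (by rw [hP' hq0 hqp]; exact hp0) z
    rw [hP' (q := q) hq0 hqp] at B
    rw [A, B]
    apply tsum_congr; intro i
    rw [mazur_apply, Real.norm_eq_abs, Real.norm_eq_abs, abs_sgm ha0,
      ← Real.rpow_mul (abs_nonneg _), haq' hq0]
  have h1 : ‖mazur hq0 hqp z‖ = (‖mazur hq0 hqp z‖ ^ q) ^ q⁻¹ :=
    (Real.rpow_rpow_inv (norm_nonneg _) hq0.ne').symm
  rw [h1, hnorm, ← Real.rpow_mul (norm_nonneg _), div_eq_mul_inv]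

/-- Lower Mazur bound. -/
lemma mazur_lower (hq0 : 0 < q) (hqp : q < p) (x y : lp (fun _ : ℕ => ℝ) (ENNReal.ofReal p)) :
    ‖x - y‖ ^ (p / q) ≤ 2 ^ (p / q - 1) * ‖mazur hq0 hqp x - mazur hq0 hqp y‖ := by
  have hp0 := hp0' hq0 hqp
  have ha1 : 1 ≤ p / q := (ha1' hq0 hqp).le
  have ha0 : 0 < p / q := by positivity
  set a := p / q with hadef
  set g := mazur hq0 hqp x - mazur hq0 hqp y with hgdef
  have hPt : 0 < (ENNReal.ofReal p).toReal := by rw [hP' hq0 hqp]; exact hp0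
  have hQt : 0 < (ENNReal.ofReal q).toReal := by rw [hQ' hq0]; exact hq0
  have hsum1 : Summable fun i => ‖(x - y) i‖ ^ p := by
    have := (memℓp_gen_iff hPt).1 (lp.memℓp (x - y))
    rwa [hP' hq0 hqp] at this
  have hsum2 : Summable fun i => ‖g i‖ ^ q := by
    have := (memℓp_gen_iff hQt).1 (lp.memℓp g)
    rwa [hQ' hq0] at this
  have hpt : ∀ i : ℕ, ‖(x - y) i‖ ^ p ≤ (2 ^ (a - 1)) ^ q * ‖g i‖ ^ q := by
    intro i
    have e1 : (x - y) i = x i - y i := by rw [lp.coeFn_sub]; rfl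
    have e2 : g i = sgm a (x i) - sgm a (y i) := by
      rw [hgdef, lp.coeFn_sub]; rfl
    rw [e1, e2, Real.norm_eq_abs, Real.norm_eq_abs]
    have key := sgm_lower ha1 (x i) (y i)
    have hr : |x i - y i| ^ p = (|x i - y i| ^ a) ^ q := by
      rw [← Real.rpow_mul (abs_nonneg _), haq' hq0]
    rw [hr]
    calc (|x i - y i| ^ a) ^ q ≤ (2 ^ (a - 1) * |sgm a (x i) - sgm a (y i)|) ^ q :=
          Real.rpow_le_rpow (Real.rpow_nonneg (abs_nonneg _) _) key hq0.le
    _ = (2 ^ (a - 1)) ^ q * |sgm a (x i) - sgm a (y i)| ^ q :=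
          Real.mul_rpow (Real.rpow_nonneg (by norm_num) _) (abs_nonneg _)
  have hchain : ‖x - y‖ ^ p ≤ (2 ^ (a - 1)) ^ q * ‖g‖ ^ q := by
    have A := lp.norm_rpow_eq_tsum hPt (x - y)
    rw [hP' (q := q) hq0 hqp] at A
    have B := lp.norm_rpow_eq_tsum hQt g
    rw [hQ' hq0] at B
    rw [A, B, ← tsum_mul_left]
    exact Summable.tsum_le_tsum hpt hsum1 (hsum2.mul_left _)
  have h1 : ‖x - y‖ ^ p = (‖x - y‖ ^ a) ^ q := by
    rw [← Real.rpow_mul (norm_nonneg _), haq' hq0]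
  have h2 : (2 ^ (a - 1)) ^ q * ‖g‖ ^ q = (2 ^ (a - 1) * ‖g‖) ^ q := by
    rw [Real.mul_rpow (Real.rpow_nonneg (by norm_num) _) (norm_nonneg _)]
  rw [h1, h2] at hchain
  exact rpow_cancel_le (Real.rpow_nonneg (norm_nonneg _) _)
    (mul_nonneg (Real.rpow_nonneg (by norm_num) _) (norm_nonneg _)) hq0 hchain


lemma rpow_cancel_eq {u v c : ℝ} (hu : 0 ≤ u) (hv : 0 ≤ v) (hc : 0 < c)
    (h : u ^ c = v ^ c) : u = v :=
  le_antisymm (rpow_cancel_le hu hv hc h.le) (rpow_cancel_le hv hu hc h.ge)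

/-- Hölder cross term. -/
lemma cross_term (hq0 : 0 < q) (hqp : q < p) (f v : lp (fun _ : ℕ => ℝ) (ENNReal.ofReal p)) :
    ∃ h : Memℓp (fun i => |f i| * |v i| ^ (p / q - 1)) (ENNReal.ofReal q),
      ‖(⟨_, h⟩ : lp (fun _ : ℕ => ℝ) (ENNReal.ofReal q))‖ ≤ ‖f‖ * ‖v‖ ^ (p / q - 1) := by
  have hp0 := hp0' hq0 hqp
  have ha1 : 1 < p / q := ha1' hq0 hqp
  set a := p / q with hadef
  have hpq0 : 0 < p - q := by linarith
  set a' := p / (p - q) with ha'def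
  have ha'1 : 1 < a' := (one_lt_div hpq0).2 (by linarith)
  have ha0 : 0 < a := by linarith
  have ha'0 : 0 < a' := by linarith
  haveI F1 : Fact (1 ≤ ENNReal.ofReal a) := ⟨ENNReal.one_le_ofReal.2 ha1.le⟩
  haveI F2 : Fact (1 ≤ ENNReal.ofReal a') := ⟨ENNReal.one_le_ofReal.2 ha'1.le⟩
  have hAt : (ENNReal.ofReal a).toReal = a := ENNReal.toReal_ofReal ha0.le
  have hA't : (ENNReal.ofReal a').toReal = a' := ENNReal.toReal_ofReal ha'0.le
  have hPt : 0 < (ENNReal.ofReal p).toReal := by rw [hP' (q := q) hq0 hqp]; exact hp0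
  have hQt : 0 < (ENNReal.ofReal q).toReal := by rw [hQ' hq0]; exact hq0
  have hsump : Summable fun i => ‖f i‖ ^ p := by
    have := (memℓp_gen_iff hPt).1 (lp.memℓp f); rwa [hP' (q := q) hq0 hqp] at this
  have hsumv : Summable fun i => ‖v i‖ ^ p := by
    have := (memℓp_gen_iff hPt).1 (lp.memℓp v); rwa [hP' (q := q) hq0 hqp] at this
  have hFmem : Memℓp (fun i => |f i| ^ q) (ENNReal.ofReal a) := by
    apply memℓp_gen
    have he : (fun i => ‖|f i| ^ q‖ ^ (ENNReal.ofReal a).toReal) = fun i => ‖f i‖ ^ p := by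
      funext i
      rw [hAt, Real.norm_eq_abs, abs_of_nonneg (Real.rpow_nonneg (abs_nonneg _) _),
        ← Real.rpow_mul (abs_nonneg _), Real.norm_eq_abs]
      congr 1
      rw [hadef]; field_simp
    rw [he]; exact hsump
  have hGmem : Memℓp (fun i => |v i| ^ (p - q)) (ENNReal.ofReal a') := by
    apply memℓp_gen
    have he : (fun i => ‖|v i| ^ (p - q)‖ ^ (ENNReal.ofReal a').toReal) = fun i => ‖v i‖ ^ p := by
      funext i
      rw [hA't, Real.norm_eq_abs, abs_of_nonneg (Real.rpow_nonneg (abs_nonneg _) _),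
        ← Real.rpow_mul (abs_nonneg _), Real.norm_eq_abs]
      congr 1
      rw [ha'def]; field_simp
    rw [he]; exact hsumv
  set F : lp (fun _ : ℕ => ℝ) (ENNReal.ofReal a) := ⟨_, hFmem⟩ with hFdef
  set G : lp (fun _ : ℕ => ℝ) (ENNReal.ofReal a') := ⟨_, hGmem⟩ with hGdef
  have hconj : ((ENNReal.ofReal a).toReal).HolderConjugate ((ENNReal.ofReal a').toReal) := by
    rw [hAt, hA't]
    refine Real.holderConjugate_iff.2 ⟨ha1, ?_⟩
    rw [hadef, ha'def, inv_div, inv_div, ← add_div,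
      show q + (p - q) = p by ring, div_self hp0.ne']
  obtain ⟨hsummul, hbound⟩ := lp.tsum_mul_le_mul_norm hconj F G
  have hFi : ∀ i : ℕ, ‖F i‖ = |f i| ^ q := by
    intro i
    exact (Real.norm_eq_abs _).trans (abs_of_nonneg (Real.rpow_nonneg (abs_nonneg _) _))
  have hGi : ∀ i : ℕ, ‖G i‖ = |v i| ^ (p - q) := by
    intro i
    exact (Real.norm_eq_abs _).trans (abs_of_nonneg (Real.rpow_nonneg (abs_nonneg _) _))
  have hTq : ∀ i : ℕ, ‖|f i| * |v i| ^ (a - 1)‖ ^ q = ‖F i‖ * ‖G i‖ := by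
    intro i
    rw [hFi, hGi, Real.norm_eq_abs,
      abs_of_nonneg (mul_nonneg (abs_nonneg _) (Real.rpow_nonneg (abs_nonneg _) _)),
      Real.mul_rpow (abs_nonneg _) (Real.rpow_nonneg (abs_nonneg _) _),
      ← Real.rpow_mul (abs_nonneg _)]
    congr 2
    rw [hadef]; field_simp
  have hTmem : Memℓp (fun i => |f i| * |v i| ^ (a - 1)) (ENNReal.ofReal q) := by
    apply memℓp_gen
    have he : (fun i => ‖|f i| * |v i| ^ (a - 1)‖ ^ (ENNReal.ofReal q).toReal)
        = fun i => ‖F i‖ * ‖G i‖ := by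
      funext i; rw [hQ' hq0]; exact hTq i
    rw [he]; exact hsummul
  refine ⟨hTmem, ?_⟩
  set T : lp (fun _ : ℕ => ℝ) (ENNReal.ofReal q) := ⟨_, hTmem⟩ with hTdef
  -- norms of F and G
  have hFnorm : ‖F‖ = ‖f‖ ^ q := by
    refine rpow_cancel_eq (norm_nonneg _) (Real.rpow_nonneg (norm_nonneg _) _) ha0 ?_
    have A := lp.norm_rpow_eq_tsum (by rw [hAt]; exact ha0) F
    rw [hAt] at A
    have B := lp.norm_rpow_eq_tsum hPt f
    rw [hP' (q := q) hq0 hqp] at B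
    rw [A, ← Real.rpow_mul (norm_nonneg _), show q * a = p by rw [hadef]; field_simp, B]
    apply tsum_congr; intro i
    rw [hFi, ← Real.rpow_mul (abs_nonneg _), show q * a = p by rw [hadef]; field_simp, Real.norm_eq_abs]
  have hGnorm : ‖G‖ = ‖v‖ ^ (p - q) := by
    refine rpow_cancel_eq (norm_nonneg _) (Real.rpow_nonneg (norm_nonneg _) _) ha'0 ?_
    have A := lp.norm_rpow_eq_tsum (by rw [hA't]; exact ha'0) G
    rw [hA't] at A
    have B := lp.norm_rpow_eq_tsum hPt v
    rw [hP' (q := q) hq0 hqp] at B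
    rw [A, ← Real.rpow_mul (norm_nonneg _),
      show (p - q) * a' = p by rw [ha'def]; field_simp, B]
    apply tsum_congr; intro i
    rw [hGi, ← Real.rpow_mul (abs_nonneg _), show (p - q) * a' = p by rw [ha'def]; field_simp,
      Real.norm_eq_abs]
  -- conclude
  have hTnorm_pow : ‖T‖ ^ q ≤ (‖f‖ * ‖v‖ ^ (a - 1)) ^ q := by
    have A := lp.norm_rpow_eq_tsum hQt T
    rw [hQ' hq0] at A
    have A' : ‖T‖ ^ q = ∑' i, ‖F i‖ * ‖G i‖ := by
      rw [A]; exact tsum_congr hTq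
    rw [A', Real.mul_rpow (norm_nonneg _) (Real.rpow_nonneg (norm_nonneg _) _),
      ← Real.rpow_mul (norm_nonneg _), show (a - 1) * q = p - q by rw [hadef]; field_simp,
      ← hFnorm, ← hGnorm]
    exact hbound
  exact rpow_cancel_le (norm_nonneg _)
    (mul_nonneg (norm_nonneg _) (Real.rpow_nonneg (norm_nonneg _) _)) hq0 hTnorm_pow

/-- Upper Mazur bound. -/
lemma mazur_upper (hq0 : 0 < q) (hqp : q < p) (hp2 : p ≤ 2 * q)
    (x y : lp (fun _ : ℕ => ℝ) (ENNReal.ofReal p)) :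
    ‖mazur hq0 hqp x - mazur hq0 hqp y‖
      ≤ (‖x‖ ^ (p / q - 1) + ‖y‖ ^ (p / q - 1)) * ‖x - y‖ := by
  have hp0 := hp0' hq0 hqp
  have ha1 : 1 < p / q := ha1' hq0 hqp
  have ha2 : p / q ≤ 2 := (div_le_iff₀ hq0).2 (by linarith)
  set a := p / q with hadef
  have hQt : 0 < (ENNReal.ofReal q).toReal := by rw [hQ' hq0]; exact hq0
  obtain ⟨h₁, hb₁⟩ := cross_term hq0 hqp (x - y) x
  obtain ⟨h₂, hb₂⟩ := cross_term hq0 hqp (x - y) y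
  set T₁ : lp (fun _ : ℕ => ℝ) (ENNReal.ofReal q) := ⟨_, h₁⟩ with hT₁
  set T₂ : lp (fun _ : ℕ => ℝ) (ENNReal.ofReal q) := ⟨_, h₂⟩ with hT₂
  set g := mazur hq0 hqp x - mazur hq0 hqp y with hgdef
  have hpt : ∀ i : ℕ, ‖g i‖ ≤ ‖(T₁ + T₂) i‖ := by
    intro i
    have e2 : g i = sgm a (x i) - sgm a (y i) := by rw [hgdef, lp.coeFn_sub]; rfl
    have e3 : (T₁ + T₂) i = |(x - y) i| * |x i| ^ (a - 1) + |(x - y) i| * |y i| ^ (a - 1) := by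
      rw [lp.coeFn_add]; rfl
    have e4 : (x - y) i = x i - y i := by rw [lp.coeFn_sub]; rfl
    rw [e2, e3, e4, Real.norm_eq_abs, Real.norm_eq_abs]
    have key := sgm_upper ha1.le ha2 (x i) (y i)
    have : |x i - y i| * (|x i| ^ (a - 1) + |y i| ^ (a - 1))
        = |x i - y i| * |x i| ^ (a - 1) + |x i - y i| * |y i| ^ (a - 1) := by ring
    rw [this] at key
    exact key.trans (le_abs_self _)
  have hgle : ‖g‖ ≤ ‖T₁ + T₂‖ := by
    have hsums : Summable fun i => ‖g i‖ ^ q := by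
      have := (memℓp_gen_iff hQt).1 (lp.memℓp g); rwa [hQ' hq0] at this
    have hsums2 : Summable fun i => ‖(T₁ + T₂) i‖ ^ q := by
      have := (memℓp_gen_iff hQt).1 (lp.memℓp (T₁ + T₂)); rwa [hQ' hq0] at this
    refine rpow_cancel_le (norm_nonneg _) (norm_nonneg _) hq0 ?_
    have A := lp.norm_rpow_eq_tsum hQt g
    rw [hQ' hq0] at A
    have B := lp.norm_rpow_eq_tsum hQt (T₁ + T₂)
    rw [hQ' hq0] at B
    rw [A, B]
    refine Summable.tsum_le_tsum (fun i => ?_) hsums hsums2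
    exact Real.rpow_le_rpow (norm_nonneg _) (hpt i) hq0.le
  calc ‖g‖ ≤ ‖T₁ + T₂‖ := hgle
  _ ≤ ‖T₁‖ + ‖T₂‖ := norm_add_le _ _
  _ ≤ ‖x - y‖ * ‖x‖ ^ (a - 1) + ‖x - y‖ * ‖y‖ ^ (a - 1) := add_le_add hb₁ hb₂
  _ = (‖x‖ ^ (a - 1) + ‖y‖ ^ (a - 1)) * ‖x - y‖ := by ring

end MazurSec

end IterAux


namespace IterAux

/-- Combined setoid: `R₁` intersected with the pullback of `R₂` under `f`. -/
def pullbackAnd {α β : Type*} (R₁ : Setoid α) (f : α → β) (R₂ : Setoid β) : Setoid α :=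
  ⟨fun x y => R₁.r x y ∧ R₂.r (f x) (f y),
   ⟨fun x => ⟨R₁.iseqv.refl x, R₂.iseqv.refl (f x)⟩,
    fun h => ⟨R₁.iseqv.symm h.1, R₂.iseqv.symm h.2⟩,
    fun h h' => ⟨R₁.iseqv.trans h.1 h'.1, R₂.iseqv.trans h.2 h'.2⟩⟩⟩

lemma pullbackAnd_r {α β : Type*} (R₁ : Setoid α) (f : α → β) (R₂ : Setoid β) (x y : α) :
    (pullbackAnd R₁ f R₂).r x y ↔ R₁.r x y ∧ R₂.r (f x) (f y) := Iff.rfl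

lemma lipschitzDecomp_mono {α : Type*} [PseudoMetricSpace α] {β β' Δ : ℝ}
    (hΔ : 0 < Δ) (hβ : β ≤ β') (h : LipschitzDecomp α β Δ) : LipschitzDecomp α β' Δ := by
  obtain ⟨D, h1, h2⟩ := h
  refine ⟨D, h1, fun x y => (h2 x y).trans (ENNReal.ofReal_le_ofReal ?_)⟩
  have := dist_nonneg (x := x) (y := y)
  gcongr

/-- The final numeric inequality. -/
lemma final_ineq {a βq β t Δ Δ₁ Δ₂ d : ℝ}
    (ha1 : 1 < a) (ha2 : a ≤ 2) (hβq : 1 ≤ βq) (hββq : βq ≤ β) (hΔ : 0 < Δ) (hd : 0 ≤ d)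
    (ht : t = Real.sqrt β / (2 * Real.sqrt βq)) (hΔ₁ : Δ₁ = t * Δ)
    (hΔ₂ : Δ₂ = 2 ^ (1 - a) * Δ ^ a) :
    β * d / Δ₁ + βq * (2 * Δ₁ ^ (a - 1) * d) / Δ₂ ≤ 4 * Real.sqrt (βq * β) * d / Δ := by
  have hβq0 : 0 < βq := by linarith
  have hβ0 : 0 < β := by linarith
  set s1 := Real.sqrt β with hs1def
  set s2 := Real.sqrt βq with hs2def
  have hs10 : 0 < s1 := Real.sqrt_pos.2 hβ0
  have hs20 : 0 < s2 := Real.sqrt_pos.2 hβq0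
  have hs1 : s1 * s1 = β := Real.mul_self_sqrt hβ0.le
  have hs2 : s2 * s2 = βq := Real.mul_self_sqrt hβq0.le
  have hs12 : Real.sqrt (βq * β) = s2 * s1 := Real.sqrt_mul hβq0.le β
  have hs21 : s2 ≤ s1 := Real.sqrt_le_sqrt hββq
  have ht0 : 0 < t := by rw [ht]; positivity
  set X := (2:ℝ) ^ (a - 1) with hXdef
  set Y := t ^ (a - 1) with hYdef
  set A := Δ ^ (a - 1) with hAdef
  have hX0 : 0 < X := Real.rpow_pos_of_pos (by norm_num) _
  have hY0 : 0 < Y := Real.rpow_pos_of_pos ht0 _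
  have hA0 : 0 < A := Real.rpow_pos_of_pos hΔ _
  have h2t1 : 1 ≤ 2 * t := by
    rw [ht]
    have he : 2 * (s1 / (2 * s2)) = s1 / s2 := by field_simp
    rw [he, le_div_iff₀ hs20]
    linarith
  have hXY2 : X * Y ≤ 2 * t := by
    have h1 : (2 * t) ^ (a - 1) = X * Y := Real.mul_rpow (by norm_num) ht0.le
    have h2 : (2 * t) ^ (a - 1) ≤ (2 * t) ^ (1:ℝ) :=
      Real.rpow_le_rpow_of_exponent_le h2t1 (by linarith)
    rw [Real.rpow_one, h1] at h2
    linarith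
  have hDa : Δ ^ a = A * Δ := by
    have h := Real.rpow_add hΔ (a - 1) 1
    rw [Real.rpow_one, show a - 1 + 1 = a by ring] at h
    rw [hAdef]
    exact h
  have hΔ₂e : Δ₂ = X⁻¹ * (A * Δ) := by
    rw [hΔ₂, hDa, hXdef, show (1 - a) = -(a - 1) by ring, Real.rpow_neg (by norm_num)]
  have hXYe : Δ₁ ^ (a - 1) = Y * A := by
    rw [hΔ₁, Real.mul_rpow ht0.le hΔ.le]
  have T1e : β * d / Δ₁ = (β / t) * (d / Δ) := by rw [hΔ₁]; ring
  have T2e : βq * (2 * Δ₁ ^ (a - 1) * d) / Δ₂ = (2 * βq * (X * Y)) * (d / Δ) := by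
    rw [hXYe, hΔ₂e]
    field_simp
  have e_t : β / t = 2 * (s2 * s1) := by
    rw [ht, div_div_eq_mul_div, ← hs1]
    field_simp
  have e_2 : 2 * βq * (2 * t) = 2 * (s2 * s1) := by
    rw [ht, ← hs2]
    field_simp
  have hcoef : β / t + 2 * βq * (X * Y) ≤ 4 * (s2 * s1) := by
    have : 2 * βq * (X * Y) ≤ 2 * βq * (2 * t) := by
      have h2βq : (0:ℝ) ≤ 2 * βq := by linarith
      exact mul_le_mul_of_nonneg_left hXY2 h2βq
    rw [e_t]
    rw [e_2] at this
    linarith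
  have hRHS : 4 * Real.sqrt (βq * β) * d / Δ = (4 * (s2 * s1)) * (d / Δ) := by
    rw [hs12]; ring
  rw [T1e, T2e, hRHS, ← add_mul]
  exact mul_le_mul_of_nonneg_right hcoef (by positivity)

/-- One step of the iteration. -/
theorem step_lemma (p q : ℝ) (hq : 2 ≤ q) (hqp : q < p) (hp2q : p ≤ 2 * q)
    [Fact (1 ≤ ENNReal.ofReal p)] [Fact (1 ≤ ENNReal.ofReal q)]
    (n : ℕ)
    (M : Set (lp (fun _ : ℕ => ℝ) (ENNReal.ofReal p))) (hMfin : M.Finite)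
    (hMcard : M.ncard = n)
    (βq : ℝ) (hβq : 1 ≤ βq)
    (hq' : ∀ (N : Set (lp (fun _ : ℕ => ℝ) (ENNReal.ofReal q))),
        N.Finite → N.ncard = n → ∀ Δ' : ℝ, 0 < Δ' → LipschitzDecomp N βq Δ')
    (β : ℝ) (hββq : βq ≤ β)
    (hM₁ : ∀ Δ' : ℝ, 0 < Δ' → LipschitzDecomp M β Δ')
    (Δ : ℝ) (hΔ : 0 < Δ) :
    LipschitzDecomp M (4 * Real.sqrt (βq * β)) Δ := by
  classical
  have hq0 : 0 < q := by linarith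
  have hp0 : 0 < p := by linarith
  have ha1 : 1 < p / q := (one_lt_div hq0).2 hqp
  have ha2 : p / q ≤ 2 := (div_le_iff₀ hq0).2 (by linarith)
  set a := p / q with hadef
  have ha0 : 0 < a := by linarith
  haveI : Finite ↥M := hMfin.to_subtype
  obtain ⟨ι, hι⟩ := Countable.exists_injective_nat ↥M
  set t := Real.sqrt β / (2 * Real.sqrt βq) with htdef
  have hβ0 : 0 < β := by linarith
  have hβq0 : 0 < βq := by linarith
  have ht0 : 0 < t := by rw [htdef]; positivity
  set Δ₁ := t * Δ with hΔ₁def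
  have hΔ₁ : 0 < Δ₁ := by positivity
  set Δ₂ := (2:ℝ) ^ (1 - a) * Δ ^ a with hΔ₂def
  have hΔ₂ : 0 < Δ₂ := by
    have := Real.rpow_pos_of_pos (show (0:ℝ) < 2 by norm_num) (1 - a)
    have := Real.rpow_pos_of_pos hΔ a
    positivity
  obtain ⟨D₁, hdiam₁, hsep₁⟩ := hM₁ Δ₁ hΔ₁
  -- key auxiliary construction for each R₁
  have key : ∀ R₁ : Setoid ↥M, ∃ E : PMF (Setoid ↥M),
      R₁ ∈ D₁.support →
        ((∀ R ∈ E.support, ∀ x y : ↥M, R.r x y → R₁.r x y ∧ dist x y ≤ Δ) ∧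
         (∀ x y : ↥M, R₁.r x y → E.toOuterMeasure {R | ¬ R.r x y} ≤
            ENNReal.ofReal (βq * (2 * Δ₁ ^ (a - 1) * dist x y) / Δ₂))) := by
    intro R₁
    by_cases hR₁ : R₁ ∈ D₁.support
    swap
    · exact ⟨PMF.pure R₁, fun h => absurd h hR₁⟩
    -- the cluster-center map
    set c : ↥M → ↥M := fun x => (Quotient.mk R₁ x).out with hcdef
    have hc_rel : ∀ x : ↥M, R₁.r (c x) x := fun x => Quotient.mk_out (s := R₁) x
    have hc_eq : ∀ {x y : ↥M}, R₁.r x y → c x = c y := by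
      intro x y h
      simp only [hcdef]
      rw [Quotient.sound h]
    have hc_dist : ∀ x : ↥M, ‖(x : lp (fun _ : ℕ => ℝ) (ENNReal.ofReal p))
        - (c x : lp (fun _ : ℕ => ℝ) (ENNReal.ofReal p))‖ ≤ Δ₁ := by
      intro x
      have h1 : R₁.r x (c x) := R₁.iseqv.symm (hc_rel x)
      have := hdiam₁ R₁ hR₁ x (c x) h1
      rwa [Subtype.dist_eq, dist_eq_norm] at this
    set L := 2 * Δ₁ ^ a + 1 with hLdef
    have hL0 : 0 < L := by
      have := Real.rpow_pos_of_pos hΔ₁ a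
      positivity
    -- the random-shifted Mazur map
    set ψ : ↥M → lp (fun _ : ℕ => ℝ) (ENNReal.ofReal q) := fun x =>
      mazur hq0 hqp ((x : lp (fun _ : ℕ => ℝ) (ENNReal.ofReal p)) - (c x : _))
        + lp.single (ENNReal.ofReal q) 0 ((ι (c x) : ℝ) * L) with hψdef
    have hmaz_bound : ∀ x : ↥M,
        ‖mazur hq0 hqp ((x : lp (fun _ : ℕ => ℝ) (ENNReal.ofReal p)) - (c x : _))‖ ≤ Δ₁ ^ a := by
      intro x
      rw [mazur_norm hq0 hqp]
      exact Real.rpow_le_rpow (norm_nonneg _) (hc_dist x) ha0.le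
    have hcoord : ∀ x : ↥M, ψ x 0 =
        mazur hq0 hqp ((x : lp (fun _ : ℕ => ℝ) (ENNReal.ofReal p)) - (c x : _)) 0
          + (ι (c x) : ℝ) * L := by
      intro x
      rw [hψdef]
      simp only [lp.coeFn_add, Pi.add_apply]
      rw [lp.single_apply_self]
    have hcoord_bound : ∀ x : ↥M,
        |mazur hq0 hqp ((x : lp (fun _ : ℕ => ℝ) (ENNReal.ofReal p)) - (c x : _)) 0| ≤ Δ₁ ^ a := by
      intro x
      have h1 := lp.norm_apply_le_norm
        (show (ENNReal.ofReal q) ≠ 0 from (ENNReal.ofReal_pos.2 hq0).ne')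
        (mazur hq0 hqp ((x : lp (fun _ : ℕ => ℝ) (ENNReal.ofReal p)) - (c x : _))) 0
      rw [Real.norm_eq_abs] at h1
      exact h1.trans (hmaz_bound x)
    -- injectivity of ψ
    have hψinj : Function.Injective ψ := by
      intro x y hxy
      have hceq : c x = c y := by
        by_contra hne
        have hιne : ι (c x) ≠ ι (c y) := fun h => hne (hι h)
        have habs : (1:ℝ) ≤ |(ι (c x) : ℝ) - (ι (c y) : ℝ)| := by
          have h0 : ((ι (c x) : ℤ)) - (ι (c y) : ℤ) ≠ 0 := by
            intro h
            exact hιne (by omega)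
          have h1 := Int.one_le_abs h0
          have : ((1:ℤ):ℝ) ≤ (|(ι (c x) : ℤ) - (ι (c y) : ℤ)| : ℝ) := by exact_mod_cast h1
          push_cast at this
          convert this using 2 <;> push_cast <;> ring
        have heq0 : ψ x 0 = ψ y 0 := by rw [hxy]
        rw [hcoord x, hcoord y] at heq0
        have hb1 := hcoord_bound x
        have hb2 := hcoord_bound y
        have hL_le : L ≤ |(ι (c x) : ℝ) - (ι (c y) : ℝ)| * L := by
          nth_rewrite 1 [← one_mul L]
          exact mul_le_mul_of_nonneg_right habs hL0.le
        have : |(ι (c x) : ℝ) * L - (ι (c y) : ℝ) * L| ≤ 2 * Δ₁ ^ a := by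
          have heq1 : (ι (c x) : ℝ) * L - (ι (c y) : ℝ) * L =
              mazur hq0 hqp ((y : lp (fun _ : ℕ => ℝ) (ENNReal.ofReal p)) - (c y : _)) 0
              - mazur hq0 hqp ((x : lp (fun _ : ℕ => ℝ) (ENNReal.ofReal p)) - (c x : _)) 0 := by
            linarith
          rw [heq1]
          calc |_ - _| ≤ |_| + |_| := abs_sub _ _
          _ ≤ Δ₁ ^ a + Δ₁ ^ a := add_le_add hb2 hb1
          _ = 2 * Δ₁ ^ a := by ring
        rw [← sub_mul, abs_mul, abs_of_pos hL0] at this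
        have hcontr : L ≤ 2 * Δ₁ ^ a := le_trans hL_le this
        rw [hLdef] at hcontr
        linarith
      -- now the mazur parts agree
      have hmz : mazur hq0 hqp ((x : lp (fun _ : ℕ => ℝ) (ENNReal.ofReal p)) - (c y : _))
          = mazur hq0 hqp ((y : lp (fun _ : ℕ => ℝ) (ENNReal.ofReal p)) - (c y : _)) := by
        have h := hxy
        rw [hψdef] at h
        simp only [hceq] at h
        exact add_right_cancel h
      have hcoords : ∀ i : ℕ, (x : lp (fun _ : ℕ => ℝ) (ENNReal.ofReal p)) i
          = (y : lp (fun _ : ℕ => ℝ) (ENNReal.ofReal p)) i := by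
        intro i
        have h1 : sgm a (((x : lp (fun _ : ℕ => ℝ) (ENNReal.ofReal p)) - (c y : _)) i)
            = sgm a (((y : lp (fun _ : ℕ => ℝ) (ENNReal.ofReal p)) - (c y : _)) i) :=
          congrFun (congrArg Subtype.val hmz) i
        have h2 := sgm_inj ha1.le h1
        simp only [lp.coeFn_sub, Pi.sub_apply] at h2
        linarith
      exact Subtype.coe_injective (lp.ext (funext hcoords))
    -- the image set
    set N : Set (lp (fun _ : ℕ => ℝ) (ENNReal.ofReal q)) := Set.range ψ with hNdef
    have hNfin : N.Finite := Set.finite_range ψ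
    have hNcard : N.ncard = n := by
      rw [← Nat.card_coe_set_eq, hNdef]
      rw [Nat.card_congr (Equiv.ofInjective ψ hψinj).symm]
      rw [Nat.card_coe_set_eq, hMcard]
    obtain ⟨D₂, hdiam₂, hsep₂⟩ := hq' N hNfin hNcard Δ₂ hΔ₂
    set g : ↥M → ↥N := fun x => ⟨ψ x, Set.mem_range_self x⟩ with hgdef
    have hgdist : ∀ x y : ↥M, dist (g x) (g y) = ‖ψ x - ψ y‖ := by
      intro x y
      rw [Subtype.dist_eq, dist_eq_norm]
    refine ⟨D₂.map (fun R₂ => pullbackAnd R₁ g R₂), fun _ => ⟨?_, ?_⟩⟩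
    · -- diameter
      intro R hR x y hxy
      obtain ⟨R₂, hR₂, rfl⟩ := (PMF.mem_support_map_iff _ _ _).1 hR
      obtain ⟨h1, h2⟩ := hxy
      refine ⟨h1, ?_⟩
      have hd2 := hdiam₂ R₂ hR₂ (g x) (g y) h2
      rw [hgdist] at hd2
      have hcc := hc_eq h1
      have hψsub : ψ x - ψ y
          = mazur hq0 hqp ((x : lp (fun _ : ℕ => ℝ) (ENNReal.ofReal p)) - (c x : _))
          - mazur hq0 hqp ((y : lp (fun _ : ℕ => ℝ) (ENNReal.ofReal p)) - (c y : _)) := by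
        rw [hψdef]
        simp only [hcc]
        abel
      rw [hψsub] at hd2
      have hlow := mazur_lower hq0 hqp
        ((x : lp (fun _ : ℕ => ℝ) (ENNReal.ofReal p)) - (c x : _))
        ((y : lp (fun _ : ℕ => ℝ) (ENNReal.ofReal p)) - (c y : _))
      have hsub : ((x : lp (fun _ : ℕ => ℝ) (ENNReal.ofReal p)) - (c x : _))
          - ((y : lp (fun _ : ℕ => ℝ) (ENNReal.ofReal p)) - (c y : _))
          = (x : lp (fun _ : ℕ => ℝ) (ENNReal.ofReal p)) - (y : _) := by
        rw [hcc]; abel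
      rw [hsub] at hlow
      have hchain : ‖(x : lp (fun _ : ℕ => ℝ) (ENNReal.ofReal p)) - (y : _)‖ ^ a ≤ Δ ^ a := by
        have h2a : (0:ℝ) < 2 ^ (a - 1) := Real.rpow_pos_of_pos (by norm_num) _
        calc ‖(x : lp (fun _ : ℕ => ℝ) (ENNReal.ofReal p)) - (y : _)‖ ^ a
            ≤ 2 ^ (a - 1) * ‖_ - _‖ := hlow
        _ ≤ 2 ^ (a - 1) * Δ₂ := by gcongr
        _ = Δ ^ a := by
            rw [hΔ₂def, ← mul_assoc, ← Real.rpow_add (show (0:ℝ) < 2 by norm_num)]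
            norm_num
      have := rpow_cancel_le (norm_nonneg _) hΔ.le ha0 hchain
      rwa [Subtype.dist_eq, dist_eq_norm]
    · -- separation
      intro x y hr
      rw [PMF.toOuterMeasure_map_apply]
      have hmono : D₂.toOuterMeasure ((fun R₂ => pullbackAnd R₁ g R₂) ⁻¹' {R | ¬ R.r x y})
          ≤ D₂.toOuterMeasure {R₂ | ¬ R₂.r (g x) (g y)} := by
        apply PMF.toOuterMeasure_mono
        intro R₂ hmem
        have h1 := hmem.1
        simp only [Set.mem_preimage, Set.mem_setOf_eq, pullbackAnd_r] at h1 ⊢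
        intro h2
        exact h1 ⟨hr, h2⟩
      refine hmono.trans ((hsep₂ (g x) (g y)).trans (ENNReal.ofReal_le_ofReal ?_))
      have hbound : dist (g x) (g y) ≤ 2 * Δ₁ ^ (a - 1) * dist x y := by
        rw [hgdist]
        have hcc := hc_eq hr
        have hψsub : ψ x - ψ y
            = mazur hq0 hqp ((x : lp (fun _ : ℕ => ℝ) (ENNReal.ofReal p)) - (c x : _))
            - mazur hq0 hqp ((y : lp (fun _ : ℕ => ℝ) (ENNReal.ofReal p)) - (c y : _)) := by
          rw [hψdef]
          simp only [hcc]
          abel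
        rw [hψsub]
        have hup := mazur_upper hq0 hqp hp2q
          ((x : lp (fun _ : ℕ => ℝ) (ENNReal.ofReal p)) - (c x : _))
          ((y : lp (fun _ : ℕ => ℝ) (ENNReal.ofReal p)) - (c y : _))
        have hsub : ((x : lp (fun _ : ℕ => ℝ) (ENNReal.ofReal p)) - (c x : _))
            - ((y : lp (fun _ : ℕ => ℝ) (ENNReal.ofReal p)) - (c y : _))
            = (x : lp (fun _ : ℕ => ℝ) (ENNReal.ofReal p)) - (y : _) := by
          rw [hcc]; abel
        rw [hsub] at hup
        have hdist_xy : ‖(x : lp (fun _ : ℕ => ℝ) (ENNReal.ofReal p)) - (y : _)‖ = dist x y := by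
          rw [Subtype.dist_eq, dist_eq_norm]
        have hnx : ‖(x : lp (fun _ : ℕ => ℝ) (ENNReal.ofReal p)) - (c x : _)‖ ^ (a - 1)
            ≤ Δ₁ ^ (a - 1) :=
          Real.rpow_le_rpow (norm_nonneg _) (hc_dist x) (by linarith)
        have hny : ‖(y : lp (fun _ : ℕ => ℝ) (ENNReal.ofReal p)) - (c y : _)‖ ^ (a - 1)
            ≤ Δ₁ ^ (a - 1) :=
          Real.rpow_le_rpow (norm_nonneg _) (hc_dist y) (by linarith)
        calc ‖_ - _‖ ≤ (‖(x : lp (fun _ : ℕ => ℝ) (ENNReal.ofReal p)) - (c x : _)‖ ^ (a - 1)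
              + ‖(y : lp (fun _ : ℕ => ℝ) (ENNReal.ofReal p)) - (c y : _)‖ ^ (a - 1))
              * ‖(x : lp (fun _ : ℕ => ℝ) (ENNReal.ofReal p)) - (y : _)‖ := hup
        _ ≤ (Δ₁ ^ (a - 1) + Δ₁ ^ (a - 1)) * ‖(x : lp (fun _ : ℕ => ℝ) (ENNReal.ofReal p)) - (y : _)‖ := by
            have : (0:ℝ) ≤ ‖(x : lp (fun _ : ℕ => ℝ) (ENNReal.ofReal p)) - (y : _)‖ := norm_nonneg _
            gcongr
        _ = 2 * Δ₁ ^ (a - 1) * dist x y := by rw [hdist_xy]; ring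
      gcongr
  choose Efun hE using key
  refine ⟨D₁.bind Efun, ?_, ?_⟩
  · -- diameter of the composite decomposition
    intro R hR x y hxy
    rw [PMF.support_bind] at hR
    simp only [Set.mem_iUnion] at hR
    obtain ⟨R₁, hR₁, hRE⟩ := hR
    exact ((hE R₁ hR₁).1 R hRE x y hxy).2
  · -- separation of the composite decomposition
    intro x y
    set S : Set (Setoid ↥M) := {R | ¬ R.r x y} with hSdef
    set d := dist x y with hddef
    have hd0 : 0 ≤ d := dist_nonneg
    rw [PMF.toOuterMeasure_bind_apply]
    set B₂ : ℝ≥0∞ := ENNReal.ofReal (βq * (2 * Δ₁ ^ (a - 1) * d) / Δ₂) with hB₂def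
    have hterm : ∀ R₁ : Setoid ↥M,
        D₁ R₁ * (Efun R₁).toOuterMeasure S ≤ S.indicator (⇑D₁) R₁ + D₁ R₁ * B₂ := by
      intro R₁
      by_cases h0 : D₁ R₁ = 0
      · rw [h0, zero_mul]
        exact zero_le
      have hsupp : R₁ ∈ D₁.support := by rwa [PMF.mem_support_iff]
      by_cases hr : R₁.r x y
      · have hb := (hE R₁ hsupp).2 x y hr
        calc D₁ R₁ * (Efun R₁).toOuterMeasure S ≤ D₁ R₁ * B₂ := mul_le_mul_right hb _
        _ ≤ _ := le_add_self
      · have h1 : (Efun R₁).toOuterMeasure S ≤ 1 := by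
          rw [PMF.toOuterMeasure_apply]
          calc ∑' R, S.indicator (⇑(Efun R₁)) R ≤ ∑' R, (Efun R₁) R :=
              ENNReal.tsum_le_tsum (fun R => Set.indicator_apply_le (fun _ => le_rfl))
          _ = 1 := (Efun R₁).tsum_coe
        calc D₁ R₁ * (Efun R₁).toOuterMeasure S ≤ D₁ R₁ * 1 := mul_le_mul_right h1 _
        _ = S.indicator (⇑D₁) R₁ := by
            rw [mul_one, Set.indicator_of_mem (show R₁ ∈ S from hr)]
        _ ≤ _ := le_self_add
    calc ∑' R₁, D₁ R₁ * (Efun R₁).toOuterMeasure S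
        ≤ ∑' R₁, (S.indicator (⇑D₁) R₁ + D₁ R₁ * B₂) := ENNReal.tsum_le_tsum hterm
    _ = (∑' R₁, S.indicator (⇑D₁) R₁) + (∑' R₁, D₁ R₁) * B₂ := by
        rw [ENNReal.tsum_add, ENNReal.tsum_mul_right]
    _ = D₁.toOuterMeasure S + B₂ := by rw [← PMF.toOuterMeasure_apply, D₁.tsum_coe, one_mul]
    _ ≤ ENNReal.ofReal (β * d / Δ₁) + B₂ := add_le_add_left (hsep₁ x y) _
    _ = ENNReal.ofReal (β * d / Δ₁ + βq * (2 * Δ₁ ^ (a - 1) * d) / Δ₂) := by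
        rw [ENNReal.ofReal_add (by positivity) (by positivity)]
    _ ≤ ENNReal.ofReal (4 * Real.sqrt (βq * β) * d / Δ) := by
        apply ENNReal.ofReal_le_ofReal
        exact final_ineq ha1 ha2 hβq hββq hΔ hd0 htdef hΔ₁def hΔ₂def

end IterAux

/-- Iterating the decomposition lemma: if `2 ≤ q < p ≤ 2q`, an `n`-point `M ⊆ ℓ_p` admits a
`(β₀, Δ')`-Lipschitz decomposition for every `Δ' > 0`, and every `n`-point subset of `ℓ_q`
admits a `(β_q, Δ')`-Lipschitz decomposition for every `Δ' > 0`, then for every `k ≥ 0` and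
every `Δ > 0`, `M` admits a `(16 * β_q * β₀ ^ (2⁻ᵏ), Δ)`-Lipschitz decomposition. -/

theorem iterated_decomposition (p q : ℝ) (hq : 2 ≤ q) (hqp : q < p) (hp2q : p ≤ 2 * q)
    [Fact (1 ≤ ENNReal.ofReal p)] [Fact (1 ≤ ENNReal.ofReal q)]
    (n : ℕ) (hn : 1 ≤ n)
    (M : Set (lp (fun _ : ℕ => ℝ) (ENNReal.ofReal p))) (hMfin : M.Finite)
    (hMcard : M.ncard = n)
    (β₀ βq : ℝ) (hβ₀ : 1 ≤ β₀) (hβq : 1 ≤ βq)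
    (hM : ∀ Δ' : ℝ, 0 < Δ' → LipschitzDecomp M β₀ Δ')
    (hq' : ∀ (N : Set (lp (fun _ : ℕ => ℝ) (ENNReal.ofReal q))),
        N.Finite → N.ncard = n → ∀ Δ' : ℝ, 0 < Δ' → LipschitzDecomp N βq Δ')
    (k : ℕ) (Δ : ℝ) (hΔ : 0 < Δ) :
    LipschitzDecomp M (16 * βq * β₀ ^ (((2 : ℝ) ^ k)⁻¹)) Δ := by
  have hβ₀0 : (0:ℝ) < β₀ := by linarith
  suffices H : ∀ k : ℕ, ∀ Δ : ℝ, 0 < Δ →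
      LipschitzDecomp M (16 * βq * β₀ ^ (((2 : ℝ) ^ k)⁻¹)) Δ from H k Δ hΔ
  intro k
  induction k with
  | zero =>
    intro Δ hΔ
    have h1 : (((2:ℝ) ^ (0:ℕ))⁻¹ : ℝ) = 1 := by norm_num
    rw [h1, Real.rpow_one]
    refine IterAux.lipschitzDecomp_mono hΔ ?_ (hM Δ hΔ)
    nlinarith
  | succ k ih =>
    intro Δ hΔ
    set e := (((2:ℝ) ^ k)⁻¹ : ℝ) with hedef
    have he0 : 0 ≤ e := by positivity
    have hrpow1 : (1:ℝ) ≤ β₀ ^ e := Real.one_le_rpow hβ₀ he0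
    have hββq : βq ≤ 16 * βq * β₀ ^ e := by nlinarith
    have hstep := IterAux.step_lemma p q hq hqp hp2q n M hMfin hMcard βq hβq hq'
      (16 * βq * β₀ ^ e) hββq (fun Δ' hΔ' => ih Δ' hΔ') Δ hΔ
    have hconst : 4 * Real.sqrt (βq * (16 * βq * β₀ ^ e)) =
        16 * βq * β₀ ^ (((2:ℝ) ^ (k + 1))⁻¹) := by
      have h1 : βq * (16 * βq * β₀ ^ e) = (4 * βq) ^ 2 * β₀ ^ e := by ring
      rw [h1, Real.sqrt_mul (sq_nonneg _), Real.sqrt_sq (by linarith : (0:ℝ) ≤ 4 * βq)]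
      have h2 : Real.sqrt (β₀ ^ e) = β₀ ^ (((2:ℝ) ^ (k + 1))⁻¹) := by
        rw [Real.sqrt_eq_rpow, ← Real.rpow_mul hβ₀0.le]
        congr 1
        rw [hedef]
        rw [pow_succ]
        field_simp
      rw [h2]
      ring
    rwa [hconst] at hstep
end
end

section
/- Let m ≥ 1 be an integer and p = 2^m, let n ≥ 2, and let β_2 ≥ 1 be such that every n-point subset of ℓ_2 admits a (β_2, Δ')-Lipschitz decomposition for every Δ' > 0. Then every n-point subset of ℓ_p admits a (2·p^4·β_2, Δ)-Lipschitz decomposition for every Δ > 0. -/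
noncomputable section

open scoped NNReal ENNReal

namespace LipAux

theorem toOuterMeasure_le_one {γ : Type*} (p : PMF γ) (s : Set γ) : p.toOuterMeasure s ≤ 1 := by
  rw [PMF.toOuterMeasure_apply]
  calc ∑' x, s.indicator p x ≤ ∑' x, p x :=
        ENNReal.tsum_le_tsum (fun x => Set.indicator_apply_le fun _ => le_rfl)
    _ = 1 := p.tsum_coe

variable {α : Type*} [PseudoMetricSpace α]

theorem lip_mono {β β' Δ : ℝ} (hβ : β ≤ β') (hΔ : 0 < Δ) (h : LipschitzDecomp α β Δ) :
    LipschitzDecomp α β' Δ := by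
  obtain ⟨D, h1, h2⟩ := h
  refine ⟨D, h1, fun x y => (h2 x y).trans (ENNReal.ofReal_le_ofReal ?_)⟩
  have := dist_nonneg (x := x) (y := y)
  gcongr

theorem lip_trivial {β Δ : ℝ} (hb : ∀ x y : α, dist x y ≤ Δ) : LipschitzDecomp α β Δ := by
  refine ⟨PMF.pure ⊤, fun R hR x y _ => hb x y, fun x y => ?_⟩
  rw [PMF.toOuterMeasure_pure_apply]
  have h : (⊤ : Setoid α) ∉ {R : Setoid α | ¬ R.r x y} := by
    simp only [Set.mem_setOf_eq, not_not]
    exact trivial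
  rw [if_neg h]
  exact zero_le

theorem lip_combine {Δ' c₀ c₁ : ℝ} (hc₀ : 0 ≤ c₀) (hc₁ : 0 ≤ c₁)
    (D₀ : PMF (Setoid α))
    (hsep₀ : ∀ x y : α, D₀.toOuterMeasure {R | ¬ R.r x y} ≤ ENNReal.ofReal (c₀ * dist x y))
    (D₁ : Setoid α → PMF (Setoid α))
    (hdiam₁ : ∀ R₀ ∈ D₀.support, ∀ S ∈ (D₁ R₀).support, ∀ x y : α,
        R₀.r x y → S.r x y → dist x y ≤ Δ')
    (hsep₁ : ∀ R₀ ∈ D₀.support, ∀ x y : α, R₀.r x y →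
        (D₁ R₀).toOuterMeasure {S | ¬ S.r x y} ≤ ENNReal.ofReal (c₁ * dist x y)) :
    ∃ D : PMF (Setoid α),
      (∀ R ∈ D.support, ∀ x y : α, R.r x y → dist x y ≤ Δ') ∧
      (∀ x y : α, D.toOuterMeasure {R | ¬ R.r x y} ≤ ENNReal.ofReal ((c₀ + c₁) * dist x y)) := by
  refine ⟨D₀.bind fun R₀ => (D₁ R₀).map (fun S => R₀ ⊓ S), ?_, ?_⟩
  · intro R hR x y hxy
    rw [PMF.support_bind] at hR
    obtain ⟨R₀, hR₀, hR'⟩ := Set.mem_iUnion₂.1 hR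
    rw [PMF.support_map] at hR'
    obtain ⟨S, hS, rfl⟩ := hR'
    have h' : R₀ x y ∧ S x y := Setoid.inf_iff_and.mp hxy
    exact hdiam₁ R₀ hR₀ S hS x y h'.1 h'.2
  · intro x y
    rw [PMF.toOuterMeasure_bind_apply]
    have key : ∀ R₀ : Setoid α,
        D₀ R₀ * ((D₁ R₀).map (fun S => R₀ ⊓ S)).toOuterMeasure {R | ¬ R.r x y} ≤
        ({R : Setoid α | ¬ R.r x y}).indicator (⇑D₀) R₀ +
          D₀ R₀ * ENNReal.ofReal (c₁ * dist x y) := by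
      intro R₀
      by_cases hsupp : R₀ ∈ D₀.support
      · rw [PMF.toOuterMeasure_map_apply]
        by_cases hR₀xy : R₀.r x y
        · have hpre : (fun S => R₀ ⊓ S) ⁻¹' {R : Setoid α | ¬ R.r x y} =
              {S : Setoid α | ¬ S.r x y} := by
            ext S
            simp only [Set.mem_preimage, Set.mem_setOf_eq]
            constructor
            · intro h hS; exact h (Setoid.inf_iff_and.2 ⟨hR₀xy, hS⟩)
            · intro h h'; exact h (Setoid.inf_iff_and.1 h').2
          rw [hpre]
          refine le_trans (mul_le_mul_right (hsep₁ R₀ hsupp x y hR₀xy) (D₀ R₀)) ?_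
          exact le_add_left le_rfl
        · have hmem : R₀ ∈ {R : Setoid α | ¬ R.r x y} := hR₀xy
          rw [Set.indicator_of_mem hmem]
          refine le_trans (le_trans (mul_le_mul_right
            (toOuterMeasure_le_one (D₁ R₀) _) (D₀ R₀)) (le_of_eq (mul_one _))) ?_
          exact le_add_right le_rfl
      · have h0 : D₀ R₀ = 0 := by
          by_contra h
          exact hsupp ((PMF.mem_support_iff D₀ R₀).2 h)
        rw [h0, zero_mul]
        exact zero_le
    calc ∑' R₀, D₀ R₀ * ((D₁ R₀).map (fun S => R₀ ⊓ S)).toOuterMeasure {R | ¬ R.r x y}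
        ≤ ∑' R₀, (({R : Setoid α | ¬ R.r x y}).indicator (⇑D₀) R₀ +
            D₀ R₀ * ENNReal.ofReal (c₁ * dist x y)) := ENNReal.tsum_le_tsum key
      _ = D₀.toOuterMeasure {R | ¬ R.r x y} +
            (∑' R₀, D₀ R₀) * ENNReal.ofReal (c₁ * dist x y) := by
          rw [ENNReal.tsum_add, PMF.toOuterMeasure_apply, ENNReal.tsum_mul_right]
      _ ≤ ENNReal.ofReal (c₀ * dist x y) + 1 * ENNReal.ofReal (c₁ * dist x y) := by
          gcongr
          · exact hsep₀ x y
          · exact le_of_eq D₀.tsum_coe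
      _ = ENNReal.ofReal ((c₀ + c₁) * dist x y) := by
          rw [one_mul, ← ENNReal.ofReal_add (by positivity) (by positivity), ← add_mul]

theorem lip_scale {β : ℝ} {C : ℝ} (hC : ∀ x y : α, dist x y ≤ C)
    (step : ∀ Δ' : ℝ, 0 < Δ' → LipschitzDecomp α β (2 * Δ') → LipschitzDecomp α β Δ')
    (Δ : ℝ) (hΔ : 0 < Δ) : LipschitzDecomp α β Δ := by
  obtain ⟨K, hK⟩ : ∃ K : ℕ, C ≤ 2 ^ K * Δ := by
    obtain ⟨K, hK⟩ := pow_unbounded_of_one_lt (C / Δ) (y := (2:ℝ)) one_lt_two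
    exact ⟨K, by rw [← div_le_iff₀ hΔ] at *; exact hK.le⟩
  have main : ∀ k : ℕ, LipschitzDecomp α β ((2:ℝ) ^ (K - k) * Δ) := by
    intro k
    induction k with
    | zero =>
        simp only [Nat.sub_zero]
        exact lip_trivial fun x y => (hC x y).trans hK
    | succ k ih =>
        rcases le_or_gt K k with hKk | hKk
        · have h1 : K - (k+1) = 0 := Nat.sub_eq_zero_of_le (hKk.trans (Nat.le_succ k))
          have h2 : K - k = 0 := Nat.sub_eq_zero_of_le hKk
          rw [h2] at ih
          rwa [h1]
        · have h1 : K - k = (K - (k+1)) + 1 := by omega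
          have heq : (2:ℝ) ^ (K - k) * Δ = 2 * ((2:ℝ) ^ (K - (k+1)) * Δ) := by
            rw [h1, pow_succ]; ring
          exact step ((2:ℝ) ^ (K - (k+1)) * Δ) (by positivity) (heq ▸ ih)
  have := main K
  simpa [Nat.sub_self] using this

end LipAux

-- fragment appended to p1 for testing
namespace LipAux

def sq' (a : ℝ) : ℝ := a * |a|

theorem sq'_strictMono : StrictMono sq' := by
  intro a b h
  unfold sq'
  rcases le_or_gt 0 a with ha | ha
  · have hb : 0 < b := lt_of_le_of_lt ha h
    rw [abs_of_nonneg ha, abs_of_pos hb]; nlinarith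
  · rcases le_or_gt 0 b with hb | hb
    · rw [abs_of_neg ha, abs_of_nonneg hb]; nlinarith
    · rw [abs_of_neg ha, abs_of_neg hb]; nlinarith

theorem sq'_lower_of_le {a b : ℝ} (h : b ≤ a) : (a - b) ^ 2 ≤ 2 * (sq' a - sq' b) := by
  unfold sq'
  rcases le_or_gt 0 b with hb | hb
  · have ha : 0 ≤ a := hb.trans h
    rw [abs_of_nonneg ha, abs_of_nonneg hb]; nlinarith
  · rcases le_or_gt 0 a with ha | ha
    · rw [abs_of_nonneg ha, abs_of_neg hb]; nlinarith [sq_nonneg (a + b)]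
    · rw [abs_of_neg ha, abs_of_neg hb]; nlinarith

theorem sq'_lower (a b : ℝ) : (a - b) ^ 2 ≤ 2 * |sq' a - sq' b| := by
  rcases le_total b a with h | h
  · have h2 : sq' b ≤ sq' a := sq'_strictMono.monotone h
    rw [abs_of_nonneg (by linarith)]
    exact sq'_lower_of_le h
  · have h2 : sq' a ≤ sq' b := sq'_strictMono.monotone h
    rw [abs_of_nonpos (by linarith), neg_sub]
    calc (a - b) ^ 2 = (b - a) ^ 2 := by ring
      _ ≤ 2 * (sq' b - sq' a) := sq'_lower_of_le h

theorem sq'_upper (a b : ℝ) : |sq' a - sq' b| ≤ |a - b| * (|a| + |b|) := by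
  have h1 : sq' a - sq' b = (a - b) * abs a + b * (abs a - abs b) := by
    unfold sq'; ring
  calc |sq' a - sq' b| = abs ((a - b) * abs a + b * (abs a - abs b)) := by rw [h1]
    _ ≤ abs ((a - b) * abs a) + abs (b * (abs a - abs b)) := abs_add_le _ _
    _ = |a - b| * |a| + |b| * abs (abs a - abs b) := by
        rw [abs_mul, abs_mul, abs_abs]
    _ ≤ |a - b| * |a| + |b| * |a - b| :=
        add_le_add_right (mul_le_mul_of_nonneg_left
          (abs_abs_sub_abs_le_abs_sub a b) (abs_nonneg b)) _
    _ = |a - b| * (|a| + |b|) := by ring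

end LipAux

namespace LipAux

abbrev lpsp (s : ℝ) := lp (fun _ : ℕ => ℝ) (ENNReal.ofReal s)

theorem toReal_ofReal_s {s : ℝ} (hs : 1 ≤ s) : (ENNReal.ofReal s).toReal = s :=
  ENNReal.toReal_ofReal (by linarith)

theorem lp_summable {s : ℝ} (hs : 1 ≤ s) [Fact (1 ≤ ENNReal.ofReal s)] (f : lpsp s) :
    Summable fun i => |f i| ^ s := by
  have h := (lp.memℓp f).summable (p := ENNReal.ofReal s)
    (by rw [toReal_ofReal_s hs]; linarith)
  simp only [toReal_ofReal_s hs, Real.norm_eq_abs] at h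
  exact h

theorem lp_norm_rpow {s : ℝ} (hs : 1 ≤ s) [Fact (1 ≤ ENNReal.ofReal s)] (f : lpsp s) :
    ‖f‖ ^ s = ∑' i, |f i| ^ s := by
  have h := lp.norm_rpow_eq_tsum (p := ENNReal.ofReal s)
    (by rw [toReal_ofReal_s hs]; linarith) f
  simp only [toReal_ofReal_s hs, Real.norm_eq_abs] at h
  exact h

theorem lp_sub_apply {e : ℝ≥0∞} (f g : lp (fun _ : ℕ => ℝ) e) (k : ℕ) :
    (⇑(f - g) : ℕ → ℝ) k = f k - g k := by
  rw [lp.coeFn_sub]; rfl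

section Psi

variable {s : ℝ}

def psiFun (v : ℕ → ℝ) (c : ℝ) : ℕ → ℝ := fun i => Nat.casesOn i c fun k => sq' (v k)

@[simp] theorem psiFun_zero (v : ℕ → ℝ) (c : ℝ) : psiFun v c 0 = c := rfl

@[simp] theorem psiFun_succ (v : ℕ → ℝ) (c : ℝ) (k : ℕ) : psiFun v c (k + 1) = sq' (v k) := rfl

theorem abs_sq'_rpow (a : ℝ) (s : ℝ) : |sq' a| ^ s = |a| ^ (2 * s) := by
  have h1 : |sq' a| = |a| ^ (2:ℝ) := by
    rw [sq', abs_mul, abs_abs, ← pow_two, ← Real.rpow_natCast |a| 2]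
    norm_num
  rw [h1, ← Real.rpow_mul (abs_nonneg a)]

variable [Fact (1 ≤ ENNReal.ofReal s)] [Fact (1 ≤ ENNReal.ofReal (2 * s))]

theorem memℓp_psi (hs : 1 ≤ s) (v : lpsp (2 * s)) (c : ℝ) :
    Memℓp (psiFun (⇑v) c) (ENNReal.ofReal s) := by
  apply memℓp_gen
  rw [toReal_ofReal_s hs]
  have h2 : Summable fun k => ‖psiFun (⇑v) c (k + 1)‖ ^ s := by
    refine (lp_summable (by linarith : (1:ℝ) ≤ 2 * s) v).congr fun k => ?_
    rw [psiFun_succ, Real.norm_eq_abs, abs_sq'_rpow]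
  exact (summable_nat_add_iff 1).1 h2

def psiElt (hs : 1 ≤ s) (v : lpsp (2 * s)) (c : ℝ) : lpsp s :=
  ⟨psiFun (⇑v) c, memℓp_psi hs v c⟩

theorem psiElt_apply (hs : 1 ≤ s) (v : lpsp (2 * s)) (c : ℝ) (i : ℕ) :
    (⇑(psiElt hs v c) : ℕ → ℝ) i = psiFun (⇑v) c i := rfl

theorem psi_diff_summable (hs : 1 ≤ s) (v w : lpsp (2 * s)) :
    Summable fun k => |sq' (v k) - sq' (w k)| ^ s := by
  have h := lp_summable hs (psiElt hs v 0 - psiElt hs w 0)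
  have h2 := (summable_nat_add_iff 1).2 h
  refine h2.congr fun k => ?_
  simp only [lp_sub_apply, psiElt_apply, psiFun_succ]

theorem psi_diff_tsum (hs : 1 ≤ s) (v w : lpsp (2 * s)) (c : ℝ) :
    ‖psiElt hs v c - psiElt hs w c‖ ^ s = ∑' k, |sq' (v k) - sq' (w k)| ^ s := by
  rw [lp_norm_rpow hs]
  have hsum : Summable fun i => |(⇑(psiElt hs v c - psiElt hs w c) : ℕ → ℝ) i| ^ s :=
    lp_summable hs _
  rw [hsum.tsum_eq_zero_add]
  have h0 : |(⇑(psiElt hs v c - psiElt hs w c) : ℕ → ℝ) 0| ^ s = 0 := by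
    simp only [lp_sub_apply, psiElt_apply, psiFun_zero, sub_self, abs_zero]
    rw [Real.zero_rpow (by linarith : s ≠ 0)]
  rw [h0, zero_add]
  refine tsum_congr fun k => ?_
  simp only [lp_sub_apply, psiElt_apply, psiFun_succ]

theorem psi_lower (hs : 1 ≤ s) (v w : lpsp (2 * s)) (c : ℝ) :
    ‖v - w‖ ^ 2 ≤ 2 * ‖psiElt hs v c - psiElt hs w c‖ := by
  have hs0 : (0:ℝ) < s := by linarith
  have h2s : (1:ℝ) ≤ 2 * s := by linarith
  set P := ‖psiElt hs v c - psiElt hs w c‖ with hP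
  have hPnn : 0 ≤ P := norm_nonneg _
  have hstep : ‖v - w‖ ^ (2 * s) ≤ (2 * P) ^ s := by
    have hL : ‖v - w‖ ^ (2 * s) = ∑' k, |v k - w k| ^ (2 * s) := by
      rw [lp_norm_rpow h2s]
      exact tsum_congr fun k => by rw [lp_sub_apply]
    have hpt : ∀ k : ℕ, |v k - w k| ^ (2 * s) ≤ 2 ^ s * |sq' (v k) - sq' (w k)| ^ s := by
      intro k
      have h1 : |v k - w k| ^ (2 * s) = ((v k - w k) ^ 2) ^ s := by
        rw [← sq_abs, ← Real.rpow_natCast |v k - w k| 2, ← Real.rpow_mul (abs_nonneg _)]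
        norm_num
      rw [h1, ← Real.mul_rpow (by norm_num) (abs_nonneg _)]
      exact Real.rpow_le_rpow (sq_nonneg _) (sq'_lower _ _) (le_of_lt hs0)
    calc ‖v - w‖ ^ (2 * s) = ∑' k, |v k - w k| ^ (2 * s) := hL
      _ ≤ ∑' k, 2 ^ s * |sq' (v k) - sq' (w k)| ^ s := by
          refine Summable.tsum_le_tsum hpt ?_ ?_
          · refine (lp_summable h2s (v - w)).congr fun k => ?_
            rw [lp_sub_apply]
          · exact (psi_diff_summable hs v w).mul_left _
      _ = 2 ^ s * ∑' k, |sq' (v k) - sq' (w k)| ^ s := tsum_mul_left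
      _ = 2 ^ s * P ^ s := by rw [← psi_diff_tsum hs v w c]
      _ = (2 * P) ^ s := (Real.mul_rpow (by norm_num) hPnn).symm
  have hfin : (‖v - w‖ ^ (2:ℝ)) ^ s ≤ (2 * P) ^ s := by
    rw [← Real.rpow_mul (norm_nonneg _)]
    exact hstep
  have hres : ‖v - w‖ ^ (2:ℝ) ≤ 2 * P :=
    (Real.rpow_le_rpow_iff (Real.rpow_nonneg (norm_nonneg _) 2) (by positivity) hs0).1 hfin
  calc ‖v - w‖ ^ 2 = ‖v - w‖ ^ (2:ℝ) := by
        rw [← Real.rpow_natCast ‖v - w‖ 2]; norm_num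
    _ ≤ 2 * P := hres

theorem psi_upper (hs : 1 ≤ s) (v w : lpsp (2 * s)) (c : ℝ) :
    ‖psiElt hs v c - psiElt hs w c‖ ≤ ‖v - w‖ * (‖v‖ + ‖w‖) := by
  have hs0 : (0:ℝ) < s := by linarith
  have h2s : (1:ℝ) ≤ 2 * s := by linarith
  have h2s0 : (0:ℝ) < 2 * s := by linarith
  have hPnn : 0 ≤ ‖psiElt hs v c - psiElt hs w c‖ := norm_nonneg _
  have hrpow2 : ∀ x : ℝ, 0 ≤ x → (x ^ s) ^ (2:ℝ) = x ^ (2 * s) := by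
    intro x hx
    rw [← Real.rpow_mul hx]
    ring_nf
  have hF2 : Summable fun k => (|v k - w k| ^ s) ^ (2:ℝ) := by
    refine ((lp_summable h2s (v - w)).congr fun k => ?_)
    rw [lp_sub_apply, hrpow2 _ (abs_nonneg _)]
  have hvsum : Summable fun k => |v k| ^ (2 * s) := lp_summable h2s v
  have hwsum : Summable fun k => |w k| ^ (2 * s) := lp_summable h2s w
  have hG2sum : Summable fun k => (|v k| + |w k|) ^ (2 * s) :=
    Real.summable_Lp_add_of_nonneg h2s (fun k => abs_nonneg _) (fun k => abs_nonneg _)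
      hvsum hwsum
  have hG2 : Summable fun k => ((|v k| + |w k|) ^ s) ^ (2:ℝ) := by
    refine hG2sum.congr fun k => ?_
    rw [hrpow2 _ (by positivity)]
  have hconj : (2:ℝ).HolderConjugate 2 := Real.HolderConjugate.two_two
  obtain ⟨hFG, hCS⟩ := Real.summable_and_inner_le_Lp_mul_Lq_tsum_of_nonneg hconj
    (fun k => Real.rpow_nonneg (abs_nonneg (v k - w k)) s)
    (fun k => Real.rpow_nonneg (by positivity : (0:ℝ) ≤ |v k| + |w k|) s) hF2 hG2
  have h1 : ‖psiElt hs v c - psiElt hs w c‖ ^ s ≤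
      ∑' k, |v k - w k| ^ s * (|v k| + |w k|) ^ s := by
    rw [psi_diff_tsum hs v w c]
    refine Summable.tsum_le_tsum (fun k => ?_) (psi_diff_summable hs v w) hFG
    rw [← Real.mul_rpow (abs_nonneg _) (by positivity)]
    exact Real.rpow_le_rpow (abs_nonneg _) (sq'_upper _ _) (le_of_lt hs0)
  have hFfac : (∑' k, (|v k - w k| ^ s) ^ (2:ℝ)) ^ (1/(2:ℝ)) = ‖v - w‖ ^ s := by
    have he : ∑' k, (|v k - w k| ^ s) ^ (2:ℝ) = ∑' k, |v k - w k| ^ (2 * s) :=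
      tsum_congr fun k => hrpow2 _ (abs_nonneg _)
    have hL : ∑' k, |v k - w k| ^ (2 * s) = ‖v - w‖ ^ (2 * s) := by
      rw [lp_norm_rpow h2s]
      exact tsum_congr fun k => by rw [lp_sub_apply]
    rw [he, hL, ← Real.rpow_mul (norm_nonneg _)]
    congr 1
    ring
  have hGfac : (∑' k, ((|v k| + |w k|) ^ s) ^ (2:ℝ)) ^ (1/(2:ℝ)) ≤ (‖v‖ + ‖w‖) ^ s := by
    have he : ∑' k, ((|v k| + |w k|) ^ s) ^ (2:ℝ) = ∑' k, (|v k| + |w k|) ^ (2 * s) :=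
      tsum_congr fun k => hrpow2 _ (by positivity)
    rw [he]
    have hBnn : 0 ≤ ∑' k, (|v k| + |w k|) ^ (2 * s) := tsum_nonneg fun k => by positivity
    have hmink : (∑' k, (|v k| + |w k|) ^ (2 * s)) ^ (1/(2*s)) ≤ ‖v‖ + ‖w‖ := by
      have h := Real.Lp_add_le_tsum_of_nonneg' h2s (f := fun k => |v k|) (g := fun k => |w k|)
        (fun k => abs_nonneg _) (fun k => abs_nonneg _) hvsum hwsum
      have hv' : (∑' k, |v k| ^ (2*s)) ^ (1/(2*s)) = ‖v‖ := by
        rw [← lp_norm_rpow h2s v, ← Real.rpow_mul (norm_nonneg _)]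
        rw [mul_one_div, div_self (ne_of_gt h2s0), Real.rpow_one]
      have hw' : (∑' k, |w k| ^ (2*s)) ^ (1/(2*s)) = ‖w‖ := by
        rw [← lp_norm_rpow h2s w, ← Real.rpow_mul (norm_nonneg _)]
        rw [mul_one_div, div_self (ne_of_gt h2s0), Real.rpow_one]
      rw [hv', hw'] at h
      exact h
    have hBhalf : (∑' k, (|v k| + |w k|) ^ (2 * s)) ^ (1/(2:ℝ)) =
        ((∑' k, (|v k| + |w k|) ^ (2 * s)) ^ (1/(2*s))) ^ s := by
      rw [← Real.rpow_mul hBnn]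
      congr 1
      field_simp
    rw [hBhalf]
    exact Real.rpow_le_rpow (Real.rpow_nonneg hBnn _) hmink (le_of_lt hs0)
  have h2 : ‖psiElt hs v c - psiElt hs w c‖ ^ s ≤ (‖v - w‖ * (‖v‖ + ‖w‖)) ^ s := by
    calc ‖psiElt hs v c - psiElt hs w c‖ ^ s
        ≤ ∑' k, |v k - w k| ^ s * (|v k| + |w k|) ^ s := h1
      _ ≤ (∑' k, (|v k - w k| ^ s) ^ (2:ℝ)) ^ (1/(2:ℝ)) *
            (∑' k, ((|v k| + |w k|) ^ s) ^ (2:ℝ)) ^ (1/(2:ℝ)) := hCS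
      _ ≤ ‖v - w‖ ^ s * (‖v‖ + ‖w‖) ^ s := by
          rw [hFfac]
          exact mul_le_mul_of_nonneg_left hGfac (Real.rpow_nonneg (norm_nonneg _) s)
      _ = (‖v - w‖ * (‖v‖ + ‖w‖)) ^ s :=
          (Real.mul_rpow (norm_nonneg _) (by positivity)).symm
  exact (Real.rpow_le_rpow_iff hPnn (by positivity) hs0).1 h2

theorem psiElt_inj (hs : 1 ≤ s) {v w : lpsp (2 * s)} {c c' : ℝ}
    (h : psiElt hs v c = psiElt hs w c') : c = c' ∧ v = w := by
  have hfun : psiFun (⇑v) c = psiFun (⇑w) c' := congrArg Subtype.val h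
  constructor
  · have := congrFun hfun 0
    simpa using this
  · apply lp.ext
    funext k
    have := congrFun hfun (k + 1)
    simp only [psiFun_succ] at this
    exact sq'_strictMono.injective this

end Psi

end LipAux

namespace LipAux

section Step

variable {s : ℝ} [Fact (1 ≤ ENNReal.ofReal s)] [Fact (1 ≤ ENNReal.ofReal (2 * s))]

def repFn {γ : Type*} (R₀ : Setoid γ) (x : γ) : γ := (Quotient.mk R₀ x).out

theorem repFn_rel {γ : Type*} (R₀ : Setoid γ) (x : γ) : R₀.r (repFn R₀ x) x :=
  Quotient.exact (Quotient.out_eq (Quotient.mk R₀ x))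

theorem repFn_congr {γ : Type*} (R₀ : Setoid γ) {x y : γ} (h : R₀.r x y) :
    repFn R₀ x = repFn R₀ y := by
  unfold repFn
  rw [Quotient.sound h]

def psiMap (hs : 1 ≤ s) {M : Set (lpsp (2 * s))} (cM : ↥M → ℕ)
    (R₀ : Setoid ↥M) (x : ↥M) : lpsp s :=
  psiElt hs ((x : lpsp (2 * s)) - ((repFn R₀ x : ↥M) : lpsp (2 * s)))
    ((cM (repFn R₀ x) : ℝ))

theorem psiMap_inj (hs : 1 ≤ s) {M : Set (lpsp (2 * s))} {cM : ↥M → ℕ}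
    (hcM : Function.Injective cM) (R₀ : Setoid ↥M) :
    Function.Injective (psiMap hs cM R₀) := by
  intro x y h
  obtain ⟨hc, hv⟩ := psiElt_inj hs h
  have hzz : repFn R₀ x = repFn R₀ y := hcM (Nat.cast_injective hc)
  rw [hzz] at hv
  have hxy : (x : lpsp (2 * s)) = y := by
    have := sub_left_inj.mp hv
    exact this
  exact Subtype.ext hxy

theorem psiMap_low (hs : 1 ≤ s) {M : Set (lpsp (2 * s))} (cM : ↥M → ℕ)
    (R₀ : Setoid ↥M) {x y : ↥M} (h : R₀.r x y) :
    dist x y ^ 2 ≤ 2 * dist (psiMap hs cM R₀ x) (psiMap hs cM R₀ y) := by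
  have hz := repFn_congr R₀ h
  simp only [Subtype.dist_eq, dist_eq_norm]
  unfold psiMap
  rw [hz]
  have hkey := psi_lower hs ((x : lpsp (2 * s)) - ((repFn R₀ y : ↥M) : lpsp (2 * s)))
    ((y : lpsp (2 * s)) - ((repFn R₀ y : ↥M) : lpsp (2 * s))) ((cM (repFn R₀ y) : ℝ))
  rwa [sub_sub_sub_cancel_right] at hkey

theorem psiMap_up (hs : 1 ≤ s) {M : Set (lpsp (2 * s))} (cM : ↥M → ℕ)
    (R₀ : Setoid ↥M) {x y : ↥M} (h : R₀.r x y) :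
    dist (psiMap hs cM R₀ x) (psiMap hs cM R₀ y) ≤
      dist x y * (dist x (repFn R₀ x) + dist y (repFn R₀ x)) := by
  have hz := repFn_congr R₀ h
  simp only [Subtype.dist_eq, dist_eq_norm]
  unfold psiMap
  rw [hz]
  have hkey := psi_upper hs ((x : lpsp (2 * s)) - ((repFn R₀ y : ↥M) : lpsp (2 * s)))
    ((y : lpsp (2 * s)) - ((repFn R₀ y : ↥M) : lpsp (2 * s))) ((cM (repFn R₀ y) : ℝ))
  rw [sub_sub_sub_cancel_right] at hkey
  exact hkey

theorem step_exponent (hs : 1 ≤ s) (n : ℕ) {βq : ℝ} (hβq : 0 ≤ βq)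
    (hq : ∀ N : Set (lpsp s), N.Finite → N.ncard = n → ∀ Δ' : ℝ, 0 < Δ' →
      LipschitzDecomp N βq Δ')
    (M : Set (lpsp (2 * s))) (hfin : M.Finite) (hcard : M.ncard = n)
    (Δ : ℝ) (hΔ : 0 < Δ) : LipschitzDecomp M (16 * βq) Δ := by
  classical
  haveI : Finite ↥M := hfin.to_subtype
  obtain ⟨C, hC⟩ : ∃ C : ℝ, ∀ x y : ↥M, dist x y ≤ C := by
    obtain ⟨C, hC⟩ := Metric.isBounded_iff.1 hfin.isBounded
    exact ⟨C, fun x y => by rw [Subtype.dist_eq]; exact hC x.2 y.2⟩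
  refine lip_scale hC ?_ Δ hΔ
  intro Δ' hΔ' hprev
  obtain ⟨D₀, hdiam₀, hsep₀⟩ := hprev
  obtain ⟨cM, hcM⟩ := (countable_iff_exists_injective ↥M).1 inferInstance
  -- image sets
  have hNcard : ∀ R₀ : Setoid ↥M, (Set.range (psiMap hs cM R₀)).ncard = n := by
    intro R₀
    rw [← Set.image_univ, Set.ncard_image_of_injective _ (psiMap_inj hs hcM R₀),
      Set.ncard_univ, Nat.card_coe_set_eq]
    exact hcard
  have hInner := fun R₀ : Setoid ↥M => hq (Set.range (psiMap hs cM R₀))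
    (Set.finite_range _) (hNcard R₀) (Δ' ^ 2 / 2) (by positivity)
  choose E hEdiam hEsep using hInner
  -- embedding into the image set
  let toN : (R₀ : Setoid ↥M) → ↥M → ↥(Set.range (psiMap hs cM R₀)) := fun R₀ x =>
    ⟨psiMap hs cM R₀ x, Set.mem_range_self x⟩
  have htoN_dist : ∀ (R₀ : Setoid ↥M) (x y : ↥M),
      dist (toN R₀ x) (toN R₀ y) = dist (psiMap hs cM R₀ x) (psiMap hs cM R₀ y) := by
    intro R₀ x y
    rw [Subtype.dist_eq]
  -- combine
  have hdiam₁ : ∀ R₀ ∈ D₀.support,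
      ∀ S ∈ ((E R₀).map (fun S => Setoid.comap (toN R₀) S)).support,
      ∀ x y : ↥M, R₀.r x y → S.r x y → dist x y ≤ Δ' := by
    intro R₀ _ S hS x y hR₀xy hSxy
    rw [PMF.support_map] at hS
    obtain ⟨S', hS', rfl⟩ := hS
    have hrel : S'.r (toN R₀ x) (toN R₀ y) := hSxy
    have hd := hEdiam R₀ S' hS' (toN R₀ x) (toN R₀ y) hrel
    rw [htoN_dist] at hd
    have hlow := psiMap_low hs cM R₀ hR₀xy
    nlinarith [dist_nonneg (x := x) (y := y), hΔ']
  have hsep₁ : ∀ R₀ ∈ D₀.support, ∀ x y : ↥M, R₀.r x y →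
      ((E R₀).map (fun S => Setoid.comap (toN R₀) S)).toOuterMeasure
        {S : Setoid ↥M | ¬ S.r x y} ≤ ENNReal.ofReal (8 * βq / Δ' * dist x y) := by
    intro R₀ hsupp x y hR₀xy
    rw [PMF.toOuterMeasure_map_apply]
    have hpre : (fun S => Setoid.comap (toN R₀) S) ⁻¹' {S : Setoid ↥M | ¬ S.r x y} =
        {S' : Setoid ↥(Set.range (psiMap hs cM R₀)) | ¬ S'.r (toN R₀ x) (toN R₀ y)} := by
      ext S'
      exact Iff.rfl
    rw [hpre]
    refine (hEsep R₀ (toN R₀ x) (toN R₀ y)).trans (ENNReal.ofReal_le_ofReal ?_)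
    rw [htoN_dist]
    have hub := psiMap_up hs cM R₀ hR₀xy
    have hd1 : dist x (repFn R₀ x) ≤ 2 * Δ' := by
      rw [dist_comm]
      exact hdiam₀ R₀ hsupp (repFn R₀ x) x (repFn_rel R₀ x)
    have hd2 : dist y (repFn R₀ x) ≤ 2 * Δ' := by
      have h1 : R₀.r (repFn R₀ x) y := R₀.iseqv.trans (repFn_rel R₀ x) hR₀xy
      rw [dist_comm]
      exact hdiam₀ R₀ hsupp (repFn R₀ x) y h1
    have hDle : dist (psiMap hs cM R₀ x) (psiMap hs cM R₀ y) ≤ dist x y * (4 * Δ') := by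
      refine hub.trans ?_
      have := dist_nonneg (x := x) (y := y)
      nlinarith
    rw [div_le_iff₀ (by positivity : (0:ℝ) < Δ' ^ 2 / 2)]
    have hmul : 8 * βq / Δ' * dist x y * (Δ' ^ 2 / 2) = 4 * βq * dist x y * Δ' := by
      field_simp
      ring
    rw [hmul]
    have hψnn := dist_nonneg (x := psiMap hs cM R₀ x) (y := psiMap hs cM R₀ y)
    nlinarith [dist_nonneg (x := x) (y := y)]
  obtain ⟨D, hDdiam, hDsep⟩ := lip_combine (Δ' := Δ') (c₀ := 8 * βq / Δ') (c₁ := 8 * βq / Δ')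
    (by positivity) (by positivity) D₀
    (fun x y => (hsep₀ x y).trans (ENNReal.ofReal_le_ofReal (le_of_eq (by ring))))
    (fun R₀ => (E R₀).map (fun S => Setoid.comap (toN R₀) S))
    hdiam₁ hsep₁
  exact ⟨D, hDdiam, fun x y =>
    (hDsep x y).trans (ENNReal.ofReal_le_ofReal (le_of_eq (by ring)))⟩

end Step

end LipAux

namespace LipAux

def GoodE (e : ℝ≥0∞) (β : ℝ) (n : ℕ) : Prop :=
  ∀ (_inst : Fact (1 ≤ e)) (N : Set (lp (fun _ : ℕ => ℝ) e)), N.Finite → N.ncard = n →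
    ∀ Δ' : ℝ, 0 < Δ' →
      haveI := _inst
      LipschitzDecomp N β Δ'

theorem good_step {s βq : ℝ} (hs : 1 ≤ s) (hβq : 0 ≤ βq) (n : ℕ)
    (h : GoodE (ENNReal.ofReal s) βq n) : GoodE (ENNReal.ofReal (2 * s)) (16 * βq) n := by
  intro inst N hfin hcard Δ hΔ
  haveI := inst
  haveI : Fact (1 ≤ ENNReal.ofReal s) := ⟨ENNReal.one_le_ofReal.mpr hs⟩
  exact step_exponent hs n hβq
    (fun N' a b Δ'' c => h ⟨ENNReal.one_le_ofReal.mpr hs⟩ N' a b Δ'' c) N hfin hcard Δ hΔ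

theorem good_pow (n : ℕ) {β₂ : ℝ} (hβ₂ : 0 ≤ β₂) (h : GoodE (ENNReal.ofReal 2) β₂ n) :
    ∀ m : ℕ, 1 ≤ m → GoodE (ENNReal.ofReal ((2:ℝ) ^ m)) ((16:ℝ) ^ (m - 1) * β₂) n := by
  intro m hm
  induction m with
  | zero => omega
  | succ k ih =>
    rcases Nat.eq_or_lt_of_le hm with h1 | h1
    · -- k + 1 = 1
      have hk : k = 0 := by omega
      subst hk
      have he : (2:ℝ) ^ (1:ℕ) = 2 := pow_one 2
      rw [he]
      have hb : (16:ℝ) ^ ((1:ℕ) - 1) * β₂ = β₂ := by norm_num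
      rw [hb]
      exact h
    · have hk : 1 ≤ k := by omega
      have ihk := ih hk
      have hstep := good_step (s := (2:ℝ) ^ k) (one_le_pow₀ one_le_two)
        (by positivity) n ihk
      have he : (2:ℝ) * 2 ^ k = 2 ^ (k + 1) := by rw [pow_succ]; ring
      rw [he] at hstep
      have hb : (16:ℝ) * (16 ^ (k - 1) * β₂) = 16 ^ ((k + 1) - 1) * β₂ := by
        have h2 : (16:ℝ) ^ ((k + 1) - 1) = 16 * 16 ^ (k - 1) := by
          rw [Nat.add_sub_cancel]
          conv_lhs => rw [show k = (k - 1) + 1 by omega]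
          rw [pow_succ]
          ring
        rw [h2]
        ring
      rw [hb] at hstep
      exact hstep

end LipAux

/-- Let `p = 2^m` for an integer `m ≥ 1`, let `n ≥ 2`, and suppose every `n`-point subset of
`ℓ_2` admits a `(β₂, Δ')`-Lipschitz decomposition for every `Δ' > 0`. Then every `n`-point
subset of `ℓ_p` admits a `(2 * p^4 * β₂, Δ)`-Lipschitz decomposition for every `Δ > 0`. -/
theorem decomposition_power_of_two (m : ℕ) (hm : 1 ≤ m) (p : ℝ) (hp : p = 2 ^ m)
    [Fact (1 ≤ ENNReal.ofReal p)]
    (n : ℕ) (hn : 2 ≤ n) (β₂ : ℝ) (hβ₂ : 1 ≤ β₂)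
    (h₂ : ∀ (N : Set (lp (fun _ : ℕ => ℝ) 2)),
        N.Finite → N.ncard = n → ∀ Δ' : ℝ, 0 < Δ' → LipschitzDecomp N β₂ Δ')
    (M : Set (lp (fun _ : ℕ => ℝ) (ENNReal.ofReal p))) (hMfin : M.Finite)
    (hMcard : M.ncard = n)
    (Δ : ℝ) (hΔ : 0 < Δ) :
    LipschitzDecomp M (2 * p ^ 4 * β₂) Δ := by
  subst hp
  have hGBase : LipAux.GoodE (ENNReal.ofReal 2) β₂ n := by
    have he : ENNReal.ofReal (2:ℝ) = (2:ℝ≥0∞) := ENNReal.ofReal_ofNat 2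
    rw [he]
    exact fun _ N hf hc Δ' hΔ' => h₂ N hf hc Δ' hΔ'
  have hG := LipAux.good_pow n (by linarith) hGBase m hm
  have hfinal := hG ‹Fact (1 ≤ ENNReal.ofReal ((2:ℝ) ^ m))› M hMfin hMcard Δ hΔ
  refine LipAux.lip_mono ?_ hΔ hfinal
  have h1 : ((2:ℝ) ^ m) ^ 4 = 16 ^ m := by
    rw [← pow_mul, show (16:ℝ) = 2 ^ 4 by norm_num, ← pow_mul, Nat.mul_comm]
  rw [h1]
  have h2 : (16:ℝ) ^ m = 16 * 16 ^ (m - 1) := by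
    conv_lhs => rw [show m = (m - 1) + 1 by omega]
    rw [pow_succ]
    ring
  rw [h2]
  have h3 : (0:ℝ) < 16 ^ (m - 1) := by positivity
  nlinarith
end
end
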